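/- arXiv:1006.5266 — 6 statements merged into one kernel-verified Lean document; each statement's English description precedes it below -/
import Mathlib

section
/- Define a¹(m_0, m_1) for integers m_0, m_1 ≥ 0 by: a¹(w_1 m, m) = c_m·((k − w_1)·H_{km} − Σ_{i=2}^n w_i·H_{w_i m}) for m ≥ 1; a¹(m_0, m_1) = −w_1 · (m_0 + (k − w_1)m_1)! / (m_0! · ∏_{i=2}^n (w_i m_1)!) · 1/(m_0 − w_1 m_1) whenever m_0 ≠ w_1 m_1; and a¹(0,0) = 0. Then for each r ∈ {0, 1, 2} and all integers m_0, m_1 ≥ 0: P_r(m_0, m_1)·a¹(m_0, m_1) + (∂P_r/∂t)(m_0, m_1)·g(m_0, m_1) = Q_r(m_0 − u_r, m_1 − v_r)·a¹(m_0 − u_r, m_1 − v_r) + (∂Q_r/∂t)(m_0 − u_r, m_1 − v_r)·g(m_0 − u_r, m_1 − v_r), where g(m_0,m_1) = c_m if (m_0,m_1) = (w_1 m, m) and 0 otherwise. (Equivalently, g_1^{(1)} = log x_1 · g_0(x_0,x_1) + Σ a¹(m_0,m_1) x_0^{m_0} x_1^{m_1} is a logarithmic solution of the full extended Picard–Fuchs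 system 𝓛_0 S = 𝓛_1 S = 𝓛_1' S = 0.) -/
open MvPolynomial

lemma aux_pderiv_prod {ι : Type*} [DecidableEq ι] (s : Finset ι)
    (f : ι → MvPolynomial (Fin 2) ℚ) :
    pderiv 1 (∏ i ∈ s, f i) = ∑ i ∈ s, pderiv 1 (f i) * ∏ j ∈ s.erase i, f j := by
  induction s using Finset.induction with
  | empty => simp
  | insert a s h ih =>
    rw [Finset.prod_insert h, pderiv_mul, ih, Finset.sum_insert h, Finset.erase_insert h,
      Finset.mul_sum]
    congr 1
    refine Finset.sum_congr rfl fun b hb => ?_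
    rw [Finset.erase_insert_of_ne (by rintro rfl; exact h hb),
      Finset.prod_insert (by simp [Finset.mem_erase]; rintro _ h2; exact h h2)]
    ring

lemma aux_prod_Icc (N c : ℕ) :
    ∏ j ∈ Finset.Icc 1 c, ((N:ℚ) + j) = (N + c).factorial / N.factorial := by
  have hN : (N.factorial : ℚ) ≠ 0 := Nat.cast_ne_zero.2 (Nat.factorial_ne_zero _)
  induction c with
  | zero => simp [hN]
  | succ c ih =>
    rw [Finset.prod_Icc_succ_top (by omega), ih]
    have : (N + (c+1)).factorial = (N + c + 1) * (N + c).factorial := by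
      rw [show N + (c+1) = (N+c)+1 by ring, Nat.factorial_succ]
    rw [this]
    field_simp
    push_cast
    ring

lemma aux_prod_desc (N s : ℕ) (h : s ≤ N) :
    ∏ j ∈ Finset.range s, ((N:ℚ) - j) = N.factorial / (N - s).factorial := by
  induction s with
  | zero => simp [Nat.cast_ne_zero.2 (Nat.factorial_ne_zero N)]
  | succ s ih =>
    rw [Finset.prod_range_succ, ih (by omega)]
    have h2 : N - s = (N - (s+1)) + 1 := by omega
    have h4 : ((N:ℚ) - s) = ((N - (s+1) : ℕ) : ℚ) + 1 := by
      push_cast [Nat.cast_sub h]; ring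
    set M := N - (s+1) with hM
    rw [h2, Nat.factorial_succ, h4]
    have h3 : (M.factorial : ℚ) ≠ 0 := Nat.cast_ne_zero.2 (Nat.factorial_ne_zero _)
    have h5 : ((M:ℚ) + 1) ≠ 0 := by positivity
    field_simp
    push_cast
    ring

lemma aux_sum_recip (N s : ℕ) (h : s ≤ N) :
    ∑ j ∈ Finset.range s, ((N:ℚ) - j)⁻¹ =
      (∑ j ∈ Finset.range N, (1:ℚ)/(j+1)) - ∑ j ∈ Finset.range (N - s), (1:ℚ)/(j+1) := by
  induction s with
  | zero => simp
  | succ s ih =>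
    rw [Finset.sum_range_succ, ih (by omega)]
    have h2 : N - s = (N - (s+1)) + 1 := by omega
    have h4 : ((N:ℚ) - s) = ((N - (s+1) : ℕ) : ℚ) + 1 := by
      push_cast [Nat.cast_sub h]; ring
    rw [h2, Finset.sum_range_succ, h4]
    ring

lemma aux_erase_range (s : ℕ) : (Finset.range s).erase 0 = Finset.Ico 1 s := by
  rw [Finset.range_eq_Ico, Finset.Ico_erase_left, ← Finset.Ico_add_one_left_eq_Ioo, zero_add]

lemma eval_pderiv_prod {ι : Type*} [DecidableEq ι] (x : Fin 2 → ℚ) (s : Finset ι)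
    (f : ι → MvPolynomial (Fin 2) ℚ) :
    MvPolynomial.eval x (MvPolynomial.pderiv 1 (∏ i ∈ s, f i)) =
      ∑ i ∈ s, MvPolynomial.eval x (MvPolynomial.pderiv 1 (f i)) *
        ∏ j ∈ s.erase i, MvPolynomial.eval x (f j) := by
  rw [aux_pderiv_prod, map_sum]
  exact Finset.sum_congr rfl fun i _ => by rw [map_mul, map_prod]

lemma aux_sum_erase_zero {ι : Type*} [DecidableEq ι] (s : Finset ι) (F : ι → ℚ) (d : ℚ)
    (j0 : ι) (hj0 : j0 ∈ s) (hz : F j0 = 0) :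
    ∑ j ∈ s, d * ∏ l ∈ s.erase j, F l = d * ∏ l ∈ s.erase j0, F l := by
  rw [Finset.sum_eq_single j0]
  · intro b hb hne
    rw [Finset.prod_eq_zero (Finset.mem_erase.2 ⟨Ne.symm hne, hj0⟩) hz, mul_zero]
  · intro h; exact absurd hj0 h

lemma aux_sum_erase_nonzero {ι : Type*} [DecidableEq ι] (s : Finset ι) (F : ι → ℚ) (d : ℚ)
    (hnz : ∀ j ∈ s, F j ≠ 0) :
    ∑ j ∈ s, d * ∏ l ∈ s.erase j, F l = d * (∏ l ∈ s, F l) * ∑ j ∈ s, (F j)⁻¹ := by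
  rw [mul_assoc, Finset.mul_sum, Finset.mul_sum]
  refine Finset.sum_congr rfl fun j hj => ?_
  have h1 := Finset.prod_erase_mul s F hj
  have h2 := hnz j hj
  field_simp
  rw [← h1]
  ring

lemma aux_prod_neg {ι : Type*} (s : Finset ι) (f : ι → ℚ) :
    ∏ i ∈ s, (-f i) = (-1)^s.card * ∏ i ∈ s, f i := by
  rw [← Finset.prod_const, ← Finset.prod_mul_distrib]
  exact Finset.prod_congr rfl fun i _ => by ring

lemma aux_prod_Ico_id (s : ℕ) (hs : 1 ≤ s) :
    ∏ l ∈ Finset.Ico 1 s, (l:ℚ) = (s-1).factorial := by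
  obtain ⟨t, rfl⟩ : ∃ t, s = t + 1 := ⟨s - 1, by omega⟩
  rw [show t + 1 - 1 = t from rfl]
  rw [← Nat.cast_prod]
  exact_mod_cast congrArg (Nat.cast : ℕ → ℚ) (Finset.prod_Ico_id_eq_factorial t)

lemma aux_sum_recip_Icc (M s : ℕ) :
    ∑ j ∈ Finset.Icc 1 s, ((M:ℚ) + j)⁻¹ =
      (∑ j ∈ Finset.range (M + s), (1:ℚ)/(j+1)) - ∑ j ∈ Finset.range M, (1:ℚ)/(j+1) := by
  induction s with
  | zero => simp
  | succ s ih =>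
    rw [Finset.sum_Icc_succ_top (by omega), ih, show M + (s+1) = (M+s)+1 from rfl,
      Finset.sum_range_succ]
    push_cast
    ring

set_option maxHeartbeats 2000000 in
/-- The coefficient family `a¹` defined by
`a¹(w₁m, m) = c_m·((k-w₁)·H_{km} - Σ_{i=2}^n wᵢ·H_{wᵢm})` for `m ≥ 1`,
`a¹(m₀,m₁) = -w₁·(m₀+(k-w₁)m₁)!/(m₀!·∏_{i≥2}(wᵢm₁)!)·1/(m₀-w₁m₁)` for `m₀ ≠ w₁m₁`,
and `a¹(0,0) = 0`, satisfies the corrected Picard–Fuchs recursions; equivalently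
`g₁⁽¹⁾ = log x₁ · g₀ + Σ a¹(m₀,m₁) x₀^{m₀} x₁^{m₁}` is a logarithmic solution of the
full extended Picard–Fuchs system `𝓛₀ S = 𝓛₁ S = 𝓛₁' S = 0`. -/
theorem statement2
    (n : ℕ) (κ : Fin (n + 2) → ℕ) (hκ : ∀ i, 0 < κ i)
    (hsum : ∑ i, (1 : ℚ) / (κ i : ℚ) = 1)
    (k : ℕ) (hk : k = Finset.univ.lcm κ)
    (w : Fin (n + 2) → ℕ) (hw : ∀ i, w i = k / κ i)
    (c : ℕ → ℚ)
    (hc : ∀ m, c m = (Nat.factorial (k * m) : ℚ) /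
      ∏ i, (Nat.factorial (w i * m) : ℚ))
    (H : ℕ → ℚ) (hH : ∀ N, H N = ∑ j ∈ Finset.range N, (1 : ℚ) / (j + 1))
    (P Q : Fin 3 → MvPolynomial (Fin 2) ℚ)
    (hP0 : P 0 = X 0 * (X 0 - C (w 0 : ℚ) * X 1))
    (hQ0 : Q 0 = (1 + X 0 + C ((k : ℚ) - (w 0 : ℚ)) * X 1) *
      (X 0 - C (w 0 : ℚ) * X 1))
    (hP1 : P 1 = (∏ i ∈ Finset.univ.erase 0, ∏ j ∈ Finset.range (w i),
        (C (w i : ℚ) * X 1 - C (j : ℚ))) *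
      ∏ j ∈ Finset.range (w 0), (-X 0 + C (w 0 : ℚ) * X 1 - C (j : ℚ)))
    (hQ1 : Q 1 = (∏ j ∈ Finset.Icc 1 (k - w 0),
        (X 0 + C ((k : ℚ) - (w 0 : ℚ)) * X 1 + C (j : ℚ))) *
      ∏ j ∈ Finset.range (w 0), (-X 0 + C (w 0 : ℚ) * X 1 + C (j : ℚ)))
    (hP2 : P 2 = (∏ j ∈ Finset.range (w 0), (X 0 - C (j : ℚ))) *
      ∏ i ∈ Finset.univ.erase 0, ∏ j ∈ Finset.range (w i),
        (C (w i : ℚ) * X 1 - C (j : ℚ)))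
    (hQ2 : Q 2 = ∏ j ∈ Finset.Icc 1 k,
      (X 0 + C ((k : ℚ) - (w 0 : ℚ)) * X 1 + C (j : ℚ)))
    (u v : Fin 3 → ℕ) (hu : u = ![1, 0, w 0]) (hv : v = ![0, 1, 1])
    (g : ℤ → ℤ → ℚ)
    (hg : ∀ p q : ℤ, g p q =
      if 0 ≤ q ∧ p = (w 0 : ℤ) * q then c q.toNat else 0)
    (a : ℤ → ℤ → ℚ)
    (ha : ∀ p q : ℤ, a p q =
      if 0 ≤ p ∧ 0 ≤ q then
        (if p = (w 0 : ℤ) * q then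
          (if q = 0 then 0 else
            c q.toNat * (((k : ℚ) - (w 0 : ℚ)) * H (k * q.toNat) -
              ∑ i ∈ Finset.univ.erase 0, (w i : ℚ) * H (w i * q.toNat)))
        else
          (-(w 0 : ℚ)) *
            (Nat.factorial (p.toNat + (k - w 0) * q.toNat) : ℚ) /
            ((Nat.factorial p.toNat : ℚ) *
              ∏ i ∈ Finset.univ.erase 0, (Nat.factorial (w i * q.toNat) : ℚ)) *
            (1 / ((p : ℚ) - (w 0 : ℚ) * (q : ℚ))))
      else 0) :
    ∀ r : Fin 3, ∀ m0 m1 : ℕ,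
      MvPolynomial.eval ![(m0 : ℚ), (m1 : ℚ)] (P r) * a (m0 : ℤ) (m1 : ℤ) +
        MvPolynomial.eval ![(m0 : ℚ), (m1 : ℚ)] (pderiv 1 (P r)) *
          g (m0 : ℤ) (m1 : ℤ) =
      MvPolynomial.eval ![(m0 : ℚ) - (u r : ℚ), (m1 : ℚ) - (v r : ℚ)] (Q r) *
          a ((m0 : ℤ) - (u r : ℤ)) ((m1 : ℤ) - (v r : ℤ)) +
        MvPolynomial.eval ![(m0 : ℚ) - (u r : ℚ), (m1 : ℚ) - (v r : ℚ)]
            (pderiv 1 (Q r)) *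
          g ((m0 : ℤ) - (u r : ℤ)) ((m1 : ℤ) - (v r : ℤ)) := by
  classical
  -- basic facts
  have hkpos : 0 < k := by
    rw [hk]
    rcases Nat.eq_zero_or_pos (Finset.univ.lcm κ) with h | h
    · exfalso
      rw [Finset.lcm_eq_zero_iff] at h
      obtain ⟨i, _, hi⟩ := h
      have := hκ i; omega
    · exact h
  have hdvd : ∀ i, κ i ∣ k := fun i => hk ▸ Finset.dvd_lcm (Finset.mem_univ i)
  have hwκ : ∀ i, w i * κ i = k := by
    intro i; rw [hw i, Nat.div_mul_cancel (hdvd i)]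
  have hwpos : ∀ i, 0 < w i := by
    intro i
    rcases Nat.eq_zero_or_pos (w i) with h | h
    · exfalso; have := hwκ i; rw [h] at this; simp at this; omega
    · exact h
  have hwq : ∀ i, (w i : ℚ) = (k : ℚ) / (κ i : ℚ) := by
    intro i
    have : (w i : ℚ) * (κ i : ℚ) = k := by exact_mod_cast congrArg (Nat.cast : ℕ → ℚ) (hwκ i)
    field_simp [Nat.cast_ne_zero.2 (hκ i).ne'] at this ⊢
    linarith [this]
  have hsumw : ∑ i, w i = k := by
    have : ∑ i, (w i : ℚ) = (k : ℚ) := by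
      rw [Finset.sum_congr rfl fun i _ => hwq i]
      have : ∀ i : Fin (n+2), (k:ℚ)/(κ i:ℚ) = (k:ℚ) * (1/(κ i:ℚ)) := fun i => by ring
      rw [Finset.sum_congr rfl fun i _ => this i, ← Finset.mul_sum, hsum, mul_one]
    exact_mod_cast this
  -- sum over erase, and w 0 < k
  have hadd : w 0 + ∑ i ∈ Finset.univ.erase (0 : Fin (n+2)), w i = k := by
    rw [Finset.add_sum_erase _ _ (Finset.mem_univ 0)]; exact hsumw
  have hone : (⟨1, by omega⟩ : Fin (n+2)) ∈ Finset.univ.erase (0 : Fin (n+2)) := by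
    rw [Finset.mem_erase]
    exact ⟨by simp [Fin.ext_iff], Finset.mem_univ _⟩
  have hw0k : w 0 < k := by
    have h1 : 1 ≤ ∑ i ∈ Finset.univ.erase (0 : Fin (n+2)), w i :=
      le_trans (hwpos _) (Finset.single_le_sum (fun i _ => Nat.zero_le _) hone)
    omega
  have hWsum : ∑ i ∈ Finset.univ.erase (0 : Fin (n+2)), w i = k - w 0 := by omega
  have hkw : ((k - w 0 : ℕ) : ℚ) = (k:ℚ) - (w 0:ℚ) := by
    push_cast [Nat.cast_sub hw0k.le]; ring
  -- factorial nonzero facts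
  have hfac : ∀ N : ℕ, ((N.factorial : ℚ)) ≠ 0 := fun N => Nat.cast_ne_zero.2 (Nat.factorial_ne_zero N)
  have hprodfac : ∀ q : ℕ, (∏ i ∈ Finset.univ.erase (0:Fin (n+2)), ((w i * q).factorial : ℚ)) ≠ 0 :=
    fun q => Finset.prod_ne_zero_iff.2 fun i _ => hfac _
  have huniv : ∀ q : ℕ, (∏ i, ((w i * q).factorial : ℚ)) =
      ((w 0 * q).factorial : ℚ) * ∏ i ∈ Finset.univ.erase (0:Fin (n+2)), ((w i * q).factorial : ℚ) :=
    fun q => (Finset.mul_prod_erase Finset.univ _ (Finset.mem_univ 0)).symm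
  -- g and a evaluation lemmas
  have hg' : ∀ p q : ℕ, g p q = if p = w 0 * q then c q else 0 := by
    intro p q; rw [hg]
    by_cases h : p = w 0 * q
    · rw [if_pos ⟨Int.natCast_nonneg q, by exact_mod_cast congrArg (Nat.cast : ℕ → ℤ) h⟩,
        Int.toNat_natCast, if_pos h]
    · rw [if_neg, if_neg h]; rintro ⟨-, h2⟩; exact h (by exact_mod_cast h2)
  have hgneg : ∀ (p q : ℤ), (p < 0 ∨ q < 0) → g p q = 0 := by
    intro p q hpq; rw [hg, if_neg]; rintro ⟨hq, rfl⟩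
    rcases hpq with h | h
    · exact absurd (mul_nonneg (Int.natCast_nonneg _) hq) (not_le.2 h)
    · omega
  have haneg : ∀ (p q : ℤ), (p < 0 ∨ q < 0) → a p q = 0 := by
    intro p q hpq; rw [ha, if_neg]; rintro ⟨h1, h2⟩; omega
  have ha_off : ∀ p q : ℕ, p ≠ w 0 * q →
      a p q = -(w 0:ℚ) * ((p + (k - w 0)*q).factorial : ℚ) /
        ((p.factorial : ℚ) * ∏ i ∈ Finset.univ.erase (0:Fin (n+2)), ((w i * q).factorial : ℚ)) *
        (1/((p:ℚ) - (w 0:ℚ)*(q:ℚ))) := by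
    intro p q hne
    rw [ha, if_pos ⟨Int.natCast_nonneg p, Int.natCast_nonneg q⟩,
      if_neg (fun h => hne (by exact_mod_cast h))]
    push_cast [Int.toNat_natCast]
    ring
  have ha_diag : ∀ q : ℕ, a ((w 0 * q : ℕ)) q =
      c q * (((k:ℚ)-(w 0:ℚ)) * H (k*q) -
        ∑ i ∈ Finset.univ.erase (0:Fin (n+2)), (w i:ℚ) * H (w i * q)) := by
    intro q
    rw [ha, if_pos ⟨Int.natCast_nonneg _, Int.natCast_nonneg q⟩,
      if_pos (by exact_mod_cast rfl)]
    rcases Nat.eq_zero_or_pos q with rfl | hq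
    · rw [if_pos (by norm_num)]
      simp [hH]
    · rw [if_neg (by exact_mod_cast hq.ne'), Int.toNat_natCast]
  have hg_diag : ∀ q : ℕ, g ((w 0 * q : ℕ)) q = c q := by
    intro q; rw [hg' (w 0 * q) q, if_pos rfl]
  have hktq : ∀ t : ℕ, w 0 * t + (k - w 0) * t = k * t := fun t => by
    rw [← Nat.add_mul, Nat.add_sub_cancel' hw0k.le]
  intro r m0 m1
  fin_cases r <;> simp only [Fin.zero_eta, Fin.mk_one, Fin.reduceFinMk, Fin.isValue]
  · -- r = 0 case
    have hu0 : u 0 = 1 := by rw [hu]; rfl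
    have hv0 : v 0 = 0 := by rw [hv]; rfl
    simp only [hu0, hv0, Fin.isValue, Nat.cast_one, Nat.cast_zero, Int.ofNat_zero, sub_zero,
      Nat.cast_ofNat]
    have e1 : eval ![(m0:ℚ),(m1:ℚ)] (P 0) = (m0:ℚ) * ((m0:ℚ) - (w 0:ℚ) * m1) := by
      simp [hP0]
    have e2 : eval ![(m0:ℚ),(m1:ℚ)] (pderiv 1 (P 0)) = (m0:ℚ) * (-(w 0:ℚ)) := by
      simp [hP0, pderiv_mul]
    have e3 : eval ![(m0:ℚ)-1,(m1:ℚ)] (Q 0) =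
        (1 + ((m0:ℚ)-1) + ((k:ℚ)-(w 0:ℚ))*m1) * (((m0:ℚ)-1) - (w 0:ℚ)*m1) := by
      simp [hQ0]
    have e4 : eval ![(m0:ℚ)-1,(m1:ℚ)] (pderiv 1 (Q 0)) =
        ((k:ℚ)-(w 0:ℚ)) * (((m0:ℚ)-1) - (w 0:ℚ)*m1) +
          (1 + ((m0:ℚ)-1) + ((k:ℚ)-(w 0:ℚ))*m1) * (-(w 0:ℚ)) := by
      simp [hQ0, pderiv_mul]; ring
    rw [e1, e2, e3, e4]
    rcases Nat.eq_zero_or_pos m0 with rfl | hm0pos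
    · have h1 : a (((0:ℕ):ℤ) - 1) (m1:ℤ) = 0 := haneg _ _ (Or.inl (by omega))
      have h2 : g (((0:ℕ):ℤ) - 1) (m1:ℤ) = 0 := hgneg _ _ (Or.inl (by omega))
      rw [h1, h2]
      norm_num
    obtain ⟨p, rfl⟩ : ∃ p, m0 = p + 1 := ⟨m0 - 1, by omega⟩
    rw [show ((p+1:ℕ):ℤ) - 1 = (p:ℤ) by push_cast; ring]
    have hcast : ((k:ℚ) - (w 0:ℚ)) * (m1:ℚ) = (((k - w 0)*m1 : ℕ):ℚ) := by
      push_cast [Nat.cast_sub hw0k.le]; ring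
    have hsplitk : (k - w 0)*m1 + w 0 * m1 = k * m1 := by
      rw [← Nat.add_mul, Nat.sub_add_cancel hw0k.le]
    by_cases hd : p + 1 = w 0 * m1
    · -- left diagonal
      have hdq : ((w 0:ℚ)) * (m1:ℚ) = ((p+1:ℕ):ℚ) := by exact_mod_cast (congrArg (Nat.cast : ℕ → ℚ) hd).symm
      have hgv : g (((p+1:ℕ)):ℤ) (m1:ℤ) = c m1 := by
        rw [show (((p+1:ℕ)):ℤ) = ((w 0 * m1 : ℕ):ℤ) from by exact_mod_cast congrArg (Nat.cast : ℕ → ℤ) hd,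
          hg_diag]
      have hgv2 : g (p:ℤ) (m1:ℤ) = 0 := by
        rw [hg' p m1, if_neg (fun h => by rw [← h] at hd; omega)]
      have hav : a (p:ℤ) (m1:ℤ) = -(w 0:ℚ) * ((p + (k - w 0)*m1).factorial : ℚ) /
          ((p.factorial : ℚ) * ∏ i ∈ Finset.univ.erase (0:Fin (n+2)), ((w i * m1).factorial : ℚ)) *
          (1/((p:ℚ) - (w 0:ℚ)*(m1:ℚ))) := ha_off p m1 (fun h => by rw [← h] at hd; omega)
      have h5 : ((p:ℕ):ℚ) - (w 0:ℚ)*(m1:ℚ) = -1 := by rw [hdq]; push_cast; ring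
      have h6 : (((p+1:ℕ)):ℚ) - (w 0:ℚ)*(m1:ℚ) = 0 := by rw [hdq]; ring
      have h7 : (((p+1:ℕ)):ℚ) - 1 - (w 0:ℚ)*(m1:ℚ) = -1 := by rw [hdq]; ring
      have hN : k * m1 = (p + (k - w 0) * m1) + 1 := by rw [← hsplitk, ← hd]; ring
      have hfN : ((k*m1).factorial : ℚ) = (((p + (k - w 0)*m1 : ℕ):ℚ) + 1) * ((p + (k - w 0)*m1).factorial : ℚ) := by
        rw [hN, Nat.factorial_succ]; push_cast; ring
      have hwm : ((w 0 * m1).factorial : ℚ) = (((p+1:ℕ)):ℚ) * (p.factorial : ℚ) := by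
        rw [← hd, Nat.factorial_succ]; push_cast; ring
      rw [hgv, hgv2, hav, hc m1, huniv m1, hfN, hwm, h5, h6, h7, hcast]
      have hprod := hprodfac m1
      have hf1 := hfac p
      field_simp
      push_cast
      ring
    by_cases he : p = w 0 * m1
    · -- right diagonal
      have heq : ((w 0:ℚ)) * (m1:ℚ) = ((p:ℕ):ℚ) := by exact_mod_cast (congrArg (Nat.cast : ℕ → ℚ) he).symm
      have hgv : g (((p+1:ℕ)):ℤ) (m1:ℤ) = 0 := by rw [hg' (p+1) m1, if_neg hd]
      have hgv2 : g (p:ℤ) (m1:ℤ) = c m1 := by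
        rw [show ((p:ℕ):ℤ) = ((w 0 * m1 : ℕ):ℤ) from by exact_mod_cast congrArg (Nat.cast : ℕ → ℤ) he,
          hg_diag]
      have hav : a (((p+1:ℕ)):ℤ) (m1:ℤ) = -(w 0:ℚ) * (((p+1) + (k - w 0)*m1).factorial : ℚ) /
          (((p+1).factorial : ℚ) * ∏ i ∈ Finset.univ.erase (0:Fin (n+2)), ((w i * m1).factorial : ℚ)) *
          (1/((((p+1):ℕ):ℚ) - (w 0:ℚ)*(m1:ℚ))) := ha_off (p+1) m1 hd
      have hadg : a (p:ℤ) (m1:ℤ) = c m1 * (((k:ℚ)-(w 0:ℚ)) * H (k*m1) -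
          ∑ i ∈ Finset.univ.erase (0:Fin (n+2)), (w i:ℚ) * H (w i * m1)) := by
        rw [show ((p:ℕ):ℤ) = ((w 0 * m1 : ℕ):ℤ) from by exact_mod_cast congrArg (Nat.cast : ℕ → ℤ) he,
          ha_diag]
      have h5 : ((((p+1):ℕ)):ℚ) - (w 0:ℚ)*(m1:ℚ) = 1 := by rw [heq]; push_cast; ring
      have h6 : ((((p+1):ℕ)):ℚ) - 1 - (w 0:ℚ)*(m1:ℚ) = 0 := by rw [heq]; push_cast; ring
      have hN : (p+1) + (k - w 0) * m1 = (k * m1) + 1 := by rw [← hsplitk, ← he]; ring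
      have hfN : (((p+1) + (k - w 0)*m1).factorial : ℚ) = (((k*m1 : ℕ):ℚ) + 1) * ((k*m1).factorial : ℚ) := by
        rw [hN, Nat.factorial_succ]; push_cast; ring
      have hwm : ((w 0 * m1).factorial : ℚ) = (p.factorial : ℚ) := by rw [← he]
      have hfp : (((p+1)).factorial : ℚ) = (((p:ℕ):ℚ) + 1) * (p.factorial : ℚ) := by
        rw [Nat.factorial_succ]; push_cast; ring
      have hkmq : ((k:ℚ) - (w 0:ℚ)) * (m1:ℚ) = ((k*m1 : ℕ):ℚ) - ((p:ℕ):ℚ) := by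
        rw [hcast]
        have : (k - w 0) * m1 + p = k * m1 := by rw [← hsplitk, ← he]
        push_cast [← this]; ring
      rw [hgv, hgv2, hadg, hav, hc m1, huniv m1, hfN, hwm, hfp, h5, h6, hkmq]
      have hprod := hprodfac m1
      have hf1 := hfac p
      have hf2 := hfac (k*m1)
      field_simp
      push_cast
      ring
    · -- off-diagonal both sides
      have hgv : g (((p+1:ℕ)):ℤ) (m1:ℤ) = 0 := by rw [hg' (p+1) m1, if_neg hd]
      have hgv2 : g (p:ℤ) (m1:ℤ) = 0 := by rw [hg' p m1, if_neg he]
      have hav : a (((p+1:ℕ)):ℤ) (m1:ℤ) = -(w 0:ℚ) * (((p+1) + (k - w 0)*m1).factorial : ℚ) /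
          (((p+1).factorial : ℚ) * ∏ i ∈ Finset.univ.erase (0:Fin (n+2)), ((w i * m1).factorial : ℚ)) *
          (1/((((p+1):ℕ):ℚ) - (w 0:ℚ)*(m1:ℚ))) := ha_off (p+1) m1 hd
      have hav2 : a (p:ℤ) (m1:ℤ) = -(w 0:ℚ) * ((p + (k - w 0)*m1).factorial : ℚ) /
          ((p.factorial : ℚ) * ∏ i ∈ Finset.univ.erase (0:Fin (n+2)), ((w i * m1).factorial : ℚ)) *
          (1/((p:ℚ) - (w 0:ℚ)*(m1:ℚ))) := ha_off p m1 he
      have hfN : (((p+1) + (k - w 0)*m1).factorial : ℚ) =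
          (((p + (k - w 0)*m1 : ℕ):ℚ) + 1) * ((p + (k - w 0)*m1).factorial : ℚ) := by
        rw [show (p+1) + (k - w 0)*m1 = (p + (k - w 0)*m1) + 1 from by ring, Nat.factorial_succ]
        push_cast; ring
      have hfp : (((p+1)).factorial : ℚ) = (((p:ℕ):ℚ) + 1) * (p.factorial : ℚ) := by
        rw [Nat.factorial_succ]; push_cast; ring
      have hne1 : ((((p+1):ℕ)):ℚ) - (w 0:ℚ)*(m1:ℚ) ≠ 0 := by
        intro h
        apply hd
        have : ((p+1 : ℕ):ℚ) = ((w 0 * m1 : ℕ):ℚ) := by push_cast; push_cast at h; linarith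
        exact_mod_cast this
      have hne2 : ((p:ℕ):ℚ) - (w 0:ℚ)*(m1:ℚ) ≠ 0 := by
        intro h
        apply he
        have : ((p : ℕ):ℚ) = ((w 0 * m1 : ℕ):ℚ) := by push_cast; push_cast at h; linarith
        exact_mod_cast this
      rw [hgv, hgv2, hav, hav2, hfN, hfp, hcast]
      have hprod := hprodfac m1
      have hf1 := hfac p
      have hf2 := hfac (p + (k - w 0)*m1)
      have hne1' : ((((p+1):ℕ)):ℚ) - (w 0:ℚ)*(m1:ℚ) ≠ 0 := hne1
      push_cast at hne1 hne2 ⊢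
      field_simp
      ring
  · -- r = 1
    have hu1 : u 1 = 0 := by rw [hu]; rfl
    have hv1 : v 1 = 1 := by rw [hv]; rfl
    simp only [hu1, hv1, Nat.cast_zero, Nat.cast_one, Int.ofNat_zero, sub_zero, Nat.cast_ofNat]
    rw [hP1, hQ1]
    have hpdB : ∀ j:ℕ, pderiv 1 ((-X 0 + C ((w 0:ℕ):ℚ) * X 1 - C (j:ℚ) : MvPolynomial (Fin 2) ℚ))
        = C ((w 0:ℕ):ℚ) := by
      intro j; simp
    have hpdD : ∀ j:ℕ, pderiv 1 ((-X 0 + C ((w 0:ℕ):ℚ) * X 1 + C (j:ℚ) : MvPolynomial (Fin 2) ℚ))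
        = C ((w 0:ℕ):ℚ) := by
      intro j; simp
    rcases Nat.eq_zero_or_pos m1 with rfl | hm1pos
    · -- m1 = 0
      have hA0 : eval ![(m0:ℚ), ((0:ℕ):ℚ)] (∏ i ∈ Finset.univ.erase (0:Fin (n+2)),
          ∏ j ∈ Finset.range (w i), (C (w i:ℚ) * X 1 - C (j:ℚ))) = 0 := by
        rw [map_prod]
        refine Finset.prod_eq_zero hone ?_
        rw [map_prod]
        refine Finset.prod_eq_zero (Finset.mem_range.2 (hwpos _)) ?_
        simp only [map_neg, map_add, map_sub, map_mul, map_one, eval_C, eval_X, Matrix.cons_val_zero, Matrix.cons_val_one, Matrix.head_cons]; push_cast; ring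
      have hzint : ((0:ℕ):ℤ) - 1 = -1 := by norm_num
      rw [hzint, haneg (m0:ℤ) (-1) (Or.inr (by norm_num)), hgneg (m0:ℤ) (-1) (Or.inr (by norm_num)),
        map_mul, hA0]
      rcases Nat.eq_zero_or_pos m0 with rfl | hm0pos
      · have hB0 : eval ![((0:ℕ):ℚ), ((0:ℕ):ℚ)] (∏ j ∈ Finset.range (w 0),
            (-X 0 + C ((w 0:ℕ):ℚ) * X 1 - C (j:ℚ))) = 0 := by
          rw [map_prod]
          refine Finset.prod_eq_zero (Finset.mem_range.2 (hwpos 0)) ?_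
          simp only [map_neg, map_add, map_sub, map_mul, map_one, eval_C, eval_X, Matrix.cons_val_zero, Matrix.cons_val_one, Matrix.head_cons]; push_cast; ring
        rw [pderiv_mul, map_add, map_mul, map_mul, hA0, hB0]
        ring
      · have hgz : g (m0:ℤ) ((0:ℕ):ℤ) = 0 := by
          rw [hg' m0 0, if_neg (by rw [Nat.mul_zero]; omega)]
        rw [hgz]
        ring
    obtain ⟨q, rfl⟩ : ∃ q, m1 = q + 1 := ⟨m1 - 1, by omega⟩
    rw [show ((q+1:ℕ):ℤ) - 1 = (q:ℤ) from by push_cast; ring,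
      show ((q+1:ℕ):ℚ) - 1 = (q:ℚ) from by push_cast; ring]
    have hsub : ∀ i : Fin (n+2), w i * (q+1) - w i = w i * q := fun i => by
      rw [Nat.mul_succ, Nat.add_sub_cancel]
    have hAev : eval ![(m0:ℚ), ((q+1:ℕ):ℚ)] (∏ i ∈ Finset.univ.erase (0:Fin (n+2)),
        ∏ j ∈ Finset.range (w i), (C (w i:ℚ) * X 1 - C (j:ℚ)))
        = (∏ i ∈ Finset.univ.erase (0:Fin (n+2)), ((w i * (q+1)).factorial : ℚ)) /
          (∏ i ∈ Finset.univ.erase (0:Fin (n+2)), ((w i * q).factorial : ℚ)) := by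
      rw [map_prod, ← Finset.prod_div_distrib]
      refine Finset.prod_congr rfl fun i hi => ?_
      rw [map_prod]
      have h1 : ∀ j ∈ Finset.range (w i), eval ![(m0:ℚ), ((q+1:ℕ):ℚ)] (C (w i:ℚ) * X 1 - C (j:ℚ))
          = ((w i * (q+1) : ℕ):ℚ) - (j:ℚ) := by
        intro j hj; simp only [map_neg, map_add, map_sub, map_mul, map_one, eval_C, eval_X, Matrix.cons_val_zero, Matrix.cons_val_one, Matrix.head_cons]; push_cast; ring
      rw [Finset.prod_congr rfl h1,
        aux_prod_desc _ _ (Nat.le_mul_of_pos_right (w i) (Nat.succ_pos q)), hsub i]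
    have hCev : eval ![(m0:ℚ), (q:ℚ)] (∏ j ∈ Finset.Icc 1 (k - w 0),
        (X 0 + C ((k:ℚ) - (w 0:ℚ)) * X 1 + C (j:ℚ)))
        = ((m0 + (k - w 0)*q + (k - w 0)).factorial : ℚ) / ((m0 + (k - w 0)*q).factorial : ℚ) := by
      rw [map_prod]
      have h1 : ∀ j ∈ Finset.Icc 1 (k - w 0), eval ![(m0:ℚ), (q:ℚ)]
          (X 0 + C ((k:ℚ) - (w 0:ℚ)) * X 1 + C (j:ℚ)) = ((m0 + (k - w 0)*q : ℕ):ℚ) + (j:ℚ) := by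
        intro j hj; simp only [map_neg, map_add, map_sub, map_mul, map_one, eval_C, eval_X, Matrix.cons_val_zero, Matrix.cons_val_one, Matrix.head_cons]; push_cast [Nat.cast_sub hw0k.le]; ring
      rw [Finset.prod_congr rfl h1]
      exact aux_prod_Icc _ _
    have hsgn : ((-1:ℚ))^(w 0) = -((-1:ℚ))^(w 0 - 1) := by
      obtain ⟨t, ht⟩ : ∃ t, w 0 = t + 1 := ⟨w 0 - 1, by have := hwpos 0; omega⟩
      rw [ht, Nat.add_sub_cancel, pow_succ]; ring
    have hwfac : ((w 0).factorial : ℚ) = ((w 0:ℕ):ℚ) * (((w 0 - 1).factorial:ℕ):ℚ) := by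
      obtain ⟨t, ht⟩ : ∃ t, w 0 = t + 1 := ⟨w 0 - 1, by have := hwpos 0; omega⟩
      rw [ht, Nat.add_sub_cancel, Nat.factorial_succ]; push_cast; ring
    by_cases hd : m0 = w 0 * (q + 1)
    · -- left diagonal
      have hdq : (m0:ℚ) = (w 0:ℚ) * (q:ℚ) + (w 0:ℚ) := by push_cast [hd]; ring
      have hBz : eval ![(m0:ℚ), ((q+1:ℕ):ℚ)] (∏ j ∈ Finset.range (w 0),
          (-X 0 + C ((w 0:ℕ):ℚ) * X 1 - C (j:ℚ))) = 0 := by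
        rw [map_prod]
        refine Finset.prod_eq_zero (Finset.mem_range.2 (hwpos 0)) ?_
        simp only [map_neg, map_add, map_sub, map_mul, map_one, eval_C, eval_X, Matrix.cons_val_zero, Matrix.cons_val_one, Matrix.head_cons]; push_cast; linarith [hdq]
      have hgl : g (m0:ℤ) ((q+1:ℕ):ℤ) = c (q+1) := by
        rw [show (m0:ℤ) = ((w 0 * (q+1) : ℕ):ℤ) from by exact_mod_cast congrArg (Nat.cast : ℕ → ℤ) hd,
          hg_diag]
      have hne : m0 ≠ w 0 * q := by
        intro h
        have hw0 := hwpos 0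
        rw [Nat.mul_succ, ← h] at hd
        omega
      have hgr : g (m0:ℤ) (q:ℤ) = 0 := by rw [hg' m0 q, if_neg hne]
      have har := ha_off m0 q hne
      have hdB : eval ![(m0:ℚ), ((q+1:ℕ):ℚ)] (pderiv 1 (∏ j ∈ Finset.range (w 0),
          (-X 0 + C ((w 0:ℕ):ℚ) * X 1 - C (j:ℚ))))
          = ((w 0:ℕ):ℚ) * ((-1:ℚ)^(w 0 - 1) * (((w 0 - 1).factorial:ℕ):ℚ)) := by
        rw [eval_pderiv_prod]
        have h1 : ∀ j ∈ Finset.range (w 0),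
            eval ![(m0:ℚ), ((q+1:ℕ):ℚ)] (pderiv 1 (-X 0 + C ((w 0:ℕ):ℚ) * X 1 - C (j:ℚ))) *
              ∏ l ∈ (Finset.range (w 0)).erase j,
                eval ![(m0:ℚ), ((q+1:ℕ):ℚ)] (-X 0 + C ((w 0:ℕ):ℚ) * X 1 - C (l:ℚ))
            = ((w 0:ℕ):ℚ) * ∏ l ∈ (Finset.range (w 0)).erase j, (-(l:ℚ)) := by
          intro j hj
          rw [hpdB j, eval_C]
          congr 1
          refine Finset.prod_congr rfl fun l hl => ?_
          simp only [map_neg, map_add, map_sub, map_mul, map_one, eval_C, eval_X, Matrix.cons_val_zero, Matrix.cons_val_one, Matrix.head_cons]; push_cast; linarith [hdq]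
        rw [Finset.sum_congr rfl h1,
          aux_sum_erase_zero _ _ _ 0 (Finset.mem_range.2 (hwpos 0)) (by norm_num),
          aux_erase_range, aux_prod_neg, Nat.card_Ico, aux_prod_Ico_id _ (hwpos 0)]
      have hDev : eval ![(m0:ℚ), (q:ℚ)] (∏ j ∈ Finset.range (w 0),
          (-X 0 + C ((w 0:ℕ):ℚ) * X 1 + C (j:ℚ))) = (-1:ℚ)^(w 0) * ((w 0).factorial : ℚ) := by
        rw [map_prod]
        have h1 : ∀ j ∈ Finset.range (w 0), eval ![(m0:ℚ), (q:ℚ)]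
            (-X 0 + C ((w 0:ℕ):ℚ) * X 1 + C (j:ℚ)) = -(((w 0 : ℕ):ℚ) - (j:ℚ)) := by
          intro j hj; simp only [map_neg, map_add, map_sub, map_mul, map_one, eval_C, eval_X, Matrix.cons_val_zero, Matrix.cons_val_one, Matrix.head_cons]; push_cast; linarith [hdq]
        rw [Finset.prod_congr rfl h1, aux_prod_neg, Finset.card_range,
          aux_prod_desc (w 0) (w 0) le_rfl, Nat.sub_self, Nat.factorial_zero]
        norm_num
      have hNN : m0 + (k - w 0)*q + (k - w 0) = k * (q + 1) := by
        have h1 := hktq (q+1)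
        rw [hd, Nat.mul_succ (w 0), Nat.mul_succ (k - w 0)] at *
        omega
      have hden : (m0:ℚ) - (w 0:ℚ)*(q:ℚ) = ((w 0:ℕ):ℚ) := by
        push_cast; linarith [hdq]
      have hPv : eval ![(m0:ℚ), ((q+1:ℕ):ℚ)]
          ((∏ i ∈ Finset.univ.erase (0:Fin (n+2)), ∏ j ∈ Finset.range (w i),
            (C (w i:ℚ) * X 1 - C (j:ℚ))) *
           ∏ j ∈ Finset.range (w 0), (-X 0 + C ((w 0:ℕ):ℚ) * X 1 - C (j:ℚ))) = 0 := by
        rw [map_mul, hBz, mul_zero]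
      have hPd : eval ![(m0:ℚ), ((q+1:ℕ):ℚ)] (pderiv 1
          ((∏ i ∈ Finset.univ.erase (0:Fin (n+2)), ∏ j ∈ Finset.range (w i),
            (C (w i:ℚ) * X 1 - C (j:ℚ))) *
           ∏ j ∈ Finset.range (w 0), (-X 0 + C ((w 0:ℕ):ℚ) * X 1 - C (j:ℚ))))
          = ((∏ i ∈ Finset.univ.erase (0:Fin (n+2)), ((w i * (q+1)).factorial : ℚ)) /
             (∏ i ∈ Finset.univ.erase (0:Fin (n+2)), ((w i * q).factorial : ℚ))) *
            (((w 0:ℕ):ℚ) * ((-1:ℚ)^(w 0 - 1) * (((w 0 - 1).factorial:ℕ):ℚ))) := by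
        rw [pderiv_mul, map_add, map_mul, map_mul, hBz, hAev, hdB]
        ring
      have hQv : eval ![(m0:ℚ), (q:ℚ)]
          ((∏ j ∈ Finset.Icc 1 (k - w 0), (X 0 + C ((k:ℚ) - (w 0:ℚ)) * X 1 + C (j:ℚ))) *
           ∏ j ∈ Finset.range (w 0), (-X 0 + C ((w 0:ℕ):ℚ) * X 1 + C (j:ℚ)))
          = (((m0 + (k - w 0)*q + (k - w 0)).factorial : ℚ) / ((m0 + (k - w 0)*q).factorial : ℚ)) *
            ((-1:ℚ)^(w 0) * ((w 0).factorial : ℚ)) := by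
        rw [map_mul, hCev, hDev]
      rw [hPv, hPd, hQv, hgl, hgr, har, hc (q+1), huniv (q+1), hden, ← hd, hNN]
      have hfq := hfac (m0 + (k - w 0) * q)
      have hfk := hfac (k * (q+1))
      have hfm := hfac m0
      have hp1 := hprodfac q
      have hp2 := hprodfac (q+1)
      have hw0 : ((w 0:ℕ):ℚ) ≠ 0 := Nat.cast_ne_zero.2 (hwpos 0).ne'
      rw [hsgn, hwfac]
      field_simp
      ring
    by_cases he : m0 = w 0 * q
    · -- right diagonal
      have heq : (m0:ℚ) = (w 0:ℚ) * (q:ℚ) := by push_cast [he]; ring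
      have hgl : g (m0:ℤ) ((q+1:ℕ):ℤ) = 0 := by rw [hg' m0 (q+1), if_neg hd]
      have hal := ha_off m0 (q+1) hd
      have hgr : g (m0:ℤ) (q:ℤ) = c q := by
        rw [show (m0:ℤ) = ((w 0 * q : ℕ):ℤ) from by exact_mod_cast congrArg (Nat.cast : ℕ → ℤ) he,
          hg_diag]
      have hBev : eval ![(m0:ℚ), ((q+1:ℕ):ℚ)] (∏ j ∈ Finset.range (w 0),
          (-X 0 + C ((w 0:ℕ):ℚ) * X 1 - C (j:ℚ))) = ((w 0).factorial : ℚ) := by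
        rw [map_prod]
        have h1 : ∀ j ∈ Finset.range (w 0), eval ![(m0:ℚ), ((q+1:ℕ):ℚ)]
            (-X 0 + C ((w 0:ℕ):ℚ) * X 1 - C (j:ℚ)) = ((w 0 : ℕ):ℚ) - (j:ℚ) := by
          intro j hj; simp only [map_neg, map_add, map_sub, map_mul, map_one, eval_C, eval_X, Matrix.cons_val_zero, Matrix.cons_val_one, Matrix.head_cons]; push_cast; linarith [heq]
        rw [Finset.prod_congr rfl h1, aux_prod_desc (w 0) (w 0) le_rfl, Nat.sub_self,
          Nat.factorial_zero]
        norm_num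
      have hDz : eval ![(m0:ℚ), (q:ℚ)] (∏ j ∈ Finset.range (w 0),
          (-X 0 + C ((w 0:ℕ):ℚ) * X 1 + C (j:ℚ))) = 0 := by
        rw [map_prod]
        refine Finset.prod_eq_zero (Finset.mem_range.2 (hwpos 0)) ?_
        simp only [map_neg, map_add, map_sub, map_mul, map_one, eval_C, eval_X, Matrix.cons_val_zero, Matrix.cons_val_one, Matrix.head_cons]; push_cast; linarith [heq]
      have hdD : eval ![(m0:ℚ), (q:ℚ)] (pderiv 1 (∏ j ∈ Finset.range (w 0),
          (-X 0 + C ((w 0:ℕ):ℚ) * X 1 + C (j:ℚ))))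
          = ((w 0:ℕ):ℚ) * (((w 0 - 1).factorial:ℕ):ℚ) := by
        rw [eval_pderiv_prod]
        have h1 : ∀ j ∈ Finset.range (w 0),
            eval ![(m0:ℚ), (q:ℚ)] (pderiv 1 (-X 0 + C ((w 0:ℕ):ℚ) * X 1 + C (j:ℚ))) *
              ∏ l ∈ (Finset.range (w 0)).erase j,
                eval ![(m0:ℚ), (q:ℚ)] (-X 0 + C ((w 0:ℕ):ℚ) * X 1 + C (l:ℚ))
            = ((w 0:ℕ):ℚ) * ∏ l ∈ (Finset.range (w 0)).erase j, ((l:ℚ)) := by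
          intro j hj
          rw [hpdD j, eval_C]
          congr 1
          refine Finset.prod_congr rfl fun l hl => ?_
          simp only [map_neg, map_add, map_sub, map_mul, map_one, eval_C, eval_X, Matrix.cons_val_zero, Matrix.cons_val_one, Matrix.head_cons]; push_cast; linarith [heq]
        rw [Finset.sum_congr rfl h1,
          aux_sum_erase_zero _ _ _ 0 (Finset.mem_range.2 (hwpos 0)) (by norm_num),
          aux_erase_range, aux_prod_Ico_id _ (hwpos 0)]
      have hNN : m0 + (k - w 0)*(q+1) = (m0 + (k - w 0)*q) + (k - w 0) := by
        rw [Nat.mul_succ]; omega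
      have hkq : m0 + (k - w 0)*q = k * q := by
        have h1 := hktq q
        rw [he]; omega
      have hden : (m0:ℚ) - (w 0:ℚ)*((q+1:ℕ):ℚ) = -((w 0:ℕ):ℚ) := by
        push_cast; linarith [heq]
      have hPv : eval ![(m0:ℚ), ((q+1:ℕ):ℚ)]
          ((∏ i ∈ Finset.univ.erase (0:Fin (n+2)), ∏ j ∈ Finset.range (w i),
            (C (w i:ℚ) * X 1 - C (j:ℚ))) *
           ∏ j ∈ Finset.range (w 0), (-X 0 + C ((w 0:ℕ):ℚ) * X 1 - C (j:ℚ)))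
          = ((∏ i ∈ Finset.univ.erase (0:Fin (n+2)), ((w i * (q+1)).factorial : ℚ)) /
             (∏ i ∈ Finset.univ.erase (0:Fin (n+2)), ((w i * q).factorial : ℚ))) *
            ((w 0).factorial : ℚ) := by
        rw [map_mul, hAev, hBev]
      have hQv : eval ![(m0:ℚ), (q:ℚ)]
          ((∏ j ∈ Finset.Icc 1 (k - w 0), (X 0 + C ((k:ℚ) - (w 0:ℚ)) * X 1 + C (j:ℚ))) *
           ∏ j ∈ Finset.range (w 0), (-X 0 + C ((w 0:ℕ):ℚ) * X 1 + C (j:ℚ))) = 0 := by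
        rw [map_mul, hDz, mul_zero]
      have hQd : eval ![(m0:ℚ), (q:ℚ)] (pderiv 1
          ((∏ j ∈ Finset.Icc 1 (k - w 0), (X 0 + C ((k:ℚ) - (w 0:ℚ)) * X 1 + C (j:ℚ))) *
           ∏ j ∈ Finset.range (w 0), (-X 0 + C ((w 0:ℕ):ℚ) * X 1 + C (j:ℚ))))
          = (((m0 + (k - w 0)*q + (k - w 0)).factorial : ℚ) / ((m0 + (k - w 0)*q).factorial : ℚ)) *
            (((w 0:ℕ):ℚ) * (((w 0 - 1).factorial:ℕ):ℚ)) := by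
        rw [pderiv_mul, map_add, map_mul, map_mul, hDz, hCev, hdD]
        ring
      rw [hPv, hQv, hQd, hgl, hgr, hal, hc q, huniv q, hden, hNN, hkq,
        show (w 0 * q).factorial = m0.factorial from by rw [← he]]
      have hfq := hfac (k * q)
      have hfk := hfac (k * q + (k - w 0))
      have hfm := hfac m0
      have hp1 := hprodfac q
      have hp2 := hprodfac (q+1)
      have hw0 : ((w 0:ℕ):ℚ) ≠ 0 := Nat.cast_ne_zero.2 (hwpos 0).ne'
      rw [hwfac]
      field_simp
      ring
    · -- off-diagonal
      have hgl : g (m0:ℤ) ((q+1:ℕ):ℤ) = 0 := by rw [hg' m0 (q+1), if_neg hd]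
      have hgr : g (m0:ℤ) (q:ℤ) = 0 := by rw [hg' m0 q, if_neg he]
      have hal := ha_off m0 (q+1) hd
      have har := ha_off m0 q he
      have hBev : eval ![(m0:ℚ), ((q+1:ℕ):ℚ)] (∏ j ∈ Finset.range (w 0),
          (-X 0 + C ((w 0:ℕ):ℚ) * X 1 - C (j:ℚ)))
          = (-1:ℚ)^(w 0) * (((m0:ℚ) - (w 0:ℚ)*((q+1:ℕ):ℚ)) *
              ∏ j ∈ Finset.range (w 0 - 1), ((m0:ℚ) - (w 0:ℚ)*((q+1:ℕ):ℚ) + 1 + (j:ℚ))) := by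
        rw [map_prod]
        have h1 : ∀ j ∈ Finset.range (w 0), eval ![(m0:ℚ), ((q+1:ℕ):ℚ)]
            (-X 0 + C ((w 0:ℕ):ℚ) * X 1 - C (j:ℚ))
            = -(((m0:ℚ) - (w 0:ℚ)*((q+1:ℕ):ℚ)) + (j:ℚ)) := by
          intro j hj; simp only [map_neg, map_add, map_sub, map_mul, map_one, eval_C, eval_X, Matrix.cons_val_zero, Matrix.cons_val_one, Matrix.head_cons]; push_cast; ring
        rw [Finset.prod_congr rfl h1, aux_prod_neg, Finset.card_range]
        congr 1
        obtain ⟨t, ht⟩ : ∃ t, w 0 = t + 1 := ⟨w 0 - 1, by have := hwpos 0; omega⟩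
        rw [ht, Nat.add_sub_cancel, Finset.prod_range_succ']
        have h2 : ∀ j ∈ Finset.range t, ((m0:ℚ) - ((t+1:ℕ):ℚ)*((q+1:ℕ):ℚ)) + ((j+1:ℕ):ℚ)
            = (m0:ℚ) - ((t+1:ℕ):ℚ)*((q+1:ℕ):ℚ) + 1 + (j:ℚ) := by
          intro j hj; push_cast; ring
        rw [Finset.prod_congr rfl h2]
        push_cast
        ring
      have hDev : eval ![(m0:ℚ), (q:ℚ)] (∏ j ∈ Finset.range (w 0),
          (-X 0 + C ((w 0:ℕ):ℚ) * X 1 + C (j:ℚ)))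
          = (-1:ℚ)^(w 0) * (((m0:ℚ) - (w 0:ℚ)*(q:ℚ)) *
              ∏ j ∈ Finset.range (w 0 - 1), ((m0:ℚ) - (w 0:ℚ)*((q+1:ℕ):ℚ) + 1 + (j:ℚ))) := by
        rw [map_prod]
        have h1 : ∀ j ∈ Finset.range (w 0), eval ![(m0:ℚ), (q:ℚ)]
            (-X 0 + C ((w 0:ℕ):ℚ) * X 1 + C (j:ℚ))
            = -(((m0:ℚ) - (w 0:ℚ)*((q+1:ℕ):ℚ) + 1) + ((w 0 - 1 - j : ℕ):ℚ)) := by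
          intro j hj
          rw [Finset.mem_range] at hj
          simp only [map_neg, map_add, map_sub, map_mul, map_one, eval_C, eval_X, Matrix.cons_val_zero, Matrix.cons_val_one, Matrix.head_cons]; push_cast [Nat.cast_sub (by omega : j ≤ w 0 - 1), Nat.cast_sub (by omega : 1 ≤ w 0)]
          ring
        rw [Finset.prod_congr rfl h1, aux_prod_neg, Finset.card_range,
          Finset.prod_range_reflect (fun l => ((m0:ℚ) - (w 0:ℚ)*((q+1:ℕ):ℚ) + 1) + (l:ℚ)) (w 0)]
        congr 1
        obtain ⟨t, ht⟩ : ∃ t, w 0 = t + 1 := ⟨w 0 - 1, by have := hwpos 0; omega⟩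
        rw [ht, Nat.add_sub_cancel, Finset.prod_range_succ]
        push_cast
        ring
      have hz1 : (m0:ℚ) - (w 0:ℚ)*((q+1:ℕ):ℚ) ≠ 0 := by
        intro h
        apply hd
        have : (m0:ℚ) = ((w 0 * (q+1) : ℕ):ℚ) := by push_cast; push_cast at h; linarith
        exact_mod_cast this
      have hz2 : (m0:ℚ) - (w 0:ℚ)*(q:ℚ) ≠ 0 := by
        intro h
        apply he
        have : (m0:ℚ) = ((w 0 * q : ℕ):ℚ) := by push_cast; push_cast at h; linarith
        exact_mod_cast this
      have hNN : m0 + (k - w 0)*(q+1) = (m0 + (k - w 0)*q) + (k - w 0) := by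
        rw [Nat.mul_succ]; omega
      have hPv : eval ![(m0:ℚ), ((q+1:ℕ):ℚ)]
          ((∏ i ∈ Finset.univ.erase (0:Fin (n+2)), ∏ j ∈ Finset.range (w i),
            (C (w i:ℚ) * X 1 - C (j:ℚ))) *
           ∏ j ∈ Finset.range (w 0), (-X 0 + C ((w 0:ℕ):ℚ) * X 1 - C (j:ℚ)))
          = ((∏ i ∈ Finset.univ.erase (0:Fin (n+2)), ((w i * (q+1)).factorial : ℚ)) /
             (∏ i ∈ Finset.univ.erase (0:Fin (n+2)), ((w i * q).factorial : ℚ))) *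
            ((-1:ℚ)^(w 0) * (((m0:ℚ) - (w 0:ℚ)*((q+1:ℕ):ℚ)) *
              ∏ j ∈ Finset.range (w 0 - 1), ((m0:ℚ) - (w 0:ℚ)*((q+1:ℕ):ℚ) + 1 + (j:ℚ)))) := by
        rw [map_mul, hAev, hBev]
      have hQv : eval ![(m0:ℚ), (q:ℚ)]
          ((∏ j ∈ Finset.Icc 1 (k - w 0), (X 0 + C ((k:ℚ) - (w 0:ℚ)) * X 1 + C (j:ℚ))) *
           ∏ j ∈ Finset.range (w 0), (-X 0 + C ((w 0:ℕ):ℚ) * X 1 + C (j:ℚ)))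
          = (((m0 + (k - w 0)*q + (k - w 0)).factorial : ℚ) / ((m0 + (k - w 0)*q).factorial : ℚ)) *
            ((-1:ℚ)^(w 0) * (((m0:ℚ) - (w 0:ℚ)*(q:ℚ)) *
              ∏ j ∈ Finset.range (w 0 - 1), ((m0:ℚ) - (w 0:ℚ)*((q+1:ℕ):ℚ) + 1 + (j:ℚ)))) := by
        rw [map_mul, hCev, hDev]
      have key : ∀ (A R F D z : ℚ), z ≠ 0 →
          (A * ((-1:ℚ)^(w 0) * (z * R))) * (-((w 0:ℕ):ℚ) * F / D * (1/z))
            = (-1:ℚ)^(w 0) * R * (-((w 0:ℕ):ℚ)) * (A * F / D) := by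
        intro A R F D z hz
        rw [show (A * ((-1:ℚ)^(w 0) * (z * R))) * (-((w 0:ℕ):ℚ) * F / D * (1/z))
            = (z * (1/z)) * ((-1:ℚ)^(w 0) * R * (-((w 0:ℕ):ℚ)) * (A * F / D)) from by ring,
          one_div, mul_inv_cancel₀ hz, one_mul]
      rw [hPv, hQv, hgl, hgr, hal, har, hNN, key _ _ _ _ _ hz1, key _ _ _ _ _ hz2]
      have hfq := hfac (m0 + (k - w 0) * q)
      have hfk := hfac (m0 + (k - w 0) * q + (k - w 0))
      have hfm := hfac m0
      have hp1 := hprodfac q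
      have hp2 := hprodfac (q+1)
      field_simp
      ring
  · -- r = 2
    have hu2 : u 2 = w 0 := by rw [hu]; rfl
    have hv2 : v 2 = 1 := by rw [hv]; rfl
    simp only [hu2, hv2, Nat.cast_one]
    rw [hP2, hQ2]
    have hpdE : ∀ j:ℕ, pderiv 1 ((X 0 - C (j:ℚ) : MvPolynomial (Fin 2) ℚ)) = 0 := by
      intro j; simp [pderiv_X_of_ne (show (0:Fin 2) ≠ 1 from by decide)]
    rcases Nat.eq_zero_or_pos m1 with rfl | hm1pos
    · -- m1 = 0
      have hA0 : eval ![(m0:ℚ), ((0:ℕ):ℚ)] (∏ i ∈ Finset.univ.erase (0:Fin (n+2)),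
          ∏ j ∈ Finset.range (w i), (C (w i:ℚ) * X 1 - C (j:ℚ))) = 0 := by
        rw [map_prod]
        refine Finset.prod_eq_zero hone ?_
        rw [map_prod]
        refine Finset.prod_eq_zero (Finset.mem_range.2 (hwpos _)) ?_
        simp only [map_neg, map_add, map_sub, map_mul, map_one, eval_C, eval_X, Matrix.cons_val_zero, Matrix.cons_val_one, Matrix.head_cons]; push_cast; ring
      have hzint : ((0:ℕ):ℤ) - 1 = -1 := by norm_num
      rw [hzint, haneg _ (-1) (Or.inr (by norm_num)), hgneg _ (-1) (Or.inr (by norm_num)),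
        map_mul, hA0, mul_zero]
      rcases Nat.eq_zero_or_pos m0 with rfl | hm0pos
      · have hE0 : eval ![((0:ℕ):ℚ), ((0:ℕ):ℚ)] (∏ j ∈ Finset.range (w 0),
            (X 0 - C (j:ℚ))) = 0 := by
          rw [map_prod]
          refine Finset.prod_eq_zero (Finset.mem_range.2 (hwpos 0)) ?_
          simp only [map_neg, map_add, map_sub, map_mul, map_one, eval_C, eval_X, Matrix.cons_val_zero, Matrix.cons_val_one, Matrix.head_cons]; push_cast; ring
        rw [pderiv_mul, map_add, map_mul, map_mul, hA0, hE0]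
        ring
      · have hgz : g (m0:ℤ) ((0:ℕ):ℤ) = 0 := by
          rw [hg' m0 0, if_neg (by rw [Nat.mul_zero]; omega)]
        rw [hgz]
        ring
    obtain ⟨q, rfl⟩ : ∃ q, m1 = q + 1 := ⟨m1 - 1, by omega⟩
    rw [show ((q+1:ℕ):ℤ) - 1 = (q:ℤ) from by push_cast; ring,
      show ((q+1:ℕ):ℚ) - 1 = (q:ℚ) from by push_cast; ring]
    have hsub : ∀ i : Fin (n+2), w i * (q+1) - w i = w i * q := fun i => by
      rw [Nat.mul_succ, Nat.add_sub_cancel]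
    rcases Nat.lt_or_ge m0 (w 0) with hlt | hge
    · -- m0 < w 0 : everything vanishes
      have hEz : eval ![(m0:ℚ), ((q+1:ℕ):ℚ)] (∏ j ∈ Finset.range (w 0),
          (X 0 - C (j:ℚ))) = 0 := by
        rw [map_prod]
        refine Finset.prod_eq_zero (Finset.mem_range.2 hlt) ?_
        simp only [map_neg, map_add, map_sub, map_mul, map_one, eval_C, eval_X, Matrix.cons_val_zero, Matrix.cons_val_one, Matrix.head_cons]; push_cast; ring
      have hne : m0 ≠ w 0 * (q+1) := by
        intro h
        rw [h] at hlt
        exact absurd hlt (not_lt.2 (Nat.le_mul_of_pos_right (w 0) (Nat.succ_pos q)))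
      have hgz : g (m0:ℤ) ((q+1:ℕ):ℤ) = 0 := by rw [hg' m0 (q+1), if_neg hne]
      have han : a ((m0:ℤ) - ((w 0:ℕ):ℤ)) (q:ℤ) = 0 := haneg _ _ (Or.inl (by omega))
      have hgn : g ((m0:ℤ) - ((w 0:ℕ):ℤ)) (q:ℤ) = 0 := hgneg _ _ (Or.inl (by omega))
      rw [hgz, han, hgn, map_mul, hEz, zero_mul]
      ring
    obtain ⟨p, rfl⟩ : ∃ p, m0 = p + w 0 := ⟨m0 - w 0, by omega⟩
    rw [show ((p + w 0:ℕ):ℤ) - ((w 0:ℕ):ℤ) = (p:ℤ) from by push_cast; ring,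
      show ((p + w 0:ℕ):ℚ) - ((w 0:ℕ):ℚ) = (p:ℚ) from by push_cast; ring]
    have hAev : eval ![((p + w 0:ℕ):ℚ), ((q+1:ℕ):ℚ)] (∏ i ∈ Finset.univ.erase (0:Fin (n+2)),
        ∏ j ∈ Finset.range (w i), (C (w i:ℚ) * X 1 - C (j:ℚ)))
        = (∏ i ∈ Finset.univ.erase (0:Fin (n+2)), ((w i * (q+1)).factorial : ℚ)) /
          (∏ i ∈ Finset.univ.erase (0:Fin (n+2)), ((w i * q).factorial : ℚ)) := by
      rw [map_prod, ← Finset.prod_div_distrib]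
      refine Finset.prod_congr rfl fun i hi => ?_
      rw [map_prod]
      have h1 : ∀ j ∈ Finset.range (w i),
          eval ![((p + w 0:ℕ):ℚ), ((q+1:ℕ):ℚ)] (C (w i:ℚ) * X 1 - C (j:ℚ))
          = ((w i * (q+1) : ℕ):ℚ) - (j:ℚ) := by
        intro j hj; simp only [map_neg, map_add, map_sub, map_mul, map_one, eval_C, eval_X, Matrix.cons_val_zero, Matrix.cons_val_one, Matrix.head_cons]; push_cast; ring
      rw [Finset.prod_congr rfl h1,
        aux_prod_desc _ _ (Nat.le_mul_of_pos_right (w i) (Nat.succ_pos q)), hsub i]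
    have hEev : eval ![((p + w 0:ℕ):ℚ), ((q+1:ℕ):ℚ)] (∏ j ∈ Finset.range (w 0),
        (X 0 - C (j:ℚ))) = ((p + w 0).factorial : ℚ) / (p.factorial : ℚ) := by
      rw [map_prod]
      have h1 : ∀ j ∈ Finset.range (w 0),
          eval ![((p + w 0:ℕ):ℚ), ((q+1:ℕ):ℚ)] (X 0 - C (j:ℚ)) = ((p + w 0:ℕ):ℚ) - (j:ℚ) := by
        intro j hj
        simp only [map_neg, map_add, map_sub, map_mul, map_one, eval_C, eval_X, Matrix.cons_val_zero, Matrix.cons_val_one, Matrix.head_cons]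
      rw [Finset.prod_congr rfl h1, aux_prod_desc _ _ (by omega),
        show p + w 0 - w 0 = p from by omega]
    have hQev : eval ![(p:ℚ), (q:ℚ)] (∏ j ∈ Finset.Icc 1 k,
        (X 0 + C ((k:ℚ) - (w 0:ℚ)) * X 1 + C (j:ℚ)))
        = ((p + (k - w 0)*q + k).factorial : ℚ) / ((p + (k - w 0)*q).factorial : ℚ) := by
      rw [map_prod]
      have h1 : ∀ j ∈ Finset.Icc 1 k, eval ![(p:ℚ), (q:ℚ)]
          (X 0 + C ((k:ℚ) - (w 0:ℚ)) * X 1 + C (j:ℚ)) = ((p + (k - w 0)*q : ℕ):ℚ) + (j:ℚ) := by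
        intro j hj; simp only [map_neg, map_add, map_sub, map_mul, map_one, eval_C, eval_X, Matrix.cons_val_zero, Matrix.cons_val_one, Matrix.head_cons]; push_cast [Nat.cast_sub hw0k.le]; ring
      rw [Finset.prod_congr rfl h1]
      exact aux_prod_Icc _ _
    have hEd : eval ![((p + w 0:ℕ):ℚ), ((q+1:ℕ):ℚ)] (pderiv 1 (∏ j ∈ Finset.range (w 0),
        (X 0 - C (j:ℚ)))) = 0 := by
      rw [eval_pderiv_prod]
      refine Finset.sum_eq_zero fun j hj => ?_
      rw [hpdE j, map_zero, zero_mul]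
    by_cases hd : p = w 0 * q
    · -- diagonal to diagonal: the harmonic-number case
      have hm0d : p + w 0 = w 0 * (q+1) := by rw [hd, Nat.mul_succ]
      have hkq : p + (k - w 0)*q = k * q := by have h1 := hktq q; omega
      have hgl : g ((p + w 0:ℕ):ℤ) ((q+1:ℕ):ℤ) = c (q+1) := by
        rw [show ((p + w 0:ℕ):ℤ) = ((w 0 * (q+1) : ℕ):ℤ) from
          by exact_mod_cast congrArg (Nat.cast : ℕ → ℤ) hm0d, hg_diag]
      have hal : a ((p + w 0:ℕ):ℤ) ((q+1:ℕ):ℤ) = c (q+1) *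
          (((k:ℚ)-(w 0:ℚ)) * H (k*(q+1)) -
            ∑ i ∈ Finset.univ.erase (0:Fin (n+2)), (w i:ℚ) * H (w i * (q+1))) := by
        rw [show ((p + w 0:ℕ):ℤ) = ((w 0 * (q+1) : ℕ):ℤ) from
          by exact_mod_cast congrArg (Nat.cast : ℕ → ℤ) hm0d,
          show ((q+1:ℕ):ℤ) = (((q+1:ℕ)):ℤ) from rfl, ha_diag (q+1)]
      have hgr : g (p:ℤ) (q:ℤ) = c q := by
        rw [show ((p:ℕ):ℤ) = ((w 0 * q : ℕ):ℤ) from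
          by exact_mod_cast congrArg (Nat.cast : ℕ → ℤ) hd, hg_diag]
      have har : a (p:ℤ) (q:ℤ) = c q *
          (((k:ℚ)-(w 0:ℚ)) * H (k*q) -
            ∑ i ∈ Finset.univ.erase (0:Fin (n+2)), (w i:ℚ) * H (w i * q)) := by
        rw [show ((p:ℕ):ℤ) = ((w 0 * q : ℕ):ℤ) from
          by exact_mod_cast congrArg (Nat.cast : ℕ → ℤ) hd, ha_diag q]
      -- derivative of the double product A
      have hinner : ∀ i ∈ Finset.univ.erase (0:Fin (n+2)),
          eval ![((p + w 0:ℕ):ℚ), ((q+1:ℕ):ℚ)] (pderiv 1 (∏ j ∈ Finset.range (w i),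
            (C (w i:ℚ) * X 1 - C (j:ℚ))))
          = ((w i:ℚ) * (H (w i * (q+1)) - H (w i * q))) *
            eval ![((p + w 0:ℕ):ℚ), ((q+1:ℕ):ℚ)] (∏ j ∈ Finset.range (w i),
              (C (w i:ℚ) * X 1 - C (j:ℚ))) := by
        intro i hi
        rw [eval_pderiv_prod]
        have hterm : ∀ j ∈ Finset.range (w i),
            eval ![((p + w 0:ℕ):ℚ), ((q+1:ℕ):ℚ)] (pderiv 1 (C (w i:ℚ) * X 1 - C (j:ℚ))) *
              ∏ l ∈ (Finset.range (w i)).erase j,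
                eval ![((p + w 0:ℕ):ℚ), ((q+1:ℕ):ℚ)] (C (w i:ℚ) * X 1 - C (l:ℚ))
            = (w i:ℚ) * ∏ l ∈ (Finset.range (w i)).erase j, (((w i * (q+1) : ℕ):ℚ) - (l:ℚ)) := by
          intro j hj
          rw [show pderiv 1 ((C (w i:ℚ) * X 1 - C (j:ℚ) : MvPolynomial (Fin 2) ℚ)) = C (w i:ℚ)
            from by simp, eval_C]
          congr 1
          refine Finset.prod_congr rfl fun l hl => ?_
          simp only [map_neg, map_add, map_sub, map_mul, map_one, eval_C, eval_X, Matrix.cons_val_zero, Matrix.cons_val_one, Matrix.head_cons]; push_cast; ring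
        have hnz : ∀ l ∈ Finset.range (w i), (((w i * (q+1) : ℕ):ℚ) - (l:ℚ)) ≠ 0 := by
          intro l hl
          rw [Finset.mem_range] at hl
          have h2 : l < w i * (q+1) :=
            lt_of_lt_of_le hl (Nat.le_mul_of_pos_right (w i) (Nat.succ_pos q))
          have h3 : ((l:ℕ):ℚ) < ((w i * (q+1) : ℕ):ℚ) := by exact_mod_cast h2
          intro h; linarith
        rw [Finset.sum_congr rfl hterm, aux_sum_erase_nonzero _ _ _ hnz]
        have hrec := aux_sum_recip (w i * (q+1)) (w i)
          (Nat.le_mul_of_pos_right (w i) (Nat.succ_pos q))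
        rw [hrec, hsub i] at *
        have hev : eval ![((p + w 0:ℕ):ℚ), ((q+1:ℕ):ℚ)] (∏ j ∈ Finset.range (w i),
            (C (w i:ℚ) * X 1 - C (j:ℚ))) = ∏ l ∈ Finset.range (w i), (((w i * (q+1) : ℕ):ℚ) - (l:ℚ)) := by
          rw [map_prod]
          refine Finset.prod_congr rfl fun l hl => ?_
          simp only [map_neg, map_add, map_sub, map_mul, map_one, eval_C, eval_X, Matrix.cons_val_zero, Matrix.cons_val_one, Matrix.head_cons]; push_cast; ring
        rw [hev, hH (w i * (q+1)), hH (w i * q)]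
        ring
      have hAd : eval ![((p + w 0:ℕ):ℚ), ((q+1:ℕ):ℚ)] (pderiv 1
          (∏ i ∈ Finset.univ.erase (0:Fin (n+2)), ∏ j ∈ Finset.range (w i),
            (C (w i:ℚ) * X 1 - C (j:ℚ))))
          = (∑ i ∈ Finset.univ.erase (0:Fin (n+2)), (w i:ℚ) * (H (w i * (q+1)) - H (w i * q))) *
            ((∏ i ∈ Finset.univ.erase (0:Fin (n+2)), ((w i * (q+1)).factorial : ℚ)) /
             (∏ i ∈ Finset.univ.erase (0:Fin (n+2)), ((w i * q).factorial : ℚ))) := by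
        rw [eval_pderiv_prod]
        have h1 : ∀ i ∈ Finset.univ.erase (0:Fin (n+2)),
            eval ![((p + w 0:ℕ):ℚ), ((q+1:ℕ):ℚ)] (pderiv 1 (∏ j ∈ Finset.range (w i),
              (C (w i:ℚ) * X 1 - C (j:ℚ)))) *
              ∏ i' ∈ (Finset.univ.erase (0:Fin (n+2))).erase i,
                eval ![((p + w 0:ℕ):ℚ), ((q+1:ℕ):ℚ)] (∏ j ∈ Finset.range (w i'),
                  (C (w i':ℚ) * X 1 - C (j:ℚ)))
            = ((w i:ℚ) * (H (w i * (q+1)) - H (w i * q))) *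
              ∏ i' ∈ Finset.univ.erase (0:Fin (n+2)),
                eval ![((p + w 0:ℕ):ℚ), ((q+1:ℕ):ℚ)] (∏ j ∈ Finset.range (w i'),
                  (C (w i':ℚ) * X 1 - C (j:ℚ))) := by
          intro i hi
          rw [hinner i hi, mul_assoc, Finset.mul_prod_erase (Finset.univ.erase (0:Fin (n+2)))
            (fun i' => eval ![((p + w 0:ℕ):ℚ), ((q+1:ℕ):ℚ)] (∏ j ∈ Finset.range (w i'),
              (C (w i':ℚ) * X 1 - C (j:ℚ)))) hi]
        rw [Finset.sum_congr rfl h1, ← Finset.sum_mul]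
        congr 1
        rw [← map_prod]
        exact hAev
      have hQd : eval ![(p:ℚ), (q:ℚ)] (pderiv 1 (∏ j ∈ Finset.Icc 1 k,
          (X 0 + C ((k:ℚ) - (w 0:ℚ)) * X 1 + C (j:ℚ))))
          = (((k:ℚ) - (w 0:ℚ)) * (H (k * (q+1)) - H (k * q))) *
            (((p + (k - w 0)*q + k).factorial : ℚ) / ((p + (k - w 0)*q).factorial : ℚ)) := by
        rw [eval_pderiv_prod]
        have hterm : ∀ j ∈ Finset.Icc 1 k,
            eval ![(p:ℚ), (q:ℚ)] (pderiv 1 (X 0 + C ((k:ℚ) - (w 0:ℚ)) * X 1 + C (j:ℚ))) *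
              ∏ l ∈ (Finset.Icc 1 k).erase j,
                eval ![(p:ℚ), (q:ℚ)] (X 0 + C ((k:ℚ) - (w 0:ℚ)) * X 1 + C (l:ℚ))
            = ((k:ℚ) - (w 0:ℚ)) * ∏ l ∈ (Finset.Icc 1 k).erase j,
                (((p + (k - w 0)*q : ℕ):ℚ) + (l:ℚ)) := by
          intro j hj
          rw [show pderiv 1 ((X 0 + C ((k:ℚ) - (w 0:ℚ)) * X 1 + C (j:ℚ) : MvPolynomial (Fin 2) ℚ))
            = C ((k:ℚ) - (w 0:ℚ)) from by simp, eval_C]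
          congr 1
          refine Finset.prod_congr rfl fun l hl => ?_
          simp only [map_neg, map_add, map_sub, map_mul, map_one, eval_C, eval_X, Matrix.cons_val_zero, Matrix.cons_val_one, Matrix.head_cons]; push_cast [Nat.cast_sub hw0k.le]; ring
        have hnz : ∀ l ∈ Finset.Icc 1 k, (((p + (k - w 0)*q : ℕ):ℚ) + (l:ℚ)) ≠ 0 := by
          intro l hl
          have : (0:ℚ) ≤ ((p + (k - w 0)*q : ℕ):ℚ) := Nat.cast_nonneg _
          rw [Finset.mem_Icc] at hl
          have h2 : (1:ℚ) ≤ (l:ℚ) := by exact_mod_cast hl.1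
          intro h; linarith
        rw [Finset.sum_congr rfl hterm, aux_sum_erase_nonzero _ _ _ hnz, aux_sum_recip_Icc]
        have hev : eval ![(p:ℚ), (q:ℚ)] (∏ j ∈ Finset.Icc 1 k,
            (X 0 + C ((k:ℚ) - (w 0:ℚ)) * X 1 + C (j:ℚ)))
            = ∏ l ∈ Finset.Icc 1 k, (((p + (k - w 0)*q : ℕ):ℚ) + (l:ℚ)) := by
          rw [map_prod]
          refine Finset.prod_congr rfl fun l hl => ?_
          simp only [map_neg, map_add, map_sub, map_mul, map_one, eval_C, eval_X, Matrix.cons_val_zero, Matrix.cons_val_one, Matrix.head_cons]; push_cast [Nat.cast_sub hw0k.le]; ring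
        rw [← hev, hQev, hkq, show k * q + k = k * (q+1) from (Nat.mul_succ k q).symm,
          hH (k * (q+1)), hH (k * q)]
        ring
      -- assemble
      have hPv : eval ![((p + w 0:ℕ):ℚ), ((q+1:ℕ):ℚ)]
          ((∏ j ∈ Finset.range (w 0), (X 0 - C (j:ℚ))) *
           ∏ i ∈ Finset.univ.erase (0:Fin (n+2)), ∏ j ∈ Finset.range (w i),
             (C (w i:ℚ) * X 1 - C (j:ℚ)))
          = (((p + w 0).factorial : ℚ) / (p.factorial : ℚ)) *
            ((∏ i ∈ Finset.univ.erase (0:Fin (n+2)), ((w i * (q+1)).factorial : ℚ)) /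
             (∏ i ∈ Finset.univ.erase (0:Fin (n+2)), ((w i * q).factorial : ℚ))) := by
        rw [map_mul, hEev, hAev]
      have hPd : eval ![((p + w 0:ℕ):ℚ), ((q+1:ℕ):ℚ)] (pderiv 1
          ((∏ j ∈ Finset.range (w 0), (X 0 - C (j:ℚ))) *
           ∏ i ∈ Finset.univ.erase (0:Fin (n+2)), ∏ j ∈ Finset.range (w i),
             (C (w i:ℚ) * X 1 - C (j:ℚ))))
          = (((p + w 0).factorial : ℚ) / (p.factorial : ℚ)) *
            ((∑ i ∈ Finset.univ.erase (0:Fin (n+2)), (w i:ℚ) * (H (w i * (q+1)) - H (w i * q))) *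
             ((∏ i ∈ Finset.univ.erase (0:Fin (n+2)), ((w i * (q+1)).factorial : ℚ)) /
              (∏ i ∈ Finset.univ.erase (0:Fin (n+2)), ((w i * q).factorial : ℚ)))) := by
        rw [pderiv_mul, map_add, map_mul, map_mul, hEd, hAd, hEev]
        ring
      rw [hPv, hPd, hgl, hal, hgr, har, hQev, hQd, hc (q+1), hc q, huniv (q+1), huniv q,
        hkq, show k * q + k = k * (q+1) from (Nat.mul_succ k q).symm, ← hm0d, ← hd]
      have hS : ∑ i ∈ Finset.univ.erase (0:Fin (n+2)), (w i:ℚ) * (H (w i * (q+1)) - H (w i * q))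
          = (∑ i ∈ Finset.univ.erase (0:Fin (n+2)), (w i:ℚ) * H (w i * (q+1))) -
            (∑ i ∈ Finset.univ.erase (0:Fin (n+2)), (w i:ℚ) * H (w i * q)) := by
        rw [← Finset.sum_sub_distrib]
        exact Finset.sum_congr rfl fun i _ => by ring
      rw [hS]
      have hfq := hfac (k * q)
      have hfk := hfac (k * (q+1))
      have hfp := hfac p
      have hfpw := hfac (p + w 0)
      have hp1 := hprodfac q
      have hp2 := hprodfac (q+1)
      field_simp
      ring
    · -- off-diagonal
      have hne : p + w 0 ≠ w 0 * (q+1) := by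
        intro h
        rw [Nat.mul_succ] at h
        omega
      have hgl : g ((p + w 0:ℕ):ℤ) ((q+1:ℕ):ℤ) = 0 := by rw [hg' (p + w 0) (q+1), if_neg hne]
      have hgr : g (p:ℤ) (q:ℤ) = 0 := by rw [hg' p q, if_neg hd]
      have hal := ha_off (p + w 0) (q+1) hne
      have har := ha_off p q hd
      have hden : ((p + w 0:ℕ):ℚ) - (w 0:ℚ)*((q+1:ℕ):ℚ) = (p:ℚ) - (w 0:ℚ)*(q:ℚ) := by
        push_cast; ring
      have hz2 : (p:ℚ) - (w 0:ℚ)*(q:ℚ) ≠ 0 := by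
        intro h
        apply hd
        have : ((p:ℕ):ℚ) = ((w 0 * q : ℕ):ℚ) := by push_cast; push_cast at h; linarith
        exact_mod_cast this
      have hNN : (p + w 0) + (k - w 0)*(q+1) = (p + (k - w 0)*q) + k := by
        rw [Nat.mul_succ]
        have := hw0k.le
        omega
      have hPv : eval ![((p + w 0:ℕ):ℚ), ((q+1:ℕ):ℚ)]
          ((∏ j ∈ Finset.range (w 0), (X 0 - C (j:ℚ))) *
           ∏ i ∈ Finset.univ.erase (0:Fin (n+2)), ∏ j ∈ Finset.range (w i),
             (C (w i:ℚ) * X 1 - C (j:ℚ)))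
          = (((p + w 0).factorial : ℚ) / (p.factorial : ℚ)) *
            ((∏ i ∈ Finset.univ.erase (0:Fin (n+2)), ((w i * (q+1)).factorial : ℚ)) /
             (∏ i ∈ Finset.univ.erase (0:Fin (n+2)), ((w i * q).factorial : ℚ))) := by
        rw [map_mul, hEev, hAev]
      rw [hPv, hgl, hgr, hal, har, hQev, hden, hNN]
      have hfq := hfac (p + (k - w 0) * q)
      have hfk := hfac (p + (k - w 0) * q + k)
      have hfp := hfac p
      have hfpw := hfac (p + w 0)
      have hp1 := hprodfac q
      have hp2 := hprodfac (q+1)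
      field_simp
      ring
end

section
/- Define f⁰(m_0, m_1) = −c_{m_1}/(k m_1) if m_0 = 0 and m_1 ≥ 1, and f⁰ = 0 otherwise; define f¹(m_0, m_1) = c_{m_1}/m_1 if m_0 = 0 and m_1 ≥ 1, and f¹ = 0 otherwise. Then for each r ∈ {0, 1} and all integers m_0, m_1 ≥ 0: (a) P̂_r(m_0, m_1)·f⁰(m_0, m_1) + (∂P̂_r/∂s)(m_0, m_1)·δ(m_0, m_1) = Q̂_r(m_0 − u_r, m_1 − v_r)·f⁰(m_0 − u_r, m_1 − v_r) + (∂Q̂_r/∂s)(m_0 − u_r, m_1 − v_r)·δ(m_0 − u_r, m_1 − v_r); and (b) the same equations hold with f¹ in place of f⁰ and ∂/∂t in place of ∂/∂s. (Equivalently, Φ_1^{(0)} = log x̂_0 − Σ_{m≥1} c_m x̂_1^m/(km) and Φ_1^{(1)} = log x̂_1 + Σ_{m≥1} c_m x̂_1^m/m are logarithmic solutions of the local extended Picard–Fuchs system of the outer brane.) -/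
open MvPolynomial Finset

lemma fact_ne (a : ℕ) : (a.factorial : ℚ) ≠ 0 := by positivity

lemma mul_prod_sub (a b : ℕ) (h : b ≤ a) :
    ∏ j ∈ Finset.range b, ((a:ℚ) - (j:ℚ)) = (a.factorial : ℚ) / ((a-b).factorial : ℚ) := by
  have h1 : ∏ j ∈ Finset.range b, ((a:ℚ) - (j:ℚ)) = ((a.descFactorial b : ℕ) : ℚ) := by
    rw [Nat.descFactorial_eq_prod_range, Nat.cast_prod]
    refine Finset.prod_congr rfl fun i hi => ?_
    rw [Nat.cast_sub (le_trans (le_of_lt (Finset.mem_range.mp hi)) h)]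
  rw [h1, eq_div_iff (fact_ne _), ← Nat.cast_mul]
  exact_mod_cast (by rw [mul_comm]; exact Nat.factorial_mul_descFactorial h :
    a.descFactorial b * (a-b).factorial = a.factorial)

lemma prod_add_fact (a b : ℕ) :
    ∏ j ∈ Finset.range b, ((a:ℚ) + 1 + (j:ℚ)) = ((a+b).factorial : ℚ) / (a.factorial : ℚ) := by
  induction b with
  | zero => simp [div_self (fact_ne a)]
  | succ b ih =>
      rw [Finset.prod_range_succ, ih, show a + (b+1) = (a+b)+1 from rfl,
        Nat.factorial_succ, Nat.cast_mul]
      have := fact_ne a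
      field_simp
      push_cast; ring

lemma prod_negjp1 (b : ℕ) : ∏ j ∈ Finset.range b, (-(1:ℚ) - (j:ℚ)) = (-1)^b * (b.factorial : ℚ) := by
  induction b with
  | zero => simp
  | succ b ih =>
      rw [Finset.prod_range_succ, ih, Nat.factorial_succ]
      push_cast
      ring

set_option maxHeartbeats 2000000 in
/-- For the local extended Picard–Fuchs system of the outer brane
(encoded by `P̂_r, Q̂_r` with shifts `(1,0)` and `(0,1)`), the coefficient families
`f⁰(0,m) = -c_m/(km)` and `f¹(0,m) = c_m/m` (for `m ≥ 1`, zero otherwise) satisfy the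
corrected recursions with the constant solution `δ`; equivalently
`Φ₁⁽⁰⁾ = log x̂₀ - Σ_{m≥1} c_m x̂₁^m/(km)` and `Φ₁⁽¹⁾ = log x̂₁ + Σ_{m≥1} c_m x̂₁^m/m`
are logarithmic solutions of that system. -/
theorem statement4
    (n : ℕ) (κ : Fin (n + 2) → ℕ) (hκ : ∀ i, 0 < κ i)
    (hsum : ∑ i, (1 : ℚ) / (κ i : ℚ) = 1)
    (k : ℕ) (hk : k = Finset.univ.lcm κ)
    (w : Fin (n + 2) → ℕ) (hw : ∀ i, w i = k / κ i)
    (c : ℕ → ℚ)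
    (hc : ∀ m, c m = (Nat.factorial (k * m) : ℚ) /
      ∏ i, (Nat.factorial (w i * m) : ℚ))
    (P Q : Fin 2 → MvPolynomial (Fin 2) ℚ)
    (hP0 : P 0 = X 0 * (X 0 - C (k : ℚ) * X 1))
    (hQ0 : Q 0 = X 0 * (X 0 - C (w 0 : ℚ) * X 1))
    (hP1 : P 1 = (∏ j ∈ Finset.range (w 0),
        (-X 0 + C (w 0 : ℚ) * X 1 - C (j : ℚ))) *
      ∏ i ∈ Finset.univ.erase 0, ∏ j ∈ Finset.range (w i),
        (C (w i : ℚ) * X 1 - C (j : ℚ)))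
    (hQ1 : Q 1 = C ((-1 : ℚ) ^ k) *
      ∏ j ∈ Finset.range k, (X 0 - C (k : ℚ) * X 1 - C (j : ℚ)))
    (u v : Fin 2 → ℕ) (hu : u = ![1, 0]) (hv : v = ![0, 1])
    (δ : ℤ → ℤ → ℚ)
    (hδ : ∀ p q : ℤ, δ p q = if p = 0 ∧ q = 0 then 1 else 0)
    (f0 f1 : ℤ → ℤ → ℚ)
    (hf0 : ∀ p q : ℤ, f0 p q =
      if p = 0 ∧ 1 ≤ q then -(c q.toNat) / ((k : ℚ) * (q : ℚ)) else 0)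
    (hf1 : ∀ p q : ℤ, f1 p q =
      if p = 0 ∧ 1 ≤ q then c q.toNat / (q : ℚ) else 0) :
    ∀ r : Fin 2, ∀ m0 m1 : ℕ,
      (MvPolynomial.eval ![(m0 : ℚ), (m1 : ℚ)] (P r) * f0 (m0 : ℤ) (m1 : ℤ) +
          MvPolynomial.eval ![(m0 : ℚ), (m1 : ℚ)] (pderiv 0 (P r)) *
            δ (m0 : ℤ) (m1 : ℤ) =
        MvPolynomial.eval ![(m0 : ℚ) - (u r : ℚ), (m1 : ℚ) - (v r : ℚ)] (Q r) *
            f0 ((m0 : ℤ) - (u r : ℤ)) ((m1 : ℤ) - (v r : ℤ)) +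
          MvPolynomial.eval ![(m0 : ℚ) - (u r : ℚ), (m1 : ℚ) - (v r : ℚ)]
              (pderiv 0 (Q r)) *
            δ ((m0 : ℤ) - (u r : ℤ)) ((m1 : ℤ) - (v r : ℤ))) ∧
      (MvPolynomial.eval ![(m0 : ℚ), (m1 : ℚ)] (P r) * f1 (m0 : ℤ) (m1 : ℤ) +
          MvPolynomial.eval ![(m0 : ℚ), (m1 : ℚ)] (pderiv 1 (P r)) *
            δ (m0 : ℤ) (m1 : ℤ) =
        MvPolynomial.eval ![(m0 : ℚ) - (u r : ℚ), (m1 : ℚ) - (v r : ℚ)] (Q r) *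
            f1 ((m0 : ℤ) - (u r : ℤ)) ((m1 : ℤ) - (v r : ℤ)) +
          MvPolynomial.eval ![(m0 : ℚ) - (u r : ℚ), (m1 : ℚ) - (v r : ℚ)]
              (pderiv 1 (Q r)) *
            δ ((m0 : ℤ) - (u r : ℤ)) ((m1 : ℤ) - (v r : ℤ))) := by
  subst hu hv
  -- basic positivity facts
  have hk0 : 0 < k := by
    rw [hk, Nat.pos_iff_ne_zero]
    intro h0
    obtain ⟨i, -, hi⟩ := Set.mem_image _ _ _ |>.mp (Finset.lcm_eq_zero_iff.mp h0)
    exact Nat.pos_iff_ne_zero.mp (hκ i) hi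
  have hκdvd : ∀ i, κ i ∣ k := fun i => hk ▸ Finset.dvd_lcm (Finset.mem_univ i)
  have hw0 : ∀ i, 0 < w i := fun i => by
    rw [hw i]; exact Nat.div_pos (Nat.le_of_dvd hk0 (hκdvd i)) (hκ i)
  have t1 : ∀ m : ℕ, ¬((1:ℤ) + m = 0) := fun m => by omega
  have t2 : ∀ m : ℕ, ¬((2:ℤ) + m = 0) := fun m => by omega
  have t1q : ∀ m : ℕ, ¬((1:ℚ) + m = 0) := fun m h => (by positivity : (1:ℚ) + m ≠ 0) h
  have t2q : ∀ m : ℕ, ¬((2:ℚ) + m = 0) := fun m h => (by positivity : (2:ℚ) + m ≠ 0) h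
  intro r m0 m1
  fin_cases r
  · -- r = 0
    constructor <;>
    · rcases m0 with _|_|m0 <;> rcases m1 with _|m1 <;>
        simp [hP0, hQ0, hf0, hf1, hδ, pderiv_mul, pderiv_X, pderiv_C,
          Matrix.cons_val_zero, Matrix.cons_val_one, Matrix.head_cons, t1, t2, t1q, t2q] <;>
        push_cast <;>
        (try (first
          | rfl
          | (exact fun h => Or.inr h)
          | (intro h; exact absurd h (by positivity))
          | (split_ifs <;> first | rfl | omega | norm_num)))
  · -- r = 1
    -- membership fact
    have hone : (1 : Fin (n+2)) ∈ Finset.univ.erase (0 : Fin (n+2)) := by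
      refine Finset.mem_erase.mpr ⟨?_, Finset.mem_univ _⟩
      simp [Fin.ext_iff]
    -- pderiv of P 1 vanishes at the origin
    have hdP1 : ∀ i : Fin 2, MvPolynomial.eval ![(0:ℚ), (0:ℚ)] (pderiv i (P 1)) = 0 := by
      intro i
      rw [hP1, pderiv_mul, map_add, map_mul, map_mul]
      have hA : MvPolynomial.eval ![(0:ℚ), (0:ℚ)] (∏ j ∈ Finset.range (w 0),
          (-X 0 + C ((w 0 : ℕ):ℚ) * X 1 - C ((j:ℕ):ℚ))) = 0 := by
        rw [map_prod]
        refine Finset.prod_eq_zero (Finset.mem_range.mpr (hw0 0)) ?_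
        simp
      have hB : MvPolynomial.eval ![(0:ℚ), (0:ℚ)] (∏ i ∈ Finset.univ.erase 0,
          ∏ j ∈ Finset.range (w i), (C ((w i : ℕ):ℚ) * X 1 - C ((j:ℕ):ℚ))) = 0 := by
        rw [map_prod]
        refine Finset.prod_eq_zero hone ?_
        rw [map_prod]
        refine Finset.prod_eq_zero (Finset.mem_range.mpr (hw0 1)) ?_
        simp
      rw [hA, hB]
      ring
    -- evaluation of P 1 at (0, m) for m ≥ 1
    have hEvalP1 : ∀ m : ℕ, 1 ≤ m → MvPolynomial.eval ![(0:ℚ), (m:ℚ)] (P 1)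
        = (∏ i, ((w i * m).factorial : ℚ)) / (∏ i, ((w i * (m-1)).factorial : ℚ)) := by
      intro m hm
      have hfac : ∀ i : Fin (n+2),
          ∏ j ∈ Finset.range (w i), (((w i : ℕ):ℚ) * (m:ℚ) - (j:ℚ))
            = ((w i * m).factorial : ℚ) / ((w i * (m-1)).factorial : ℚ) := by
        intro i
        have h1 : ∀ j : ℕ, ((w i : ℕ):ℚ) * (m:ℚ) - (j:ℚ) = ((w i * m : ℕ):ℚ) - (j:ℚ) := by
          intro j; push_cast; ring
        have h2 : w i ≤ w i * m := Nat.le_mul_of_pos_right _ hm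
        have h3 : w i * m - w i = w i * (m-1) := by rw [Nat.mul_sub, Nat.mul_one]
        calc ∏ j ∈ Finset.range (w i), (((w i : ℕ):ℚ) * (m:ℚ) - (j:ℚ))
            = ∏ j ∈ Finset.range (w i), (((w i * m : ℕ):ℚ) - (j:ℚ)) :=
              Finset.prod_congr rfl (fun j _ => by rw [h1])
          _ = ((w i * m).factorial : ℚ) / ((w i * m - w i).factorial : ℚ) :=
              mul_prod_sub _ _ h2
          _ = ((w i * m).factorial : ℚ) / ((w i * (m-1)).factorial : ℚ) := by rw [h3]
      rw [hP1, map_mul]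
      have hA : MvPolynomial.eval ![(0:ℚ), (m:ℚ)] (∏ j ∈ Finset.range (w 0),
          (-X 0 + C ((w 0 : ℕ):ℚ) * X 1 - C ((j:ℕ):ℚ)))
          = ((w 0 * m).factorial : ℚ) / ((w 0 * (m-1)).factorial : ℚ) := by
        rw [map_prod, ← hfac 0]
        refine Finset.prod_congr rfl (fun j _ => ?_)
        simp
      have hB : ∀ i ∈ Finset.univ.erase (0 : Fin (n+2)),
          MvPolynomial.eval ![(0:ℚ), (m:ℚ)] (∏ j ∈ Finset.range (w i),
            (C ((w i : ℕ):ℚ) * X 1 - C ((j:ℕ):ℚ)))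
          = ((w i * m).factorial : ℚ) / ((w i * (m-1)).factorial : ℚ) := by
        intro i _
        rw [map_prod, ← hfac i]
        refine Finset.prod_congr rfl (fun j _ => ?_)
        simp
      rw [hA, map_prod, Finset.prod_congr rfl hB,
        Finset.mul_prod_erase Finset.univ
          (fun i => ((w i * m).factorial : ℚ) / ((w i * (m-1)).factorial : ℚ))
          (Finset.mem_univ (0 : Fin (n+2))),
        Finset.prod_div_distrib]
    -- evaluation of Q 1 at (0, m) for m ≥ 1
    have hEvalQ1 : ∀ m : ℕ, 1 ≤ m → MvPolynomial.eval ![(0:ℚ), (m:ℚ)] (Q 1)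
        = ((k * m + (k-1)).factorial : ℚ) / ((k * m - 1).factorial : ℚ) := by
      intro m hm
      have hkm : 1 ≤ k * m := Nat.one_le_iff_ne_zero.mpr
        (Nat.pos_iff_ne_zero.mp (Nat.mul_pos hk0 hm))
      rw [hQ1, map_mul, eval_C, map_prod]
      have hstep : ∀ j ∈ Finset.range k,
          MvPolynomial.eval ![(0:ℚ), (m:ℚ)] (X 0 - C ((k:ℕ):ℚ) * X 1 - C ((j:ℕ):ℚ))
            = (-1) * (((k * m - 1 : ℕ):ℚ) + 1 + (j:ℚ)) := by
        intro j _
        simp only [map_sub, map_mul, eval_X, eval_C, Matrix.cons_val_zero,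
          Matrix.cons_val_one, Matrix.head_cons]
        rw [Nat.cast_sub hkm]
        push_cast
        ring
      rw [Finset.prod_congr rfl hstep, Finset.prod_mul_distrib, Finset.prod_const,
        Finset.card_range, prod_add_fact]
      have h4 : k * m - 1 + k = k * m + (k-1) := by
        have h5 : 1 ≤ k := hk0
        omega
      rw [h4, ← mul_assoc, ← mul_pow]
      norm_num
    -- pderiv values of Q 1 at the origin
    obtain ⟨k', hk'⟩ : ∃ k', k = k' + 1 := ⟨k - 1, by omega⟩
    have hBQ : MvPolynomial.eval ![(0:ℚ), (0:ℚ)] (∏ j ∈ Finset.range k',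
        (X 0 - C ((k:ℕ):ℚ) * X 1 - C ((j+1 : ℕ):ℚ))) = (-1)^k' * (k'.factorial : ℚ) := by
      rw [map_prod, ← prod_negjp1 k']
      refine Finset.prod_congr rfl (fun j _ => ?_)
      simp only [map_sub, map_mul, eval_X, eval_C, Matrix.cons_val_zero,
        Matrix.cons_val_one, Matrix.head_cons]
      push_cast
      ring
    have hsq : ((-1:ℚ))^k' * (-1)^k' = 1 := by rw [← mul_pow]; norm_num
    have hQsplit : Q 1 = C ((-1:ℚ)^k) * ((∏ j ∈ Finset.range k',
        (X 0 - C ((k:ℕ):ℚ) * X 1 - C ((j+1 : ℕ):ℚ))) * (X 0 - C ((k:ℕ):ℚ) * X 1 - C ((0:ℕ):ℚ))) := by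
      rw [hQ1, show Finset.range k = Finset.range (k'+1) from by rw [hk'],
        Finset.prod_range_succ']
    have hdQ1s : MvPolynomial.eval ![(0:ℚ), (0:ℚ)] (pderiv 0 (Q 1)) = -(((k-1).factorial : ℚ)) := by
      rw [hQsplit, pderiv_C_mul, pderiv_mul, map_mul, eval_C, map_add, map_mul, map_mul]
      have hF0 : MvPolynomial.eval ![(0:ℚ), (0:ℚ)] ((X 0 - C ((k:ℕ):ℚ) * X 1 - C ((0:ℕ):ℚ)) : MvPolynomial (Fin 2) ℚ) = 0 := by simp
      have hdF0 : MvPolynomial.eval ![(0:ℚ), (0:ℚ)] (pderiv 0 ((X 0 - C ((k:ℕ):ℚ) * X 1 - C ((0:ℕ):ℚ)) : MvPolynomial (Fin 2) ℚ)) = 1 := by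
        simp [pderiv_mul, pderiv_X, pderiv_C]
      rw [hF0, hdF0, hBQ, show k - 1 = k' from by omega, hk', pow_succ]
      linear_combination (-(k'.factorial:ℚ)) * hsq
    have hdQ1t : MvPolynomial.eval ![(0:ℚ), (0:ℚ)] (pderiv 1 (Q 1)) = (k.factorial : ℚ) := by
      rw [hQsplit, pderiv_C_mul, pderiv_mul, map_mul, eval_C, map_add, map_mul, map_mul]
      have hF0 : MvPolynomial.eval ![(0:ℚ), (0:ℚ)] ((X 0 - C ((k:ℕ):ℚ) * X 1 - C ((0:ℕ):ℚ)) : MvPolynomial (Fin 2) ℚ) = 0 := by simp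
      have hdF0 : MvPolynomial.eval ![(0:ℚ), (0:ℚ)] (pderiv 1 ((X 0 - C ((k:ℕ):ℚ) * X 1 - C ((0:ℕ):ℚ)) : MvPolynomial (Fin 2) ℚ)) = -(k:ℚ) := by
        simp [pderiv_mul, pderiv_X, pderiv_C]
      rw [hF0, hdF0, hBQ, hk', Nat.factorial_succ, pow_succ]
      push_cast
      linear_combination (((k':ℚ)+1) * (k'.factorial:ℚ)) * hsq
    -- value lemmas
    have hf0z : ∀ p q : ℤ, ¬(p = 0 ∧ 1 ≤ q) → f0 p q = 0 := fun p q h => by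
      rw [hf0, if_neg h]
    have hf1z : ∀ p q : ℤ, ¬(p = 0 ∧ 1 ≤ q) → f1 p q = 0 := fun p q h => by
      rw [hf1, if_neg h]
    have hδz : ∀ p q : ℤ, ¬(p = 0 ∧ q = 0) → δ p q = 0 := fun p q h => by
      rw [hδ, if_neg h]
    have hδ1 : δ 0 0 = 1 := by rw [hδ, if_pos ⟨rfl, rfl⟩]
    have hf0v : ∀ q : ℤ, 0 < q → f0 0 q = -(c q.toNat) / ((k:ℚ) * (q:ℚ)) := fun q hq => by
      rw [hf0, if_pos ⟨rfl, hq⟩]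
    have hf1v : ∀ q : ℤ, 0 < q → f1 0 q = (c q.toNat) / ((q:ℚ)) := fun q hq => by
      rw [hf1, if_pos ⟨rfl, hq⟩]
    have hprodne : ∀ m : ℕ, (∏ i, ((w i * m).factorial : ℚ)) ≠ 0 :=
      fun m => Finset.prod_ne_zero_iff.mpr (fun i _ => fact_ne _)
    have hkq : (k:ℚ) ≠ 0 := Nat.cast_ne_zero.mpr (by omega)
    refine ⟨?_, ?_⟩
    · -- f0 / pderiv 0 component
      rcases m0 with _|m0
      · rcases m1 with _|_|m1
        · -- (0,0)
          simp only [Fin.mk_one, Matrix.cons_val_one, Matrix.head_cons,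
            Matrix.cons_val_zero, Nat.cast_zero, Nat.cast_one, sub_zero, zero_sub]
          rw [hdP1 0, hδ1, hf0z 0 0 (by omega), hf0z 0 (-1) (by omega),
            hδz 0 (-1) (by omega)]
          ring
        · -- (0,1)
          have hP11 := hEvalP1 1 le_rfl
          norm_num at hP11
          have hpne : (∏ i, ((w i).factorial : ℚ)) ≠ 0 :=
            Finset.prod_ne_zero_iff.mpr (fun i _ => fact_ne _)
          have hkf : (k.factorial : ℚ) = (k:ℚ) * (((k-1).factorial : ℕ) : ℚ) := by
            rw [hk', Nat.factorial_succ, show k'+1-1 = k' from rfl]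
            push_cast
            ring
          simp only [Fin.mk_one, Matrix.cons_val_one, Matrix.head_cons,
            Matrix.cons_val_zero, zero_add, Nat.cast_zero, Nat.cast_one, sub_zero, sub_self]
          rw [hP11, hdQ1s, hδ1, hδz 0 1 (by omega), hf0z 0 0 (by omega),
            hf0v 1 one_pos, show ((1:ℤ).toNat) = 1 from rfl]
          rw [hc 1]
          norm_num
          rw [hkf]
          field_simp
        · -- (0, m+2)
          have h2q : ((m1+1+1:ℕ):ℚ) - 1 = ((m1+1:ℕ):ℚ) := by push_cast; ring
          have h2z : ((m1+1+1:ℕ):ℤ) - 1 = ((m1+1:ℕ):ℤ) := by push_cast; ring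
          simp only [Fin.mk_one, Matrix.cons_val_one, Matrix.head_cons,
            Matrix.cons_val_zero, Nat.cast_zero, Nat.cast_one, sub_zero]
          rw [h2q, h2z]
          rw [hEvalP1 (m1+1+1) (by omega), hEvalQ1 (m1+1) (by omega),
            hf0v ((m1+1+1:ℕ):ℤ) (by omega), hf0v ((m1+1:ℕ):ℤ) (by omega),
            hδz 0 ((m1+1+1:ℕ):ℤ) (by omega), hδz 0 ((m1+1:ℕ):ℤ) (by omega)]
          simp only [Int.toNat_natCast, Nat.add_sub_cancel]
          rw [hc (m1+1+1), hc (m1+1)]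
          have hmul2 : k * (m1+1+1) = k * (m1+1) + k := by ring
          have hpos2 : 0 < k * (m1+1) := Nat.mul_pos hk0 (Nat.succ_pos m1)
          have e3 : k * (m1+1) + (k-1) = k * (m1+1+1) - 1 := by omega
          have e1 : ((k*(m1+1+1)).factorial : ℚ)
              = ((k*(m1+1+1) : ℕ) : ℚ) * (((k*(m1+1+1) - 1).factorial : ℕ) : ℚ) := by
            obtain ⟨K, hK⟩ : ∃ K, k*(m1+1+1) = K+1 := ⟨k*(m1+1+1)-1, by omega⟩
            rw [hK, Nat.factorial_succ, Nat.add_sub_cancel]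
            push_cast
            ring
          have e2 : ((k*(m1+1)).factorial : ℚ)
              = ((k*(m1+1) : ℕ) : ℚ) * (((k*(m1+1) - 1).factorial : ℕ) : ℚ) := by
            obtain ⟨K, hK⟩ : ∃ K, k*(m1+1) = K+1 := ⟨k*(m1+1)-1, by omega⟩
            rw [hK, Nat.factorial_succ, Nat.add_sub_cancel]
            push_cast
            ring
          rw [e3, e1, e2]
          have hne1 : ((k*(m1+1+1) : ℕ) : ℚ) ≠ 0 := Nat.cast_ne_zero.mpr (by omega)
          have hne2 : ((k*(m1+1) : ℕ) : ℚ) ≠ 0 := Nat.cast_ne_zero.mpr (by omega)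
          have hd1 := fact_ne (k*(m1+1+1) - 1)
          have hd2 := fact_ne (k*(m1+1) - 1)
          have hp1 := hprodne (m1+1+1)
          have hp2 := hprodne (m1+1)
          have hq1 : ((m1:ℚ)+1+1) ≠ 0 := by positivity
          have hq2 : ((m1:ℚ)+1) ≠ 0 := by positivity
          push_cast
          field_simp
          ring
      · -- m0 ≥ 1 : everything vanishes
        simp only [Fin.mk_one, Matrix.cons_val_one, Matrix.head_cons,
          Matrix.cons_val_zero, Nat.cast_zero, Nat.cast_one, sub_zero]
        rw [hf0z ((m0+1:ℕ):ℤ) _ (by omega), hf0z ((m0+1:ℕ):ℤ) _ (by omega),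
          hδz ((m0+1:ℕ):ℤ) _ (by omega), hδz ((m0+1:ℕ):ℤ) _ (by omega)]
        ring
    · -- f1 / pderiv 1 component
      rcases m0 with _|m0
      · rcases m1 with _|_|m1
        · -- (0,0)
          simp only [Fin.mk_one, Matrix.cons_val_one, Matrix.head_cons,
            Matrix.cons_val_zero, Nat.cast_zero, Nat.cast_one, sub_zero, zero_sub]
          rw [hdP1 1, hδ1, hf1z 0 0 (by omega), hf1z 0 (-1) (by omega),
            hδz 0 (-1) (by omega)]
          ring
        · -- (0,1)
          have hP11 := hEvalP1 1 le_rfl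
          norm_num at hP11
          have hpne : (∏ i, ((w i).factorial : ℚ)) ≠ 0 :=
            Finset.prod_ne_zero_iff.mpr (fun i _ => fact_ne _)
          have hkf : (k.factorial : ℚ) = (k:ℚ) * (((k-1).factorial : ℕ) : ℚ) := by
            rw [hk', Nat.factorial_succ, show k'+1-1 = k' from rfl]
            push_cast
            ring
          simp only [Fin.mk_one, Matrix.cons_val_one, Matrix.head_cons,
            Matrix.cons_val_zero, zero_add, Nat.cast_zero, Nat.cast_one, sub_zero, sub_self]
          rw [hP11, hdQ1t, hδ1, hδz 0 1 (by omega), hf1z 0 0 (by omega),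
            hf1v 1 one_pos, show ((1:ℤ).toNat) = 1 from rfl]
          rw [hc 1]
          norm_num
          rw [hkf]
          field_simp
        · -- (0, m+2)
          have h2q : ((m1+1+1:ℕ):ℚ) - 1 = ((m1+1:ℕ):ℚ) := by push_cast; ring
          have h2z : ((m1+1+1:ℕ):ℤ) - 1 = ((m1+1:ℕ):ℤ) := by push_cast; ring
          simp only [Fin.mk_one, Matrix.cons_val_one, Matrix.head_cons,
            Matrix.cons_val_zero, Nat.cast_zero, Nat.cast_one, sub_zero]
          rw [h2q, h2z]
          rw [hEvalP1 (m1+1+1) (by omega), hEvalQ1 (m1+1) (by omega),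
            hf1v ((m1+1+1:ℕ):ℤ) (by omega), hf1v ((m1+1:ℕ):ℤ) (by omega),
            hδz 0 ((m1+1+1:ℕ):ℤ) (by omega), hδz 0 ((m1+1:ℕ):ℤ) (by omega)]
          simp only [Int.toNat_natCast, Nat.add_sub_cancel]
          rw [hc (m1+1+1), hc (m1+1)]
          have hmul2 : k * (m1+1+1) = k * (m1+1) + k := by ring
          have hpos2 : 0 < k * (m1+1) := Nat.mul_pos hk0 (Nat.succ_pos m1)
          have e3 : k * (m1+1) + (k-1) = k * (m1+1+1) - 1 := by omega
          have e1 : ((k*(m1+1+1)).factorial : ℚ)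
              = ((k*(m1+1+1) : ℕ) : ℚ) * (((k*(m1+1+1) - 1).factorial : ℕ) : ℚ) := by
            obtain ⟨K, hK⟩ : ∃ K, k*(m1+1+1) = K+1 := ⟨k*(m1+1+1)-1, by omega⟩
            rw [hK, Nat.factorial_succ, Nat.add_sub_cancel]
            push_cast
            ring
          have e2 : ((k*(m1+1)).factorial : ℚ)
              = ((k*(m1+1) : ℕ) : ℚ) * (((k*(m1+1) - 1).factorial : ℕ) : ℚ) := by
            obtain ⟨K, hK⟩ : ∃ K, k*(m1+1) = K+1 := ⟨k*(m1+1)-1, by omega⟩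
            rw [hK, Nat.factorial_succ, Nat.add_sub_cancel]
            push_cast
            ring
          rw [e3, e1, e2]
          have hne1 : ((k*(m1+1+1) : ℕ) : ℚ) ≠ 0 := Nat.cast_ne_zero.mpr (by omega)
          have hne2 : ((k*(m1+1) : ℕ) : ℚ) ≠ 0 := Nat.cast_ne_zero.mpr (by omega)
          have hd1 := fact_ne (k*(m1+1+1) - 1)
          have hd2 := fact_ne (k*(m1+1) - 1)
          have hp1 := hprodne (m1+1+1)
          have hp2 := hprodne (m1+1)
          have hq1 : ((m1:ℚ)+1+1) ≠ 0 := by positivity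
          have hq2 : ((m1:ℚ)+1) ≠ 0 := by positivity
          push_cast
          field_simp
          ring
      · -- m0 ≥ 1 : everything vanishes
        simp only [Fin.mk_one, Matrix.cons_val_one, Matrix.head_cons,
          Matrix.cons_val_zero, Nat.cast_zero, Nat.cast_one, sub_zero]
        rw [hf1z ((m0+1:ℕ):ℤ) _ (by omega), hf1z ((m0+1:ℕ):ℤ) _ (by omega),
          hδz ((m0+1:ℕ):ℤ) _ (by omega), hδz ((m0+1:ℕ):ℤ) _ (by omega)]
        ring
end

section
/- Define u(m_0, m_1) = c_m/(km) = (km − 1)!/((w_1 m)! ⋯ (w_n m)!) if (m_0, m_1) = (w_1 m, m) for some m ≥ 1, and u = 0 otherwise. Then for each r ∈ {0, 1, 2} and all integers m_0, m_1 ≥ 0: (a) P̌_r(m_0, m_1)·u(m_0, m_1) + (∂P̌_r/∂s)(m_0, m_1)·δ(m_0, m_1) = Q̌_r(m_0 − u_r, m_1 − v_r)·u(m_0 − u_r, m_1 − v_r) + (∂Q̌_r/∂s)(m_0 − u_r, m_1 − v_r)·δ(m_0 − u_r, m_1 − v_r); and (b) the same equations hold with (k − w_1)·u in place of u and ∂/∂t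 in place of ∂/∂s. (Equivalently, ǧ_1^{(0)} = log x_0 + Σ_{m≥1} ((km−1)!/∏_i (w_i m)!)(x_0^{w_1}x_1)^m and ǧ_1^{(1)} = log x_1 + (k − w_1)·Σ_{m≥1} ((km−1)!/∏_i (w_i m)!)(x_0^{w_1}x_1)^m are logarithmic solutions of the local extended Picard–Fuchs system of this inner-brane phase, whose holomorphic solution is ǧ_0 = 1.) -/
open MvPolynomial

open Nat

private theorem prodDesc (a b : ℕ) (h : b ≤ a) :
    ∏ j ∈ Finset.range b, ((a:ℚ) - j) = a ! / (a - b)! := by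
  induction b with
  | zero => simp [Nat.sub_zero, div_self, Nat.cast_ne_zero.mpr (Nat.factorial_ne_zero a)]
  | succ b ih =>
    have hb : b < a := h
    have h2 : ((a:ℚ) - b) = ((a - b : ℕ) : ℚ) := by
      push_cast [Nat.cast_sub hb.le]; ring
    have h1 : (a - b : ℕ) = (a - (b+1)) + 1 := by omega
    rw [Finset.prod_range_succ, ih hb.le, h2, h1, Nat.factorial_succ, Nat.cast_mul,
      Nat.cast_add, Nat.cast_one]
    generalize (a - (b+1)) = d
    have n2 : ((d : ℕ) : ℚ) + 1 ≠ 0 := by positivity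
    rw [div_mul_eq_mul_div, mul_comm ((a ! : ℕ):ℚ) _, mul_div_mul_left _ _ n2]

private theorem prodAsc (a K : ℕ) (h : 1 ≤ a) :
    ∏ j ∈ Finset.range K, ((a:ℚ) + j) = (a + K - 1)! / (a-1)! := by
  induction K with
  | zero => simp [div_self, Nat.cast_ne_zero.mpr (Nat.factorial_ne_zero (a-1))]
  | succ K ih =>
    have h1 : (a + (K+1) - 1) = (a + K - 1) + 1 := by omega
    have h2 : ((a:ℚ) + K) = ((a + K - 1 : ℕ) : ℚ) + 1 := by
      push_cast [Nat.cast_sub (by omega : 1 ≤ a + K)]; ring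
    rw [Finset.prod_range_succ, ih, h1, Nat.factorial_succ, h2, Nat.cast_mul,
      Nat.cast_add, Nat.cast_one]
    ring

private theorem factKey (a : ℕ) (h : 0 < a) : ((a ! : ℕ) : ℚ) = a * ((a-1)! : ℕ) := by
  obtain ⟨b, rfl⟩ : ∃ b, a = b + 1 := ⟨a - 1, by omega⟩
  rw [Nat.factorial_succ]
  push_cast
  simp

private theorem evalPDmul (x : Fin 2 → ℚ) (i : Fin 2) (A B : MvPolynomial (Fin 2) ℚ)
    (hA : eval x A = 0) (hB : eval x B = 0) : eval x (pderiv i (A * B)) = 0 := by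
  rw [pderiv_mul, map_add, map_mul, map_mul, hA, hB, mul_zero, zero_mul, add_zero]

private theorem pdAsc (a : ℚ) (K : ℕ) (hK : 1 ≤ K) (x : Fin 2 → ℚ)
    (hx : x 0 + a * x 1 = 0) (i : Fin 2) :
    eval x (pderiv i (∏ j ∈ Finset.range K, (X 0 + C a * X 1 + C (j:ℚ)))) =
      (if i = 0 then 1 else a) * ((K-1)! : ℚ) := by
  obtain ⟨K', rfl⟩ : ∃ K', K = K' + 1 := ⟨K-1, by omega⟩
  rw [Finset.prod_range_succ', pderiv_mul, map_add, map_mul, map_mul]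
  have h0 : eval x ((X 0 + C a * X 1 + C ((0:ℕ):ℚ)) : MvPolynomial (Fin 2) ℚ) = 0 := by
    simp [hx]
  have hA : eval x (∏ j ∈ Finset.range K',
      ((X 0 + C a * X 1 + C ((j+1:ℕ):ℚ)) : MvPolynomial (Fin 2) ℚ)) = (K' ! : ℚ) := by
    rw [map_prod]
    have hterm : ∀ j ∈ Finset.range K',
        eval x ((X 0 + C a * X 1 + C ((j+1:ℕ):ℚ)) : MvPolynomial (Fin 2) ℚ) = ((j:ℚ)+1) := by
      intro j _
      simp only [map_add, map_mul, eval_X, eval_C]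
      push_cast
      rw [hx, zero_add]
    rw [Finset.prod_congr rfl hterm]
    have : ∏ j ∈ Finset.range K', ((j:ℚ)+1) = ((∏ j ∈ Finset.range K', (j+1) : ℕ) : ℚ) := by
      push_cast; rfl
    rw [this, Finset.prod_range_add_one_eq_factorial]
  have hpd : eval x (pderiv i ((X 0 + C a * X 1 + C ((0:ℕ):ℚ)) : MvPolynomial (Fin 2) ℚ))
      = (if i = 0 then 1 else a) := by
    fin_cases i <;>
      simp [pderiv_X, Pi.single_apply]
  rw [h0, hA, hpd]
  simp [Nat.add_sub_cancel, mul_comm]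

set_option maxHeartbeats 1000000 in
/-- For the local extended Picard–Fuchs system of the inner-brane
phase (encoded by `P̌_r, Q̌_r` with shifts `(1,0)`, `(0,1)`, `(w₁,1)`), the coefficient
family `u(w₁m, m) = c_m/(km) = (km-1)!/∏ᵢ(wᵢm)!` (for `m ≥ 1`, zero otherwise)
satisfies the corrected recursions with `∂/∂s` and the constant solution `δ`, and
`(k-w₁)·u` satisfies them with `∂/∂t`; equivalently
`ǧ₁⁽⁰⁾ = log x₀ + Σ_{m≥1} ((km-1)!/∏ᵢ(wᵢm)!)(x₀^{w₁}x₁)^m` and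
`ǧ₁⁽¹⁾ = log x₁ + (k-w₁)·Σ_{m≥1} ((km-1)!/∏ᵢ(wᵢm)!)(x₀^{w₁}x₁)^m`
are logarithmic solutions of that system, whose holomorphic solution is `ǧ₀ = 1`. -/
theorem statement5
    (n : ℕ) (κ : Fin (n + 2) → ℕ) (hκ : ∀ i, 0 < κ i)
    (hsum : ∑ i, (1 : ℚ) / (κ i : ℚ) = 1)
    (k : ℕ) (hk : k = Finset.univ.lcm κ)
    (w : Fin (n + 2) → ℕ) (hw : ∀ i, w i = k / κ i)
    (c : ℕ → ℚ)
    (hc : ∀ m, c m = (Nat.factorial (k * m) : ℚ) /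
      ∏ i, (Nat.factorial (w i * m) : ℚ))
    (P Q : Fin 3 → MvPolynomial (Fin 2) ℚ)
    (hP0 : P 0 = X 0 * (X 0 - C (w 0 : ℚ) * X 1))
    (hQ0 : Q 0 = (X 0 + C ((k : ℚ) - (w 0 : ℚ)) * X 1) *
      (X 0 - C (w 0 : ℚ) * X 1))
    (hP1 : P 1 = (∏ i ∈ Finset.univ.erase 0, ∏ j ∈ Finset.range (w i),
        (C (w i : ℚ) * X 1 - C (j : ℚ))) *
      ∏ j ∈ Finset.range (w 0), (-X 0 + C (w 0 : ℚ) * X 1 - C (j : ℚ)))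
    (hQ1 : Q 1 = (∏ j ∈ Finset.range (k - w 0),
        (X 0 + C ((k : ℚ) - (w 0 : ℚ)) * X 1 + C (j : ℚ))) *
      ∏ j ∈ Finset.range (w 0), (-X 0 + C (w 0 : ℚ) * X 1 + C (j : ℚ)))
    (hP2 : P 2 = (∏ j ∈ Finset.range (w 0), (X 0 - C (j : ℚ))) *
      ∏ i ∈ Finset.univ.erase 0, ∏ j ∈ Finset.range (w i),
        (C (w i : ℚ) * X 1 - C (j : ℚ)))
    (hQ2 : Q 2 = ∏ j ∈ Finset.range k,
      (X 0 + C ((k : ℚ) - (w 0 : ℚ)) * X 1 + C (j : ℚ)))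
    (uu vv : Fin 3 → ℕ) (huu : uu = ![1, 0, w 0]) (hvv : vv = ![0, 1, 1])
    (δ : ℤ → ℤ → ℚ)
    (hδ : ∀ p q : ℤ, δ p q = if p = 0 ∧ q = 0 then 1 else 0)
    (f : ℤ → ℤ → ℚ)
    (hf : ∀ p q : ℤ, f p q =
      if 1 ≤ q ∧ p = (w 0 : ℤ) * q then c q.toNat / ((k : ℚ) * (q : ℚ)) else 0) :
    ∀ r : Fin 3, ∀ m0 m1 : ℕ,
      (MvPolynomial.eval ![(m0 : ℚ), (m1 : ℚ)] (P r) * f (m0 : ℤ) (m1 : ℤ) +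
          MvPolynomial.eval ![(m0 : ℚ), (m1 : ℚ)] (pderiv 0 (P r)) *
            δ (m0 : ℤ) (m1 : ℤ) =
        MvPolynomial.eval ![(m0 : ℚ) - (uu r : ℚ), (m1 : ℚ) - (vv r : ℚ)] (Q r) *
            f ((m0 : ℤ) - (uu r : ℤ)) ((m1 : ℤ) - (vv r : ℤ)) +
          MvPolynomial.eval ![(m0 : ℚ) - (uu r : ℚ), (m1 : ℚ) - (vv r : ℚ)]
              (pderiv 0 (Q r)) *
            δ ((m0 : ℤ) - (uu r : ℤ)) ((m1 : ℤ) - (vv r : ℤ))) ∧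
      (MvPolynomial.eval ![(m0 : ℚ), (m1 : ℚ)] (P r) *
            (((k : ℚ) - (w 0 : ℚ)) * f (m0 : ℤ) (m1 : ℤ)) +
          MvPolynomial.eval ![(m0 : ℚ), (m1 : ℚ)] (pderiv 1 (P r)) *
            δ (m0 : ℤ) (m1 : ℤ) =
        MvPolynomial.eval ![(m0 : ℚ) - (uu r : ℚ), (m1 : ℚ) - (vv r : ℚ)] (Q r) *
            (((k : ℚ) - (w 0 : ℚ)) *
              f ((m0 : ℤ) - (uu r : ℤ)) ((m1 : ℤ) - (vv r : ℤ))) +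
          MvPolynomial.eval ![(m0 : ℚ) - (uu r : ℚ), (m1 : ℚ) - (vv r : ℚ)]
              (pderiv 1 (Q r)) *
            δ ((m0 : ℤ) - (uu r : ℤ)) ((m1 : ℤ) - (vv r : ℤ))) := by
  have hk0 : 0 < k := by
    rw [hk]
    rcases Nat.eq_zero_or_pos (Finset.univ.lcm κ) with h0 | h0
    · rw [Finset.lcm_eq_zero_iff] at h0
      obtain ⟨i, -, hi⟩ := h0
      exact absurd hi.symm (hκ i).ne
    · exact h0
  have hdvd : ∀ i, κ i ∣ k := fun i => hk ▸ Finset.dvd_lcm (Finset.mem_univ i)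
  have hwκ : ∀ i, w i * κ i = k := fun i => by rw [hw i]; exact Nat.div_mul_cancel (hdvd i)
  have hw0 : ∀ i, 0 < w i := fun i => by
    apply Nat.pos_of_ne_zero
    intro h
    have := hwκ i
    rw [h, zero_mul] at this
    omega
  have hsumw : ∑ i, w i = k := by
    have hq : ∀ i ∈ Finset.univ, (w i : ℚ) = (k : ℚ) * (1 / (κ i : ℚ)) := fun i _ => by
      have h1 : ((κ i : ℚ)) ≠ 0 := Nat.cast_ne_zero.mpr (hκ i).ne'
      field_simp
      exact_mod_cast hwκ i
    have hcast : ((∑ i, w i : ℕ) : ℚ) = (k : ℚ) := by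
      push_cast
      rw [Finset.sum_congr rfl hq, ← Finset.mul_sum, hsum, mul_one]
    exact_mod_cast hcast
  have hone : (1 : Fin (n+2)) ∈ Finset.univ.erase (0 : Fin (n+2)) := by
    simp
  have hwk : w 0 < k := by
    have h1 := Finset.add_sum_erase Finset.univ w (Finset.mem_univ (0 : Fin (n+2)))
    have h2 : w 1 ≤ ∑ i ∈ Finset.univ.erase 0, w i :=
      Finset.single_le_sum (fun i _ => Nat.zero_le _) hone
    have h3 := hw0 1
    omega
  have hfz : ∀ p q : ℤ, ¬(1 ≤ q ∧ p = (w 0 : ℤ) * q) → f p q = 0 := fun p q h => by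
    rw [hf]; exact if_neg h
  have hδz : ∀ p q : ℤ, ¬(p = 0 ∧ q = 0) → δ p q = 0 := fun p q h => by
    rw [hδ]; exact if_neg h
  have hδ1 : δ 0 0 = 1 := by rw [hδ]; simp
  intro r m0 m1
  fin_cases r
  · simp only [Fin.zero_eta, huu, hvv, Matrix.cons_val_zero, Nat.cast_one, Nat.cast_zero,
      Int.natCast_zero, sub_zero]
    have hc1 : f ↑m0 ↑m1 = 0 ∨ eval ![(m0:ℚ), (m1:ℚ)] (P 0) = 0 := by
      by_cases hs : (1:ℤ) ≤ (m1:ℤ) ∧ (m0:ℤ) = (w 0:ℤ) * (m1:ℤ)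
      · right
        have hcast : (m0:ℚ) = (w 0:ℚ) * (m1:ℚ) := by exact_mod_cast hs.2
        rw [hP0]
        simp [hcast]
      · left; exact hfz _ _ hs
    have hc2 : ∀ i : Fin 2, eval ![(m0:ℚ), (m1:ℚ)] (pderiv i (P 0)) * δ ↑m0 ↑m1 = 0 := by
      intro i
      by_cases hd : m0 = 0 ∧ m1 = 0
      · obtain ⟨h1, h2⟩ := hd; subst h1; subst h2
        simp only [Nat.cast_zero, Int.natCast_zero]
        rw [hδ1, mul_one, hP0]
        exact evalPDmul _ _ _ _ (by simp) (by simp)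
      · rw [hδz _ _ (fun h => hd ⟨by exact_mod_cast h.1, by exact_mod_cast h.2⟩), mul_zero]
    have hc3 : f (↑m0 - 1) ↑m1 = 0 ∨ eval ![(m0:ℚ) - 1, (m1:ℚ)] (Q 0) = 0 := by
      by_cases hs : (1:ℤ) ≤ (m1:ℤ) ∧ (m0:ℤ) - 1 = (w 0:ℤ) * (m1:ℤ)
      · right
        have hcast : (m0:ℚ) - 1 = (w 0:ℚ) * (m1:ℚ) := by exact_mod_cast hs.2
        rw [hQ0]
        simp [hcast]
      · left; exact hfz _ _ hs
    have hc4 : ∀ i : Fin 2, eval ![(m0:ℚ) - 1, (m1:ℚ)] (pderiv i (Q 0)) * δ (↑m0 - 1) ↑m1 = 0 := by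
      intro i
      by_cases hd : m0 = 1 ∧ m1 = 0
      · obtain ⟨h1, h2⟩ := hd; subst h1; subst h2
        simp only [Nat.cast_zero, Nat.cast_one, Int.natCast_zero, Int.natCast_one, sub_self]
        rw [hδ1, mul_one, hQ0]
        exact evalPDmul _ _ _ _ (by simp) (by simp)
      · rw [hδz _ _ (fun h => hd ⟨by omega, by omega⟩), mul_zero]
    refine ⟨?_, ?_⟩ <;> rcases hc1 with h | h <;> rcases hc3 with h' | h' <;>
      simp [h, h', hc2 0, hc2 1, hc4 0, hc4 1]
  · simp only [Fin.mk_one, huu, hvv, Matrix.cons_val_one, Matrix.head_cons, Nat.cast_zero,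
      Nat.cast_one, Int.natCast_zero, Int.natCast_one, sub_zero]
    have hc1 : f ↑m0 ↑m1 = 0 ∨ eval ![(m0:ℚ), (m1:ℚ)] (P 1) = 0 := by
      by_cases hs : (1:ℤ) ≤ (m1:ℤ) ∧ (m0:ℤ) = (w 0:ℤ) * (m1:ℤ)
      · right
        have hcast : (m0:ℚ) = (w 0:ℚ) * (m1:ℚ) := by exact_mod_cast hs.2
        rw [hP1, map_mul]
        have hz : eval ![(m0:ℚ), (m1:ℚ)] (∏ j ∈ Finset.range (w 0),
            ((-X 0 + C ((w 0 : ℕ) : ℚ) * X 1 - C (j : ℚ)) : MvPolynomial (Fin 2) ℚ)) = 0 := by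
          rw [map_prod]
          exact Finset.prod_eq_zero (Finset.mem_range.mpr (hw0 0)) (by simp [hcast])
        rw [hz, mul_zero]
      · left; exact hfz _ _ hs
    have hc2 : ∀ i : Fin 2, eval ![(m0:ℚ), (m1:ℚ)] (pderiv i (P 1)) * δ ↑m0 ↑m1 = 0 := by
      intro i
      by_cases hd : m0 = 0 ∧ m1 = 0
      · obtain ⟨h1, h2⟩ := hd; subst h1; subst h2
        simp only [Nat.cast_zero, Int.natCast_zero]
        rw [hδ1, mul_one, hP1]
        refine evalPDmul _ _ _ _ ?_ ?_
        · rw [map_prod]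
          refine Finset.prod_eq_zero hone ?_
          rw [map_prod]
          exact Finset.prod_eq_zero (Finset.mem_range.mpr (hw0 1)) (by simp)
        · rw [map_prod]
          exact Finset.prod_eq_zero (Finset.mem_range.mpr (hw0 0)) (by simp)
      · rw [hδz _ _ (fun h => hd ⟨by exact_mod_cast h.1, by exact_mod_cast h.2⟩), mul_zero]
    have hc3 : f ↑m0 (↑m1 - 1) = 0 ∨ eval ![(m0:ℚ), (m1:ℚ) - 1] (Q 1) = 0 := by
      by_cases hs : (1:ℤ) ≤ (m1:ℤ) - 1 ∧ (m0:ℤ) = (w 0:ℤ) * ((m1:ℤ) - 1)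
      · right
        have hcast : (m0:ℚ) = (w 0:ℚ) * ((m1:ℚ) - 1) := by exact_mod_cast hs.2
        rw [hQ1, map_mul]
        have hz : eval ![(m0:ℚ), (m1:ℚ) - 1] (∏ j ∈ Finset.range (w 0),
            ((-X 0 + C ((w 0 : ℕ) : ℚ) * X 1 + C (j : ℚ)) : MvPolynomial (Fin 2) ℚ)) = 0 := by
          rw [map_prod]
          exact Finset.prod_eq_zero (Finset.mem_range.mpr (hw0 0)) (by simp [hcast])
        rw [hz, mul_zero]
      · left; exact hfz _ _ hs
    have hc4 : ∀ i : Fin 2, eval ![(m0:ℚ), (m1:ℚ) - 1] (pderiv i (Q 1)) * δ ↑m0 (↑m1 - 1) = 0 := by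
      intro i
      by_cases hd : m0 = 0 ∧ m1 = 1
      · obtain ⟨h1, h2⟩ := hd; subst h1; subst h2
        simp only [Nat.cast_zero, Nat.cast_one, Int.natCast_zero, Int.natCast_one, sub_self]
        rw [hδ1, mul_one, hQ1]
        refine evalPDmul _ _ _ _ ?_ ?_
        · rw [map_prod]
          exact Finset.prod_eq_zero (Finset.mem_range.mpr (by omega : 0 < k - w 0)) (by simp)
        · rw [map_prod]
          exact Finset.prod_eq_zero (Finset.mem_range.mpr (hw0 0)) (by simp)
      · rw [hδz _ _ (fun h => hd ⟨by omega, by omega⟩), mul_zero]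
    refine ⟨?_, ?_⟩ <;> rcases hc1 with h | h <;> rcases hc3 with h' | h' <;>
      simp [h, h', hc2 0, hc2 1, hc4 0, hc4 1]
  · simp only [Fin.reduceFinMk, huu, hvv, Matrix.cons_val_two, Matrix.tail_cons,
      Matrix.head_cons, Matrix.cons_val_one, Nat.cast_one, Int.natCast_one]
    by_cases hs : 1 ≤ m1 ∧ m0 = w 0 * m1
    · obtain ⟨hm1, hm0⟩ := hs
      obtain ⟨m', rfl⟩ : ∃ m', m1 = m' + 1 := ⟨m1 - 1, by omega⟩
      subst hm0
      have hδL : δ ↑(w 0 * (m' + 1)) ↑(m' + 1) = 0 := by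
        apply hδz
        rintro ⟨-, h2⟩
        omega
      have hfL : f ↑(w 0 * (m' + 1)) ↑(m' + 1) =
          ((k * (m' + 1))! : ℚ) / (∏ i, ((w i * (m' + 1))! : ℚ)) /
            ((k:ℚ) * ((m' + 1 : ℕ) : ℚ)) := by
        rw [hf, if_pos ⟨by omega, by push_cast; ring⟩, Int.toNat_natCast, hc]
        norm_num
      have key : ∀ i : Fin (n+2), ∏ j ∈ Finset.range (w i),
          ((w i : ℚ) * ((m' + 1 : ℕ) : ℚ) - (j:ℚ)) =
            ((w i * (m' + 1))! : ℚ) / ((w i * m')! : ℚ) := by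
        intro i
        have h1 : ((w i : ℚ) * ((m' + 1 : ℕ) : ℚ)) = ((w i * (m' + 1) : ℕ) : ℚ) := by
          push_cast; ring
        simp only [h1]
        have h2 : w i * (m' + 1) - w i = w i * m' := by
          have h3 : w i * (m' + 1) = w i * m' + w i := by ring
          omega
        rw [prodDesc _ _ (Nat.le_mul_of_pos_right _ (by omega)), h2]
      have hevP : eval ![((w 0 * (m' + 1) : ℕ) : ℚ), ((m' + 1 : ℕ) : ℚ)] (P 2)
          = ∏ i, (((w i * (m' + 1))! : ℚ) / ((w i * m')! : ℚ)) := by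
        rw [hP2, map_mul]
        simp only [map_prod, map_sub, map_mul, eval_X, eval_C, Matrix.cons_val_zero,
          Matrix.cons_val_one, Matrix.head_cons]
        rw [show ((w 0 * (m' + 1) : ℕ) : ℚ) = (w 0 : ℚ) * ((m' + 1 : ℕ) : ℚ) from by
          push_cast; ring]
        rw [key 0, Finset.prod_congr rfl (fun i _ => key i)]
        exact Finset.mul_prod_erase Finset.univ
          (fun i : Fin (n+2) => ((w i * (m' + 1))! : ℚ) / ((w i * m')! : ℚ)) (Finset.mem_univ 0)
      have eZ1 : ((w 0 * (m' + 1) : ℕ) : ℤ) - ((w 0 : ℕ) : ℤ) = ((w 0 * m' : ℕ) : ℤ) := by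
        push_cast; ring
      have eZ2 : (((m' + 1 : ℕ) : ℤ) - 1) = ((m' : ℕ) : ℤ) := by push_cast; ring
      have eQ1 : ((w 0 * (m' + 1) : ℕ) : ℚ) - ((w 0 : ℕ) : ℚ) = ((w 0 * m' : ℕ) : ℚ) := by
        push_cast; ring
      have eQ2 : (((m' + 1 : ℕ) : ℚ) - 1) = ((m' : ℕ) : ℚ) := by push_cast; ring
      rw [eZ1, eZ2, eQ1, eQ2, hδL, hfL, hevP]
      have hprodne : ∀ M : ℕ, (∏ i, ((w i * M)! : ℚ)) ≠ 0 := fun M =>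
        Finset.prod_ne_zero_iff.mpr fun i _ => Nat.cast_ne_zero.mpr (Nat.factorial_ne_zero _)
      have hkQ : (k:ℚ) ≠ 0 := Nat.cast_ne_zero.mpr hk0.ne'
      rcases Nat.eq_zero_or_pos m' with rfl | hm'
      · -- m' = 0 : RHS is the delta term
        have hf0 : f ↑(w 0 * 0) ↑(0:ℕ) = 0 := hfz _ _ (by rintro ⟨h1, -⟩; omega)
        have hδ0 : δ ↑(w 0 * 0) ↑(0:ℕ) = 1 := by simp [hδ]
        have hpdQ : ∀ i : Fin 2, eval ![((w 0 * 0 : ℕ) : ℚ), ((0:ℕ) : ℚ)] (pderiv i (Q 2)) =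
            (if i = 0 then 1 else ((k:ℚ) - (w 0:ℚ))) * (((k-1)! : ℕ) : ℚ) := by
          intro i
          rw [hQ2]
          refine pdAsc _ k hk0 ![((w 0 * 0 : ℕ) : ℚ), ((0:ℕ) : ℚ)] ?_ i
          norm_num
        have hkfac : ((k ! : ℕ) : ℚ) = k * (((k-1)! : ℕ) : ℚ) := factKey k hk0
        refine ⟨?_, ?_⟩
        · rw [hf0, hδ0, hpdQ 0, if_pos rfl]
          simp only [Nat.mul_zero, Nat.zero_add, Nat.mul_one, Nat.factorial_zero, Nat.cast_one,
            div_one, mul_zero, add_zero, zero_add, mul_one, zero_mul]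
          rw [hkfac]
          have hpne : (∏ i : Fin (n+2), ((w i)! : ℚ)) ≠ 0 :=
            Finset.prod_ne_zero_iff.mpr fun i _ => Nat.cast_ne_zero.mpr (Nat.factorial_ne_zero _)
          field_simp
        · rw [hf0, hδ0, hpdQ 1, if_neg (by decide)]
          simp only [Nat.mul_zero, Nat.zero_add, Nat.mul_one, Nat.factorial_zero, Nat.cast_one,
            div_one, mul_zero, add_zero, zero_add, mul_one, zero_mul]
          rw [hkfac]
          have hpne : (∏ i : Fin (n+2), ((w i)! : ℚ)) ≠ 0 :=
            Finset.prod_ne_zero_iff.mpr fun i _ => Nat.cast_ne_zero.mpr (Nat.factorial_ne_zero _)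
          field_simp
      · -- m' ≥ 1
        have hfR : f ↑(w 0 * m') ↑m' =
            ((k * m')! : ℚ) / (∏ i, ((w i * m')! : ℚ)) / ((k:ℚ) * ((m' : ℕ) : ℚ)) := by
          rw [hf, if_pos ⟨by omega, by push_cast; ring⟩, Int.toNat_natCast, hc]
          norm_num
        have hδR : δ ↑(w 0 * m') ↑m' = 0 := by
          apply hδz; rintro ⟨-, h2⟩; omega
        have hevQ : eval ![((w 0 * m' : ℕ) : ℚ), ((m' : ℕ) : ℚ)] (Q 2) =
            ((k * (m' + 1) - 1)! : ℚ) / ((k * m' - 1)! : ℚ) := by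
          rw [hQ2, map_prod]
          simp only [map_add, map_mul, eval_X, eval_C, Matrix.cons_val_zero,
            Matrix.cons_val_one, Matrix.head_cons]
          have hterm : ∀ j ∈ Finset.range k,
              ((w 0 * m' : ℕ) : ℚ) + ((k:ℚ) - (w 0:ℚ)) * ((m' : ℕ):ℚ) + (j:ℚ)
                = ((k * m' : ℕ) : ℚ) + (j:ℚ) := fun j _ => by push_cast; ring
          rw [Finset.prod_congr rfl hterm]
          rw [prodAsc _ _ (Nat.mul_pos hk0 hm')]
          have h3 : k * (m' + 1) = k * m' + k := by ring
          have h4 : k * m' + k - 1 = k * (m' + 1) - 1 := by omega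
          rw [h4]
        rw [hfR, hδR, hevQ, Finset.prod_div_distrib]
        have e1 : (((k * (m' + 1))! : ℕ) : ℚ) =
            ((k * (m' + 1) : ℕ) : ℚ) * (((k * (m' + 1) - 1)! : ℕ) : ℚ) :=
          factKey _ (Nat.mul_pos hk0 (by omega))
        have e2 : (((k * m')! : ℕ) : ℚ) =
            ((k * m' : ℕ) : ℚ) * (((k * m' - 1)! : ℕ) : ℚ) :=
          factKey _ (Nat.mul_pos hk0 hm')
        have hmQ : ((m' : ℕ) : ℚ) ≠ 0 := Nat.cast_ne_zero.mpr hm'.ne'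
        have hm1Q : ((m' + 1 : ℕ) : ℚ) ≠ 0 := Nat.cast_ne_zero.mpr (by omega)
        have hG : (((k * m' - 1)! : ℕ) : ℚ) ≠ 0 := Nat.cast_ne_zero.mpr (Nat.factorial_ne_zero _)
        rw [e1, e2]
        have ec1 : ((k * (m' + 1) : ℕ) : ℚ) = (k : ℚ) * ((m' + 1 : ℕ) : ℚ) := by push_cast; ring
        have ec2 : ((k * m' : ℕ) : ℚ) = (k : ℚ) * ((m' : ℕ) : ℚ) := by push_cast; ring
        rw [ec1, ec2]
        refine ⟨?_, ?_⟩ <;>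
          · field_simp [hprodne m', hprodne (m' + 1), hmQ, hm1Q, hG]
            ring
    · have hf1 : f ↑m0 ↑m1 = 0 := by
        apply hfz
        rintro ⟨h1, h2⟩
        exact hs ⟨by omega, by exact_mod_cast h2⟩
      have hf3 : f (↑m0 - ↑(w 0)) (↑m1 - 1) = 0 := by
        apply hfz
        rintro ⟨h1, h2⟩
        rw [mul_sub, mul_one] at h2
        have h3 : (m0:ℤ) = (w 0:ℤ) * (m1:ℤ) := by linarith
        exact hs ⟨by omega, by exact_mod_cast h3⟩
      have hδ4 : δ (↑m0 - ↑(w 0)) (↑m1 - 1) = 0 := by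
        apply hδz
        rintro ⟨h1, h2⟩
        have e1 : m0 = w 0 := by omega
        have e2 : m1 = 1 := by omega
        exact hs ⟨by omega, by rw [e1, e2, mul_one]⟩
      have hpd : ∀ i : Fin 2, eval ![(m0:ℚ), (m1:ℚ)] (pderiv i (P 2)) * δ ↑m0 ↑m1 = 0 := by
        intro i
        by_cases hd : m0 = 0 ∧ m1 = 0
        · obtain ⟨h1, h2⟩ := hd; subst h1; subst h2
          simp only [Nat.cast_zero, Int.natCast_zero]
          rw [hδ1, mul_one, hP2]
          refine evalPDmul _ _ _ _ ?_ ?_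
          · rw [map_prod]
            exact Finset.prod_eq_zero (Finset.mem_range.mpr (hw0 0)) (by simp)
          · rw [map_prod]
            refine Finset.prod_eq_zero hone ?_
            rw [map_prod]
            exact Finset.prod_eq_zero (Finset.mem_range.mpr (hw0 1)) (by simp)
        · rw [hδz _ _ (fun h => hd ⟨by exact_mod_cast h.1, by exact_mod_cast h.2⟩), mul_zero]
      refine ⟨?_, ?_⟩ <;> simp [hf1, hf3, hδ4, hpd 0, hpd 1]
end

section
/- For every real number y with |y| < 1/4, the series Σ_{m=1}^∞ ((2m−1)!/(m!)²) y^m converges and its sum equals log(2/(1 + √(1 − 4y))). (Equivalently, in the case n = 2, k_1 = k_2 = 2, the local mirror map of the inner brane is Q_0 = x_0·exp(Σ_{m≥1} ((2m−1)!/(m!)²)(x_0 x_1)^m) = 2x_0/(1 + √(1 − 4 x_0 x_1)).) -/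
open FormalMultilinearSeries Filter Real Finset
open scoped ENNReal NNReal Topology

namespace St9

/-- coefficients of 1/sqrt(1-4x) -/
noncomputable def cb : ℕ → ℝ := fun n => (Nat.centralBinom n : ℝ)

/-- coefficients of the log series -/
noncomputable def ac : ℕ → ℝ := fun n => if n = 0 then 0 else (Nat.centralBinom n : ℝ) / (2 * n)

lemma centralBinom_le_four_pow (n : ℕ) : Nat.centralBinom n ≤ 4 ^ n := by
  induction n with
  | zero => simp [Nat.centralBinom]
  | succ n ih =>
    have h := Nat.succ_mul_centralBinom_succ n
    have h2 : (n + 1) * Nat.centralBinom (n + 1) ≤ (n + 1) * (4 * 4 ^ n) := by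
      rw [h]
      calc 2 * (2 * n + 1) * Nat.centralBinom n ≤ (4 * (n + 1)) * (4 ^ n) := by
            apply Nat.mul_le_mul (by omega) ih
        _ = (n + 1) * (4 * 4 ^ n) := by ring
    have := Nat.le_of_mul_le_mul_left h2 (by omega)
    simpa [pow_succ, mul_comm] using this

lemma cb_abs_le (n : ℕ) : |cb n| ≤ 4 ^ n := by
  rw [cb, abs_of_nonneg (by positivity)]
  calc (Nat.centralBinom n : ℝ) ≤ ((4 ^ n : ℕ) : ℝ) := by
        exact_mod_cast centralBinom_le_four_pow n
    _ = 4 ^ n := by push_cast; ring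

lemma ac_abs_le (n : ℕ) : |ac n| ≤ 4 ^ n := by
  rw [ac]
  split_ifs with h
  · simp only [abs_zero]; positivity
  · rw [abs_of_nonneg (by positivity)]
    calc (Nat.centralBinom n : ℝ) / (2 * n) ≤ (Nat.centralBinom n : ℝ) := by
          apply div_le_self (by positivity)
          have : 1 ≤ n := Nat.one_le_iff_ne_zero.2 h
          have : (1:ℝ) ≤ n := by exact_mod_cast this
          linarith
      _ ≤ 4 ^ n := by
          have := cb_abs_le n
          rwa [cb, abs_of_nonneg (by positivity)] at this

lemma radius_ge (a : ℕ → ℝ) (ha : ∀ n, |a n| ≤ 4 ^ n) :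
    (1/4 : ℝ≥0∞) ≤ (ofScalars ℝ a).radius := by
  apply ENNReal.le_of_forall_nnreal_lt
  intro r hr
  apply FormalMultilinearSeries.le_radius_of_summable_norm
  have hr' : (r : ℝ) < 1/4 := by
    have h14 : (1/4 : ℝ≥0∞) = ((1/4 : ℝ≥0) : ℝ≥0∞) := by norm_num
    rw [h14] at hr
    exact_mod_cast ENNReal.coe_lt_coe.mp hr
  have h4r : |4 * (r:ℝ)| < 1 := by
    rw [abs_of_nonneg (by positivity)]; linarith
  refine Summable.of_nonneg_of_le (fun n => by positivity) (fun n => ?_)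
    (summable_geometric_of_abs_lt_one h4r)
  rw [ofScalars_norm, Real.norm_eq_abs, mul_pow]
  exact mul_le_mul_of_nonneg_right (ha n) (by positivity)

end St9

namespace St9

lemma mem_ball_radius {a : ℕ → ℝ} (hrad : (1/4 : ℝ≥0∞) ≤ (ofScalars ℝ a).radius)
    {y : ℝ} (hy : |y| < 1/4) : (‖y‖₊ : ℝ≥0∞) < (ofScalars ℝ a).radius := by
  have h1 : ‖y‖₊ < (1/4 : ℝ≥0) := by
    rw [← NNReal.coe_lt_coe]
    push_cast
    simpa [Real.norm_eq_abs] using hy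
  calc (‖y‖₊ : ℝ≥0∞) < ((1/4 : ℝ≥0) : ℝ≥0∞) := ENNReal.coe_lt_coe.2 h1
    _ = 1/4 := by norm_num
    _ ≤ _ := hrad

lemma trio (a : ℕ → ℝ) (hrad : (1/4 : ℝ≥0∞) ≤ (ofScalars ℝ a).radius)
    {y : ℝ} (hy : |y| < 1/4) :
    HasSum (fun n => a n * y ^ n) ((ofScalars ℝ a).sum y) ∧
    HasDerivAt (ofScalars ℝ a).sum (deriv (ofScalars ℝ a).sum y) y ∧
    HasSum (fun n : ℕ => ((n:ℝ)+1) * a (n+1) * y ^ n) (deriv (ofScalars ℝ a).sum y) := by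
  set p := ofScalars ℝ a with hp
  have hmem : (‖y‖₊ : ℝ≥0∞) < p.radius := mem_ball_radius hrad hy
  have hball : y ∈ Metric.eball (0:ℝ) p.radius := by
    simpa [Metric.mem_eball, edist_eq_enorm_sub] using (show ‖y‖ₑ < p.radius from hmem)
  have hpos : 0 < p.radius := lt_of_lt_of_le (by norm_num) hrad
  have hfp : HasFPowerSeriesOnBall p.sum p 0 p.radius := p.hasFPowerSeriesOnBall hpos
  have hs : HasSum (fun n => a n * y ^ n) (p.sum y) := by
    have h0 := hfp.hasSum hball
    rw [zero_add] at h0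
    have h2 : (fun n => p n fun _ => y) = fun n => a n * y ^ n := by
      funext n
      rw [hp, ofScalars_apply_eq, smul_eq_mul]
    rwa [h2] at h0
  have hfd := hfp.hasFDerivAt hmem
  rw [zero_add] at hfd
  have hder : HasDerivAt p.sum (deriv p.sum y) y := hfd.differentiableAt.hasDerivAt
  have hds := hfp.fderiv.hasSum hball
  rw [zero_add] at hds
  have hds1 : HasSum (fun n => (p.derivSeries n fun _ => y) 1) ((fderiv ℝ p.sum y) 1) := by
    have := hds.mapL (ContinuousLinearMap.apply ℝ ℝ (1:ℝ))
    simpa using this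
  rw [fderiv_apply_one_eq_deriv] at hds1
  have key : ∀ n : ℕ, (p.derivSeries n fun _ => y) 1 = ((n:ℝ)+1) * a (n+1) * y ^ n := by
    intro n
    rcases eq_or_ne y 0 with rfl | hy0
    · rcases Nat.eq_zero_or_pos n with rfl | hn
      · have he : (fun _ : Fin 0 => (0:ℝ)) = (fun _ : Fin 0 => (1:ℝ)) := funext fun i => i.elim0
        calc (p.derivSeries 0 fun _ => (0:ℝ)) 1 = (p.derivSeries 0 fun _ => (1:ℝ)) 1 := by
              rw [he]
          _ = (0+1) • (p 1 fun _ => (1:ℝ)) := p.derivSeries_apply_diag 0 1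
          _ = (((0:ℕ):ℝ)+1) * a 1 * (0:ℝ) ^ 0 := by
              rw [ofScalars_apply_eq]
              norm_num
      · have hzero : (p.derivSeries n fun _ => (0:ℝ)) = 0 :=
          ContinuousMultilinearMap.map_coord_zero _ (⟨0, hn⟩ : Fin n) rfl
        rw [hzero]
        simp [zero_pow (Nat.pos_iff_ne_zero.mp hn)]
    · have hdiag := p.derivSeries_apply_diag n y
      rw [ofScalars_apply_eq] at hdiag
      have hlin : (p.derivSeries n fun _ => y) y = y * (p.derivSeries n fun _ => y) 1 := by
        have := (p.derivSeries n fun _ => y).map_smul y (1:ℝ)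
        simpa [smul_eq_mul] using this
      apply mul_left_cancel₀ hy0
      rw [← hlin, hdiag]
      push_cast [nsmul_eq_mul, smul_eq_mul]
      ring
  refine ⟨hs, hder, ?_⟩
  simp only [key] at hds1
  exact hds1

end St9

namespace St9

noncomputable def h : ℝ → ℝ := (ofScalars ℝ cb).sum

lemma cb_rad : (1/4 : ℝ≥0∞) ≤ (ofScalars ℝ cb).radius := radius_ge cb cb_abs_le
lemma ac_rad : (1/4 : ℝ≥0∞) ≤ (ofScalars ℝ ac).radius := radius_ge ac ac_abs_le

lemma abs_lt_quarter_of_mem {t x : ℝ} (ht : |t| < 1/4) (hx : x ∈ Set.uIcc t 0) : |x| < 1/4 := by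
  rw [Set.mem_uIcc] at hx
  rw [abs_lt] at ht ⊢
  rcases hx with ⟨h1, h2⟩ | ⟨h1, h2⟩ <;> constructor <;> linarith

lemma const_on (g : ℝ → ℝ) (hg : ∀ x : ℝ, |x| < 1/4 → HasDerivAt g 0 x)
    {t : ℝ} (ht : |t| < 1/4) : g t = g 0 := by
  have hsub : ∀ x ∈ Set.Icc (min t 0) (max t 0), |x| < 1/4 := by
    intro x hx
    exact abs_lt_quarter_of_mem ht hx
  have hcont : ContinuousOn g (Set.Icc (min t 0) (max t 0)) := fun x hx =>
    ((hg x (hsub x hx)).continuousAt).continuousWithinAt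
  have hder : ∀ x ∈ Set.Ico (min t 0) (max t 0), HasDerivWithinAt g 0 (Set.Ici x) x := fun x hx =>
    (hg x (hsub x (Set.Ico_subset_Icc_self hx))).hasDerivWithinAt
  have h1 := constant_of_has_deriv_right_zero hcont hder t ⟨min_le_left _ _, le_max_left _ _⟩
  have h2 := constant_of_has_deriv_right_zero hcont hder 0 ⟨min_le_right _ _, le_max_right _ _⟩
  rw [h1, h2]

lemma cb_rec (n : ℕ) : ((n:ℝ)+1) * cb (n+1) = (4*(n:ℝ)+2) * cb n := by
  have h0 := Nat.succ_mul_centralBinom_succ n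
  have h2 : ((n:ℝ)+1) * (Nat.centralBinom (n+1) : ℝ)
      = 2*(2*(n:ℝ)+1) * (Nat.centralBinom n : ℝ) := by exact_mod_cast h0
  rw [cb, cb]
  linear_combination h2

lemma h_deriv_eq (t : ℝ) (ht : |t| < 1/4) :
    deriv h t = 4 * t * deriv h t + 2 * h t := by
  obtain ⟨hs, hder, hd⟩ := trio cb cb_rad ht
  have hh : (ofScalars ℝ cb).sum = h := rfl
  rw [hh] at hs hder hd
  have hF : HasSum (fun n : ℕ => (n:ℝ) * cb n * t ^ n) (t * deriv h t) := by
    have h1 := hd.mul_left t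
    have h2 : (fun n : ℕ => t * ((((n:ℕ):ℝ)+1) * cb (n+1) * t ^ n)) =
        fun n : ℕ => (((n+1:ℕ)):ℝ) * cb (n+1) * t ^ (n+1) := by
      funext n; push_cast; ring
    rw [h2] at h1
    have h3 := (hasSum_nat_add_iff (f := fun n : ℕ => (n:ℝ) * cb n * t ^ n) 1).1 h1
    simpa using h3
  have hcomb := (hF.mul_left 4).add (hs.mul_left 2)
  have heq : (fun n : ℕ => 4*((n:ℝ) * cb n * t^n) + 2*(cb n * t^n)) =
      fun n : ℕ => ((n:ℝ)+1) * cb (n+1) * t ^ n := by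
    funext n; rw [cb_rec n]; ring
  rw [heq] at hcomb
  have huniq := hd.unique hcomb
  linarith [huniq]

lemma phi_deriv (x : ℝ) (hx : |x| < 1/4) :
    HasDerivAt (fun u => h u ^ 2 * (1 - 4*u)) 0 x := by
  obtain ⟨hs, hder, hd⟩ := trio cb cb_rad hx
  have hode := h_deriv_eq x hx
  have d1 : HasDerivAt (fun u => h u ^ 2) (2 * h x * deriv h x) x := by
    have := hder.pow 2
    norm_num at this
    convert this using 1 <;> rfl
  have d2 : HasDerivAt (fun u : ℝ => 1 - 4*u) (-4) x := by
    simpa using ((hasDerivAt_id x).const_mul (4:ℝ)).const_sub 1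
  have := d1.mul d2
  refine this.congr_deriv ?_
  linear_combination (2 * h x) * hode

lemma h_zero : h 0 = 1 := by
  obtain ⟨hs, -, -⟩ := trio cb cb_rad (y := 0) (by norm_num)
  have hone := hasSum_single (f := fun n : ℕ => cb n * (0:ℝ)^n) 0
    (by intro b hb; simp [zero_pow hb])
  have h1 : h 0 = cb 0 * (0:ℝ)^0 := hs.unique hone
  have h2 : cb 0 * (0:ℝ)^0 = 1 := by norm_num [cb, Nat.centralBinom]
  rw [h1, h2]

lemma h_sq (t : ℝ) (ht : |t| < 1/4) : h t ^ 2 * (1 - 4*t) = 1 := by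
  have hc := const_on (fun u => h u ^ 2 * (1 - 4*u)) phi_deriv ht
  simp only [h_zero] at hc
  simpa using hc

lemma h_pos (t : ℝ) (ht : |t| < 1/4) : 0 < h t := by
  by_contra hle
  push_neg at hle
  have hne : h t ≠ 0 := by
    intro h0
    have := h_sq t ht
    rw [h0] at this
    simp at this
  have hlt : h t < 0 := lt_of_le_of_ne hle hne
  have hcont : ContinuousOn h (Set.uIcc t 0) := by
    intro x hx
    exact ((trio cb cb_rad (abs_lt_quarter_of_mem ht hx)).2.1.continuousAt).continuousWithinAt
  have hmem : (0:ℝ) ∈ Set.uIcc (h t) (h 0) := by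
    rw [h_zero]
    exact Set.mem_uIcc.2 (Or.inl ⟨hlt.le, by norm_num⟩)
  obtain ⟨c, hc, hc0⟩ := intermediate_value_uIcc hcont hmem
  have := h_sq c (abs_lt_quarter_of_mem ht hc)
  rw [hc0] at this
  simp at this

lemma h_eq (t : ℝ) (ht : |t| < 1/4) : h t = (Real.sqrt (1 - 4*t))⁻¹ := by
  have hpos : 0 < 1 - 4*t := by rw [abs_lt] at ht; linarith
  have hsq := h_sq t ht
  have h2 : h t ^ 2 = (1-4*t)⁻¹ := by
    field_simp
    linarith [hsq]
  have h3 : Real.sqrt (h t ^ 2) = Real.sqrt ((1-4*t)⁻¹) := by rw [h2]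
  rwa [Real.sqrt_sq (h_pos t ht).le, Real.sqrt_inv] at h3

end St9

namespace St9

noncomputable def f : ℝ → ℝ := (ofScalars ℝ ac).sum
noncomputable def Lg : ℝ → ℝ := fun t => Real.log (2 / (1 + Real.sqrt (1 - 4*t)))

lemma ac_succ (n : ℕ) : ((n:ℝ)+1) * ac (n+1) = cb (n+1) / 2 := by
  rw [ac, cb, if_neg (Nat.succ_ne_zero n)]
  have hne : ((n:ℝ)+1) ≠ 0 := by positivity
  push_cast
  field_simp

lemma f_deriv (t : ℝ) (ht : |t| < 1/4) :
    HasDerivAt f (2 / (Real.sqrt (1-4*t) * (1 + Real.sqrt (1-4*t)))) t := by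
  obtain ⟨hs, hder, hd⟩ := trio ac ac_rad ht
  have hh : (ofScalars ℝ ac).sum = f := rfl
  rw [hh] at hs hder hd
  set s := Real.sqrt (1-4*t) with hsdef
  have hpos : 0 < 1 - 4*t := by rw [abs_lt] at ht; linarith
  have hs_pos : 0 < s := Real.sqrt_pos.2 hpos
  have hs_sq : s^2 = 1 - 4*t := Real.sq_sqrt hpos.le
  suffices hval : deriv f t = 2 / (s * (1+s)) by rw [← hval]; exact hder
  rcases eq_or_ne t 0 with rfl | ht0
  · have hs1 : s = 1 := by rw [hsdef]; norm_num
    have hone := hasSum_single (f := fun n : ℕ => ((n:ℝ)+1) * ac (n+1) * (0:ℝ)^n) 0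
      (by intro b hb; simp [zero_pow hb])
    have h1 : deriv f 0 = ((0:ℕ):ℝ)/1 + 1 * ac 1 * (0:ℝ)^0 := by
      have := hd.unique hone
      rw [this]; push_cast; ring
    rw [h1, hs1]
    norm_num [ac, Nat.centralBinom]
  · obtain ⟨hcs, -, -⟩ := trio cb cb_rad ht
    have hh2 : (ofScalars ℝ cb).sum t = h t := rfl
    have hcs' : HasSum (fun n : ℕ => cb n * t^n)
        ((h t - 1) + ∑ i ∈ Finset.range 1, cb i * t^i) := by
      have hr1 : ∑ i ∈ Finset.range 1, cb i * t^i = 1 := by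
        norm_num [cb, Nat.centralBinom]
      rw [hr1]
      have : (h t - 1) + 1 = h t := by ring
      rw [this, ← hh2]
      exact hcs
    have hshift := (hasSum_nat_add_iff 1).2 hcs'
    have hdiv := hshift.mul_left (1/(2*t))
    have heq2 : (fun n : ℕ => (1/(2*t)) * (cb (n+1) * t^(n+1))) =
        fun n : ℕ => ((n:ℝ)+1) * ac (n+1) * t^n := by
      funext n
      rw [ac_succ n, pow_succ]
      field_simp
    rw [heq2] at hdiv
    have hval2 : deriv f t = (1/(2*t)) * (h t - 1) := hd.unique hdiv
    rw [hval2, h_eq t ht, ← hsdef]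
    have h1s : s * (1+s) ≠ 0 := by positivity
    have hsne : s ≠ 0 := hs_pos.ne'
    have h1sne : (1:ℝ) + s ≠ 0 := by positivity
    field_simp
    linear_combination (-1 : ℝ) * hs_sq

lemma Lg_deriv (t : ℝ) (ht : |t| < 1/4) :
    HasDerivAt Lg (2 / (Real.sqrt (1-4*t) * (1 + Real.sqrt (1-4*t)))) t := by
  have hpos : 0 < 1 - 4*t := by rw [abs_lt] at ht; linarith
  set s := Real.sqrt (1-4*t) with hsdef
  have hs_pos : 0 < s := Real.sqrt_pos.2 hpos
  have d0 : HasDerivAt (fun u : ℝ => 1 - 4*u) (-4) t := by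
    simpa using ((hasDerivAt_id t).const_mul (4:ℝ)).const_sub 1
  have d1 : HasDerivAt (fun u : ℝ => Real.sqrt (1 - 4*u)) (1/(2*s) * (-4)) t :=
    (Real.hasDerivAt_sqrt (ne_of_gt hpos)).comp t d0
  have d2 : HasDerivAt (fun u : ℝ => 1 + Real.sqrt (1-4*u)) (1/(2*s) * (-4)) t := by
    simpa using d1.const_add 1
  have hne : (1:ℝ) + s ≠ 0 := by positivity
  have d3 : HasDerivAt (fun u : ℝ => Real.log (1 + Real.sqrt (1-4*u)))
      ((1+s)⁻¹ * (1/(2*s) * (-4))) t := by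
    have := (Real.hasDerivAt_log hne).comp t d2
    exact this
  have hLg : Lg = fun u : ℝ => Real.log 2 - Real.log (1 + Real.sqrt (1-4*u)) := by
    funext u
    rw [Lg, Real.log_div two_ne_zero (by positivity)]
  rw [hLg]
  have d4 := d3.const_sub (Real.log 2)
  refine d4.congr_deriv ?_
  field_simp
  ring

lemma f_eq_Lg (t : ℝ) (ht : |t| < 1/4) : f t = Lg t := by
  have hzero : ∀ x : ℝ, |x| < 1/4 → HasDerivAt (fun u => f u - Lg u) 0 x := by
    intro x hx
    have := (f_deriv x hx).sub (Lg_deriv x hx)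
    rwa [sub_self] at this
  have hc := const_on _ hzero ht
  have hf0 : f 0 = 0 := by
    obtain ⟨hs, -, -⟩ := trio ac ac_rad (y := 0) (by norm_num)
    have hone := hasSum_single (f := fun n : ℕ => ac n * (0:ℝ)^n) 0
      (by intro b hb; simp [zero_pow hb])
    have h1 : f 0 = ac 0 * (0:ℝ)^0 := hs.unique hone
    rw [h1]
    norm_num [ac]
  have hL0 : Lg 0 = 0 := by
    rw [Lg]
    norm_num
  have h2 : f t - Lg t = 0 := by simpa [hf0, hL0] using hc
  linarith

lemma ac_fact (m : ℕ) : St9.ac (m+1) =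
    (Nat.factorial (2*(m+1)-1) : ℝ) / ((Nat.factorial (m+1):ℝ))^2 := by
  rw [ac, if_neg (Nat.succ_ne_zero m)]
  have hnat : Nat.centralBinom (m+1) * ((m+1).factorial * (m+1).factorial)
      = (2*(m+1)) * (2*m+1).factorial := by
    have h1 := Nat.choose_mul_factorial_mul_factorial (show m+1 ≤ 2*(m+1) by omega)
    rw [show 2*(m+1) - (m+1) = m+1 from by omega] at h1
    have h2 : (2*(m+1)).factorial = (2*(m+1)) * (2*m+1).factorial := by
      rw [show 2*(m+1) = (2*m+1)+1 from by omega, Nat.factorial_succ]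
    calc Nat.centralBinom (m+1) * ((m+1).factorial * (m+1).factorial)
        = (2*(m+1)).choose (m+1) * (m+1).factorial * (m+1).factorial := by
          rw [Nat.centralBinom_eq_two_mul_choose, mul_assoc]
      _ = (2*(m+1)).factorial := h1
      _ = (2*(m+1)) * (2*m+1).factorial := h2
  have hR : (Nat.centralBinom (m+1) : ℝ) * ((Nat.factorial (m+1):ℝ) * (Nat.factorial (m+1):ℝ))
      = (2*((m:ℝ)+1)) * (Nat.factorial (2*m+1) : ℝ) := by exact_mod_cast hnat
  rw [show 2*(m+1)-1 = 2*m+1 from by omega]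
  push_cast
  rw [div_eq_div_iff (by positivity) (by positivity)]
  linear_combination hR

end St9

/-- For every real `y` with `|y| < 1/4`, the series
`Σ_{m=1}^∞ ((2m-1)!/(m!)²) yᵐ` converges with sum `log(2/(1 + √(1-4y)))`. -/
theorem statement9 (y : ℝ) (hy : |y| < 1 / 4) :
    HasSum
      (fun m : ℕ =>
        ((Nat.factorial (2 * (m + 1) - 1) : ℝ) /
          ((Nat.factorial (m + 1) : ℝ)) ^ 2) * y ^ (m + 1))
      (Real.log (2 / (1 + Real.sqrt (1 - 4 * y)))) := by
  obtain ⟨hs, -, -⟩ := St9.trio St9.ac St9.ac_rad hy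
  have hh : (FormalMultilinearSeries.ofScalars ℝ St9.ac).sum = St9.f := rfl
  rw [hh] at hs
  have hs' : HasSum (fun n : ℕ => St9.ac n * y^n)
      (St9.f y + ∑ i ∈ Finset.range 1, St9.ac i * y^i) := by
    have h0 : ∑ i ∈ Finset.range 1, St9.ac i * y^i = 0 := by norm_num [St9.ac]
    rw [h0, add_zero]
    exact hs
  have hshift := (hasSum_nat_add_iff 1).2 hs'
  have hfun : (fun m : ℕ => ((Nat.factorial (2*(m+1)-1) : ℝ) /
      ((Nat.factorial (m+1):ℝ))^2) * y^(m+1))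
      = fun n : ℕ => St9.ac (n+1) * y^(n+1) := by
    funext m
    rw [St9.ac_fact m]
  have hval : St9.f y = Real.log (2 / (1 + Real.sqrt (1 - 4*y))) := St9.f_eq_Lg y hy
  rw [hfun, ← hval]
  exact hshift
end

section
/- (i) For each r ∈ {0, 1} and all integers m_0, m_1 ≥ 0: P̃_r(m_0, m_1)·G̃(m_0, m_1) = Q̃_r(m_0 − u_r, m_1 − v_r)·G̃(m_0 − u_r, m_1 − v_r); that is, g̃_0(x̃_1) = Σ_{m≥0} c_m x̃_1^m is annihilated by both 𝓛̃_0 and 𝓛̃_1'. (ii) Define h̃(0, m) = c_m·(k·H_{km} − Σ_{i=1}^n w_i·H_{w_i m}) for m ≥ 1 and h̃ = 0 otherwise. Then for each r ∈ {0, 1} and all integers m_0, m_1 ≥ 0: P̃_r(m_0,m_1)·h̃(m_0,m_1) + (∂P̃_r/∂t)(m_0,m_1)·G̃(m_0,m_1) = Q̃_r(m_0−u_r, m_1−v_r)·h̃(m_0−u_r, m_1−v_r) + (∂Q̃_r/∂t)(m_0−u_r, m_1−v_r)·G̃(m_0−u_r, m_1−v_r); that is, g̃_1^{(1)} = log x̃_1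 · g̃_0(x̃_1) + Σ_{m≥1} h̃(0, m) x̃_1^m is a logarithmic solution of the system 𝓛̃_0 S = 𝓛̃_1' S = 0. -/
open MvPolynomial

set_option maxHeartbeats 1000000

lemma aux_prod_shift (N a : ℕ) :
    ∏ j ∈ Finset.range a, ((N : ℚ) + 1 + j) =
      (Nat.factorial (N + a) : ℚ) / (Nat.factorial N : ℚ) := by
  induction a with
  | zero => simp [div_self, Nat.cast_ne_zero.mpr (Nat.factorial_ne_zero N)]
  | succ a ih =>
      rw [Finset.prod_range_succ, ih, show N + (a+1) = (N+a)+1 from rfl,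
        Nat.factorial_succ]
      have h1 : (Nat.factorial N : ℚ) ≠ 0 := Nat.cast_ne_zero.mpr (Nat.factorial_ne_zero N)
      field_simp
      push_cast; ring

lemma aux_prod_fall (N a : ℕ) :
    ∏ j ∈ Finset.range a, ((↑(N + a) : ℚ) - j) =
      (Nat.factorial (N + a) : ℚ) / (Nat.factorial N : ℚ) := by
  rw [← aux_prod_shift N a, ← Finset.prod_range_reflect]
  apply Finset.prod_congr rfl
  intro j hj
  rw [Finset.mem_range] at hj
  have h2 : ((a - 1 - j : ℕ) : ℚ) = (a : ℚ) - (j + 1) := by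
    have h3 : a - 1 - j = a - (j + 1) := by omega
    rw [h3, Nat.cast_sub hj]
    push_cast; ring
  rw [h2]
  push_cast
  ring

lemma aux_sum_fall (N a : ℕ) :
    ∑ j ∈ Finset.range a, (1 : ℚ) / ((↑(N + a) : ℚ) - j) =
      ∑ j ∈ Finset.range a, (1 : ℚ) / ((N : ℚ) + 1 + j) := by
  rw [← Finset.sum_range_reflect]
  apply Finset.sum_congr rfl
  intro j hj
  rw [Finset.mem_range] at hj
  have h2 : ((a - 1 - j : ℕ) : ℚ) = (a : ℚ) - (j + 1) := by
    have h3 : a - 1 - j = a - (j + 1) := by omega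
    rw [h3, Nat.cast_sub hj]
    push_cast; ring
  rw [h2]
  congr 1
  push_cast
  ring

lemma aux_prod_Icc_s13 (g : ℕ → ℚ) (a : ℕ) :
    ∏ j ∈ Finset.Icc 1 a, g j = ∏ j ∈ Finset.range a, g (j + 1) := by
  induction a with
  | zero => simp
  | succ a ih =>
      rw [Finset.prod_Icc_succ_top (by omega), ih, Finset.prod_range_succ]

lemma aux_sum_Icc (g : ℕ → ℚ) (a : ℕ) :
    ∑ j ∈ Finset.Icc 1 a, g j = ∑ j ∈ Finset.range a, g (j + 1) := by
  induction a with
  | zero => simp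
  | succ a ih =>
      rw [Finset.sum_Icc_succ_top (by omega), ih, Finset.sum_range_succ]

lemma aux_eval_pderiv_prod {ι : Type*} [DecidableEq ι] (s : Finset ι)
    (f : ι → MvPolynomial (Fin 2) ℚ) (pt : Fin 2 → ℚ)
    (h0 : ∀ i ∈ s, eval pt (f i) ≠ 0) :
    eval pt (pderiv 1 (∏ i ∈ s, f i)) =
      (∏ i ∈ s, eval pt (f i)) *
        ∑ i ∈ s, eval pt (pderiv 1 (f i)) / eval pt (f i) := by
  induction s using Finset.induction_on with
  | empty => simp
  | @insert a s ha ih =>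
      rw [Finset.prod_insert ha, pderiv_mul, map_add, map_mul, map_mul,
        Finset.prod_insert ha, Finset.sum_insert ha,
        ih (fun i hi => h0 i (Finset.mem_insert_of_mem hi)), MvPolynomial.eval_prod]
      have hfa : eval pt (f a) ≠ 0 := h0 a (Finset.mem_insert_self a s)
      field_simp

/-- In the second phase (variables `x̃₀, x̃₁`, operators encoded by
`P̃_r, Q̃_r` with shifts `(1,0)` and `(0,1)`):
(i) `g̃₀(x̃₁) = Σ_{m≥0} c_m x̃₁ᵐ` (coefficients `G̃`) is annihilated by both `𝓛̃₀`
and `𝓛̃₁'`; (ii) with `h̃(0,m) = c_m·(k·H_{km} - Σ_{i=1}^n wᵢ·H_{wᵢm})` for `m ≥ 1`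
(zero otherwise), `g̃₁⁽¹⁾ = log x̃₁ · g̃₀ + Σ_{m≥1} h̃(0,m) x̃₁ᵐ` is a logarithmic
solution of the system `𝓛̃₀ S = 𝓛̃₁' S = 0`. -/
theorem statement13
    (n : ℕ) (κ : Fin (n + 2) → ℕ) (hκ : ∀ i, 0 < κ i)
    (hsum : ∑ i, (1 : ℚ) / (κ i : ℚ) = 1)
    (k : ℕ) (hk : k = Finset.univ.lcm κ)
    (w : Fin (n + 2) → ℕ) (hw : ∀ i, w i = k / κ i)
    (c : ℕ → ℚ)
    (hc : ∀ m, c m = (Nat.factorial (k * m) : ℚ) /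
      ∏ i, (Nat.factorial (w i * m) : ℚ))
    (H : ℕ → ℚ) (hH : ∀ N, H N = ∑ j ∈ Finset.range N, (1 : ℚ) / (j + 1))
    (P Q : Fin 2 → MvPolynomial (Fin 2) ℚ)
    (hP0 : P 0 = (X 0 + C (w 0 : ℚ) * X 1) * X 0)
    (hQ0 : Q 0 = (1 + X 0 + C (k : ℚ) * X 1) * X 0)
    (hP1 : P 1 = (∏ j ∈ Finset.range (w 0),
        (X 0 + C (w 0 : ℚ) * X 1 - C (j : ℚ))) *
      ∏ i ∈ Finset.univ.erase 0, ∏ j ∈ Finset.range (w i),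
        (C (w i : ℚ) * X 1 - C (j : ℚ)))
    (hQ1 : Q 1 = ∏ j ∈ Finset.Icc 1 k, (X 0 + C (k : ℚ) * X 1 + C (j : ℚ)))
    (u v : Fin 2 → ℕ) (hu : u = ![1, 0]) (hv : v = ![0, 1])
    (G : ℤ → ℤ → ℚ)
    (hG : ∀ p q : ℤ, G p q = if p = 0 ∧ 0 ≤ q then c q.toNat else 0)
    (h : ℤ → ℤ → ℚ)
    (hh : ∀ p q : ℤ, h p q =
      if p = 0 ∧ 1 ≤ q then
        c q.toNat * ((k : ℚ) * H (k * q.toNat) -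
          ∑ i, (w i : ℚ) * H (w i * q.toNat))
      else 0) :
    (∀ r : Fin 2, ∀ m0 m1 : ℕ,
      MvPolynomial.eval ![(m0 : ℚ), (m1 : ℚ)] (P r) * G (m0 : ℤ) (m1 : ℤ) =
        MvPolynomial.eval ![(m0 : ℚ) - (u r : ℚ), (m1 : ℚ) - (v r : ℚ)] (Q r) *
          G ((m0 : ℤ) - (u r : ℤ)) ((m1 : ℤ) - (v r : ℤ))) ∧
    (∀ r : Fin 2, ∀ m0 m1 : ℕ,
      MvPolynomial.eval ![(m0 : ℚ), (m1 : ℚ)] (P r) * h (m0 : ℤ) (m1 : ℤ) +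
          MvPolynomial.eval ![(m0 : ℚ), (m1 : ℚ)] (pderiv 1 (P r)) *
            G (m0 : ℤ) (m1 : ℤ) =
        MvPolynomial.eval ![(m0 : ℚ) - (u r : ℚ), (m1 : ℚ) - (v r : ℚ)] (Q r) *
            h ((m0 : ℤ) - (u r : ℤ)) ((m1 : ℤ) - (v r : ℤ)) +
          MvPolynomial.eval ![(m0 : ℚ) - (u r : ℚ), (m1 : ℚ) - (v r : ℚ)]
              (pderiv 1 (Q r)) *
            G ((m0 : ℤ) - (u r : ℤ)) ((m1 : ℤ) - (v r : ℤ))) := by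
  classical
  have hkdvd : ∀ i, κ i ∣ k := fun i => hk ▸ Finset.dvd_lcm (Finset.mem_univ i)
  have hkpos : 0 < k := by
    rcases Nat.eq_zero_or_pos k with h0 | hpos
    · exfalso
      rw [hk] at h0
      obtain ⟨i, -, hi⟩ := Finset.lcm_eq_zero_iff.mp h0
      exact (hκ i).ne' hi
    · exact hpos
  have hwk : ∀ i, w i * κ i = k := fun i => by
    rw [hw]; exact Nat.div_mul_cancel (hkdvd i)
  have hwpos : ∀ i, 0 < w i := by
    intro i
    rcases Nat.eq_zero_or_pos (w i) with h0 | hpos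
    · exfalso; have := hwk i; rw [h0, zero_mul] at this; omega
    · exact hpos
  have hfne : ∀ N : ℕ, ((Nat.factorial N : ℚ)) ≠ 0 :=
    fun N => Nat.cast_ne_zero.mpr (Nat.factorial_ne_zero N)
  have h10 : (1 : Fin (n+2)) ≠ 0 := by simp [Fin.ext_iff]
  -- values of G and h
  have hG00 : ∀ q : ℕ, G 0 (q : ℤ) = c q := by intro q; rw [hG]; simp
  have hGp : ∀ p q : ℤ, p ≠ 0 → G p q = 0 := by intro p q hp; rw [hG]; simp [hp]
  have hGneg : ∀ p q : ℤ, q < 0 → G p q = 0 := by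
    intro p q hq; rw [hG]; simp [not_le.mpr hq]
  have hhp : ∀ p q : ℤ, p ≠ 0 → h p q = 0 := by intro p q hp; rw [hh]; simp [hp]
  have hhneg : ∀ p q : ℤ, q < 1 → h p q = 0 := by
    intro p q hq; rw [hh]; simp [not_le.mpr hq]
  have hH0 : H 0 = 0 := by rw [hH]; simp
  have hh0 : ∀ q : ℕ, h 0 (q : ℤ) =
      c q * ((k : ℚ) * H (k * q) - ∑ i, (w i : ℚ) * H (w i * q)) := by
    intro q
    rcases Nat.eq_zero_or_pos q with rfl | hq
    · rw [Nat.cast_zero, hhneg 0 0 (by norm_num)]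
      simp [hH0]
    · rw [hh]
      simp [Int.toNat_natCast, show (1 : ℤ) ≤ (q : ℤ) from by exact_mod_cast hq]
  have hG01 : ∀ s : ℕ, G 0 ((s : ℤ) + 1) = c (s + 1) := by
    intro s; have := hG00 (s + 1); push_cast at this; exact this
  have hh01 : ∀ s : ℕ, h 0 ((s : ℤ) + 1) =
      c (s + 1) * ((k : ℚ) * H (k * (s + 1)) - ∑ i, (w i : ℚ) * H (w i * (s + 1))) := by
    intro s; have := hh0 (s + 1); push_cast at this; exact this
  -- harmonic differences
  have hHdiff : ∀ N a : ℕ, H (N + a) - H N =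
      ∑ j ∈ Finset.range a, (1 : ℚ) / ((N : ℚ) + 1 + j) := by
    intro N a
    rw [hH, hH, Finset.sum_range_add, add_sub_cancel_left]
    refine Finset.sum_congr rfl fun j _ => ?_
    push_cast
    ring_nf
  -- evaluation of P 1 and Q 1 at points (0, t)
  have evalP1 : ∀ t : ℚ, eval ![0, t] (P 1)
      = ∏ i, ∏ j ∈ Finset.range (w i), ((w i : ℚ) * t - (j : ℚ)) := by
    intro t
    rw [hP1, map_mul, ← Finset.mul_prod_erase Finset.univ _ (Finset.mem_univ 0)]
    congr 1
    · rw [MvPolynomial.eval_prod]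
      exact Finset.prod_congr rfl fun j _ => by simp
    · rw [MvPolynomial.eval_prod]
      refine Finset.prod_congr rfl fun i _ => ?_
      rw [MvPolynomial.eval_prod]
      exact Finset.prod_congr rfl fun j _ => by simp
  have evalQ1 : ∀ t : ℚ, eval ![0, t] (Q 1)
      = ∏ j ∈ Finset.Icc 1 k, ((k : ℚ) * t + (j : ℚ)) := by
    intro t
    rw [hQ1, MvPolynomial.eval_prod]
    exact Finset.prod_congr rfl fun j _ => by simp
  -- factorial values at integer points
  have hEi : ∀ s : ℕ, ∀ i, ∏ j ∈ Finset.range (w i), ((w i : ℚ) * ((s : ℚ) + 1) - (j : ℚ))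
      = (Nat.factorial (w i * (s + 1)) : ℚ) / (Nat.factorial (w i * s) : ℚ) := by
    intro s i
    have h1 : w i * s + w i = w i * (s + 1) := by ring
    rw [show (Nat.factorial (w i * (s+1)) : ℚ) / (Nat.factorial (w i * s) : ℚ)
        = (Nat.factorial (w i * s + w i) : ℚ) / (Nat.factorial (w i * s) : ℚ) by rw [h1],
      ← aux_prod_fall (w i * s) (w i)]
    refine Finset.prod_congr rfl fun j _ => ?_
    rw [h1]
    push_cast
    ring
  have hP1fact : ∀ s : ℕ, eval ![0, (s : ℚ) + 1] (P 1)
      = ∏ i, ((Nat.factorial (w i * (s + 1)) : ℚ) / (Nat.factorial (w i * s) : ℚ)) := by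
    intro s
    rw [evalP1]
    exact Finset.prod_congr rfl fun i _ => hEi s i
  have hQ1fact : ∀ s : ℕ, eval ![0, (s : ℚ)] (Q 1)
      = (Nat.factorial (k * (s + 1)) : ℚ) / (Nat.factorial (k * s) : ℚ) := by
    intro s
    rw [evalQ1]
    have h1 : k * s + k = k * (s + 1) := by ring
    rw [aux_prod_Icc_s13 (fun j => (k : ℚ) * (s : ℚ) + (j : ℚ)) k,
      show (Nat.factorial (k * (s+1)) : ℚ) / (Nat.factorial (k * s) : ℚ)
        = (Nat.factorial (k * s + k) : ℚ) / (Nat.factorial (k * s) : ℚ) by rw [h1],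
      ← aux_prod_shift (k * s) k]
    refine Finset.prod_congr rfl fun j _ => ?_
    push_cast
    ring
  -- the key recurrence among the c_m
  have key : ∀ s : ℕ, eval ![0, (s : ℚ) + 1] (P 1) * c (s + 1)
      = eval ![0, (s : ℚ)] (Q 1) * c s := by
    intro s
    rw [hP1fact, hQ1fact, hc, hc, Finset.prod_div_distrib]
    have hp0 : (∏ i, (Nat.factorial (w i * s) : ℚ)) ≠ 0 :=
      Finset.prod_ne_zero_iff.mpr fun i _ => hfne _
    have hp1 : (∏ i, (Nat.factorial (w i * (s + 1)) : ℚ)) ≠ 0 :=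
      Finset.prod_ne_zero_iff.mpr fun i _ => hfne _
    field_simp
  -- nonvanishing of linear factors at positive points
  have hne : ∀ s : ℕ, ∀ i, ∀ j ∈ Finset.range (w i),
      ((w i : ℚ) * ((s : ℚ) + 1) - (j : ℚ)) ≠ 0 := by
    intro s i j hj
    rw [Finset.mem_range] at hj
    have h1 : (j : ℚ) < (w i : ℚ) := by exact_mod_cast hj
    have h2 : (w i : ℚ) ≤ (w i : ℚ) * ((s : ℚ) + 1) := by
      have : (0 : ℚ) ≤ (w i : ℚ) * (s : ℚ) := by positivity
      nlinarith
    exact ne_of_gt (by linarith)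
  have hneQ : ∀ s : ℕ, ∀ j ∈ Finset.Icc 1 k, ((k : ℚ) * (s : ℚ) + (j : ℚ)) ≠ 0 := by
    intro s j hj
    rw [Finset.mem_Icc] at hj
    have h1 : (1 : ℚ) ≤ (j : ℚ) := by exact_mod_cast hj.1
    have : (0 : ℚ) ≤ (k : ℚ) * (s : ℚ) := by positivity
    positivity
  -- derivative of P 1 evaluated at (0, s+1)
  have hdInner : ∀ s : ℕ, ∀ i,
      eval ![0, (s : ℚ) + 1] (pderiv 1 (∏ j ∈ Finset.range (w i),
        (C (w i : ℚ) * X 1 - C (j : ℚ))))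
      = (∏ j ∈ Finset.range (w i), ((w i : ℚ) * ((s : ℚ) + 1) - (j : ℚ)))
        * ∑ j ∈ Finset.range (w i), (w i : ℚ) / ((w i : ℚ) * ((s : ℚ) + 1) - (j : ℚ)) := by
    intro s i
    rw [aux_eval_pderiv_prod _ _ _ (fun j hj => by simpa using hne s i j hj)]
    congr 1
    · exact Finset.prod_congr rfl fun j _ => by simp
    · refine Finset.sum_congr rfl fun j hj => ?_
      have e1 : eval ![0, (s : ℚ) + 1] (pderiv 1 (C (w i : ℚ) * X 1 - C (j : ℚ)))
          = (w i : ℚ) := by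
        simp [pderiv_C_mul, pderiv_X_self]
      have e2 : eval ![0, (s : ℚ) + 1] (C (w i : ℚ) * X 1 - C (j : ℚ))
          = (w i : ℚ) * ((s : ℚ) + 1) - (j : ℚ) := by simp
      rw [e1, e2]
  have hdFirst : ∀ s : ℕ,
      eval ![0, (s : ℚ) + 1] (pderiv 1 (∏ j ∈ Finset.range (w 0),
        (X 0 + C (w 0 : ℚ) * X 1 - C (j : ℚ))))
      = (∏ j ∈ Finset.range (w 0), ((w 0 : ℚ) * ((s : ℚ) + 1) - (j : ℚ)))
        * ∑ j ∈ Finset.range (w 0), (w 0 : ℚ) / ((w 0 : ℚ) * ((s : ℚ) + 1) - (j : ℚ)) := by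
    intro s
    rw [aux_eval_pderiv_prod _ _ _ (fun j hj => by simpa using hne s 0 j hj)]
    congr 1
    · exact Finset.prod_congr rfl fun j _ => by simp
    · refine Finset.sum_congr rfl fun j hj => ?_
      have e1 : eval ![0, (s : ℚ) + 1] (pderiv 1 (X 0 + C (w 0 : ℚ) * X 1 - C (j : ℚ)))
          = (w 0 : ℚ) := by
        simp [pderiv_C_mul, pderiv_X_self, pderiv_X_of_ne (show (0 : Fin 2) ≠ 1 by decide)]
      have e2 : eval ![0, (s : ℚ) + 1] (X 0 + C (w 0 : ℚ) * X 1 - C (j : ℚ))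
          = (w 0 : ℚ) * ((s : ℚ) + 1) - (j : ℚ) := by simp
      rw [e1, e2]
  have hdP1 : ∀ s : ℕ, eval ![0, (s : ℚ) + 1] (pderiv 1 (P 1))
      = (∏ i, ∏ j ∈ Finset.range (w i), ((w i : ℚ) * ((s : ℚ) + 1) - (j : ℚ)))
        * ∑ i, ∑ j ∈ Finset.range (w i),
            (w i : ℚ) / ((w i : ℚ) * ((s : ℚ) + 1) - (j : ℚ)) := by
    intro s
    have hinner_ne : ∀ i ∈ Finset.univ.erase (0 : Fin (n+2)),
        eval ![0, (s : ℚ) + 1] (∏ j ∈ Finset.range (w i),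
          (C (w i : ℚ) * X 1 - C (j : ℚ))) ≠ 0 := by
      intro i _
      rw [MvPolynomial.eval_prod]
      refine Finset.prod_ne_zero_iff.mpr fun j hj => ?_
      simpa using hne s i j hj
    have hinner_val : ∀ i, eval ![0, (s : ℚ) + 1] (∏ j ∈ Finset.range (w i),
          (C (w i : ℚ) * X 1 - C (j : ℚ)))
        = ∏ j ∈ Finset.range (w i), ((w i : ℚ) * ((s : ℚ) + 1) - (j : ℚ)) := by
      intro i
      rw [MvPolynomial.eval_prod]
      exact Finset.prod_congr rfl fun j _ => by simp
    have hB : eval ![0, (s : ℚ) + 1] (pderiv 1 (∏ i ∈ Finset.univ.erase 0,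
        ∏ j ∈ Finset.range (w i), (C (w i : ℚ) * X 1 - C (j : ℚ))))
        = (∏ i ∈ Finset.univ.erase 0,
            ∏ j ∈ Finset.range (w i), ((w i : ℚ) * ((s : ℚ) + 1) - (j : ℚ)))
          * ∑ i ∈ Finset.univ.erase 0, ∑ j ∈ Finset.range (w i),
              (w i : ℚ) / ((w i : ℚ) * ((s : ℚ) + 1) - (j : ℚ)) := by
      rw [aux_eval_pderiv_prod _ _ _ hinner_ne]
      congr 1
      · exact Finset.prod_congr rfl fun i _ => hinner_val i
      · refine Finset.sum_congr rfl fun i hi => ?_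
        have hPne : (∏ j ∈ Finset.range (w i), ((w i : ℚ) * ((s : ℚ) + 1) - (j : ℚ))) ≠ 0 :=
          Finset.prod_ne_zero_iff.mpr fun j hj => hne s i j hj
        rw [hdInner s i, hinner_val i, mul_div_cancel_left₀ _ hPne]
    have hA0 : eval ![0, (s : ℚ) + 1] (∏ j ∈ Finset.range (w 0),
          (X 0 + C (w 0 : ℚ) * X 1 - C (j : ℚ)))
        = ∏ j ∈ Finset.range (w 0), ((w 0 : ℚ) * ((s : ℚ) + 1) - (j : ℚ)) := by
      rw [MvPolynomial.eval_prod]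
      exact Finset.prod_congr rfl fun j _ => by simp
    have hB0 : eval ![0, (s : ℚ) + 1] (∏ i ∈ Finset.univ.erase 0,
          ∏ j ∈ Finset.range (w i), (C (w i : ℚ) * X 1 - C (j : ℚ)))
        = ∏ i ∈ Finset.univ.erase 0,
            ∏ j ∈ Finset.range (w i), ((w i : ℚ) * ((s : ℚ) + 1) - (j : ℚ)) := by
      rw [MvPolynomial.eval_prod]
      exact Finset.prod_congr rfl fun i _ => hinner_val i
    rw [hP1, pderiv_mul, map_add, map_mul, map_mul, hdFirst s, hB, hA0, hB0,
      ← Finset.mul_prod_erase Finset.univ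
        (fun i => ∏ j ∈ Finset.range (w i), ((w i : ℚ) * ((s : ℚ) + 1) - (j : ℚ)))
        (Finset.mem_univ 0),
      ← Finset.add_sum_erase Finset.univ
        (fun i => ∑ j ∈ Finset.range (w i),
          (w i : ℚ) / ((w i : ℚ) * ((s : ℚ) + 1) - (j : ℚ)))
        (Finset.mem_univ 0)]
    ring
  -- derivative of Q 1 evaluated at (0, s)
  have hdQ1 : ∀ s : ℕ, eval ![0, (s : ℚ)] (pderiv 1 (Q 1))
      = (∏ j ∈ Finset.Icc 1 k, ((k : ℚ) * (s : ℚ) + (j : ℚ)))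
        * ∑ j ∈ Finset.Icc 1 k, (k : ℚ) / ((k : ℚ) * (s : ℚ) + (j : ℚ)) := by
    intro s
    rw [hQ1, aux_eval_pderiv_prod _ _ _ (fun j hj => by simpa using hneQ s j hj)]
    congr 1
    · exact Finset.prod_congr rfl fun j _ => by simp
    · refine Finset.sum_congr rfl fun j hj => ?_
      have e1 : eval ![0, (s : ℚ)] (pderiv 1 (X 0 + C (k : ℚ) * X 1 + C (j : ℚ)))
          = (k : ℚ) := by
        simp [pderiv_C_mul, pderiv_X_self, pderiv_X_of_ne (show (0 : Fin 2) ≠ 1 by decide)]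
      have e2 : eval ![0, (s : ℚ)] (X 0 + C (k : ℚ) * X 1 + C (j : ℚ))
          = (k : ℚ) * (s : ℚ) + (j : ℚ) := by simp
      rw [e1, e2]
  -- sums of reciprocals expressed via H
  have hSP : ∀ s : ℕ, ∀ i, ∑ j ∈ Finset.range (w i),
      (w i : ℚ) / ((w i : ℚ) * ((s : ℚ) + 1) - (j : ℚ))
      = (w i : ℚ) * (H (w i * (s + 1)) - H (w i * s)) := by
    intro s i
    have h1 : ∑ j ∈ Finset.range (w i), (w i : ℚ) / ((w i : ℚ) * ((s : ℚ) + 1) - (j : ℚ))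
        = (w i : ℚ) * ∑ j ∈ Finset.range (w i),
            (1 : ℚ) / ((w i : ℚ) * ((s : ℚ) + 1) - (j : ℚ)) := by
      rw [Finset.mul_sum]
      exact Finset.sum_congr rfl fun j _ => by ring
    rw [h1]
    congr 1
    have h2 : ∑ j ∈ Finset.range (w i), (1 : ℚ) / ((w i : ℚ) * ((s : ℚ) + 1) - (j : ℚ))
        = ∑ j ∈ Finset.range (w i), (1 : ℚ) / ((↑(w i * s + w i) : ℚ) - (j : ℚ)) := by
      refine Finset.sum_congr rfl fun j _ => ?_
      congr 1
      push_cast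
      ring
    rw [h2, aux_sum_fall (w i * s) (w i), show w i * (s+1) = w i * s + w i by ring,
      hHdiff (w i * s) (w i)]
  have hSQ : ∀ s : ℕ, ∑ j ∈ Finset.Icc 1 k, (k : ℚ) / ((k : ℚ) * (s : ℚ) + (j : ℚ))
      = (k : ℚ) * (H (k * (s + 1)) - H (k * s)) := by
    intro s
    have h1 : ∑ j ∈ Finset.Icc 1 k, (k : ℚ) / ((k : ℚ) * (s : ℚ) + (j : ℚ))
        = (k : ℚ) * ∑ j ∈ Finset.Icc 1 k,
            (1 : ℚ) / ((k : ℚ) * (s : ℚ) + (j : ℚ)) := by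
      rw [Finset.mul_sum]
      exact Finset.sum_congr rfl fun j _ => by ring
    rw [h1]
    congr 1
    rw [aux_sum_Icc (fun j => (1 : ℚ) / ((k : ℚ) * (s : ℚ) + (j : ℚ))) k,
      show k * (s+1) = k * s + k by ring, hHdiff (k * s) k]
    refine Finset.sum_congr rfl fun j _ => ?_
    congr 1
    push_cast
    ring
  -- splitting of the weighted H sums
  have hsplit : ∀ s : ℕ, ∑ i, (w i : ℚ) * (H (w i * (s + 1)) - H (w i * s))
      = (∑ i, (w i : ℚ) * H (w i * (s + 1))) - ∑ i, (w i : ℚ) * H (w i * s) := by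
    intro s
    rw [← Finset.sum_sub_distrib]
    exact Finset.sum_congr rfl fun i _ => by ring
  -- zero lemmas for r = 0
  have hz1 : ∀ (m0 m1 : ℕ), (m0 : ℚ) * G (m0 : ℤ) (m1 : ℤ) = 0 := by
    intro m0 m1
    rcases Nat.eq_zero_or_pos m0 with rfl | hm
    · simp
    · rw [hGp _ _ (by exact_mod_cast hm.ne')]; ring
  have hz2 : ∀ (m0 m1 : ℕ), ((m0 : ℚ) - 1) * G ((m0 : ℤ) - 1) (m1 : ℤ) = 0 := by
    intro m0 m1
    rcases eq_or_ne m0 1 with rfl | hm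
    · norm_num
    · rw [hGp _ _ (by omega)]; ring
  have hz3 : ∀ (m0 m1 : ℕ), (m0 : ℚ) * h (m0 : ℤ) (m1 : ℤ) = 0 := by
    intro m0 m1
    rcases Nat.eq_zero_or_pos m0 with rfl | hm
    · simp
    · rw [hhp _ _ (by exact_mod_cast hm.ne')]; ring
  have hz4 : ∀ (m0 m1 : ℕ), ((m0 : ℚ) - 1) * h ((m0 : ℤ) - 1) (m1 : ℤ) = 0 := by
    intro m0 m1
    rcases eq_or_ne m0 1 with rfl | hm
    · norm_num
    · rw [hhp _ _ (by omega)]; ring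
  -- eval of P 1 at (0,0) vanishes
  have hP1zero : eval ![0, (0 : ℚ)] (P 1) = 0 := by
    rw [evalP1 0]
    refine Finset.prod_eq_zero (Finset.mem_univ 0) ?_
    refine Finset.prod_eq_zero (Finset.mem_range.mpr (hwpos 0)) ?_
    norm_num
  have hdP1zero : eval ![0, (0 : ℚ)] (pderiv 1 (P 1)) = 0 := by
    have hA0 : eval ![0, (0 : ℚ)] (∏ j ∈ Finset.range (w 0),
        (X 0 + C (w 0 : ℚ) * X 1 - C (j : ℚ))) = 0 := by
      rw [MvPolynomial.eval_prod]
      refine Finset.prod_eq_zero (Finset.mem_range.mpr (hwpos 0)) ?_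
      simp
    have hB0 : eval ![0, (0 : ℚ)] (∏ i ∈ Finset.univ.erase 0,
        ∏ j ∈ Finset.range (w i), (C (w i : ℚ) * X 1 - C (j : ℚ))) = 0 := by
      rw [MvPolynomial.eval_prod]
      refine Finset.prod_eq_zero (Finset.mem_erase.mpr ⟨h10, Finset.mem_univ 1⟩) ?_
      rw [MvPolynomial.eval_prod]
      refine Finset.prod_eq_zero (Finset.mem_range.mpr (hwpos 1)) ?_
      simp
    rw [hP1, pderiv_mul, map_add, map_mul, map_mul, hA0, hB0]
    ring
  constructor
  · -- part (i)
    intro r m0 m1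
    have hr : r = 0 ∨ r = 1 := by
      rcases r with ⟨rv, hrv⟩
      interval_cases rv
      · exact Or.inl rfl
      · exact Or.inr rfl
    rcases hr with rfl | rfl
    · -- r = 0
      simp only [hu, hv, hP0, hQ0, Fin.isValue, Matrix.cons_val_zero, Matrix.cons_val_one,
        Matrix.head_cons, Nat.cast_one, Nat.cast_zero, sub_zero,
        map_mul, map_add, map_one, eval_X, eval_C]
      have e1 := hz1 m0 m1
      have e2 := hz2 m0 m1
      linear_combination ((m0 : ℚ) + (w 0 : ℚ) * (m1 : ℚ)) * e1
        - (1 + ((m0 : ℚ) - 1) + (k : ℚ) * (m1 : ℚ)) * e2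
    · -- r = 1
      simp only [hu, hv, Fin.isValue, Matrix.cons_val_zero, Matrix.cons_val_one,
        Matrix.head_cons, Nat.cast_one, Nat.cast_zero, sub_zero]
      rcases Nat.eq_zero_or_pos m0 with rfl | hm0
      swap
      · rw [hGp _ _ (Int.natCast_ne_zero.mpr hm0.ne'), hGp _ _ (Int.natCast_ne_zero.mpr hm0.ne')]
        ring
      rcases Nat.eq_zero_or_pos m1 with rfl | hm1
      · norm_num
        rw [hGneg 0 (-1) (by norm_num), hP1zero]
        ring
      obtain ⟨s, rfl⟩ : ∃ s, m1 = s + 1 := ⟨m1 - 1, by omega⟩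
      push_cast
      rw [show ((s:ℚ) + 1 - 1) = (s:ℚ) by ring, show ((s:ℤ) + 1 - 1) = (s:ℤ) by ring,
        hG01 s, hG00 s]
      exact key s
  · -- part (ii)
    intro r m0 m1
    have hr : r = 0 ∨ r = 1 := by
      rcases r with ⟨rv, hrv⟩
      interval_cases rv
      · exact Or.inl rfl
      · exact Or.inr rfl
    rcases hr with rfl | rfl
    · -- r = 0
      have hdP0 : pderiv 1 ((X 0 + C (w 0 : ℚ) * X 1) * X 0 : MvPolynomial (Fin 2) ℚ)
          = C (w 0 : ℚ) * X 0 := by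
        simp only [pderiv_mul, map_add, pderiv_X_self,
          pderiv_X_of_ne (show (0 : Fin 2) ≠ 1 by decide), pderiv_C_mul, pderiv_C]
        ring
      have hdQ0 : pderiv 1 ((1 + X 0 + C (k : ℚ) * X 1) * X 0 : MvPolynomial (Fin 2) ℚ)
          = C (k : ℚ) * X 0 := by
        simp only [pderiv_mul, map_add, pderiv_X_self,
          pderiv_X_of_ne (show (0 : Fin 2) ≠ 1 by decide), pderiv_C_mul, pderiv_C, pderiv_one]
        ring
      simp only [hu, hv, hP0, hQ0, hdP0, hdQ0, Fin.isValue, Matrix.cons_val_zero,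
        Matrix.cons_val_one, Matrix.head_cons, Nat.cast_one, Nat.cast_zero, sub_zero,
        map_mul, map_add, map_one, eval_X, eval_C]
      have e1 := hz1 m0 m1
      have e2 := hz2 m0 m1
      have e3 := hz3 m0 m1
      have e4 := hz4 m0 m1
      linear_combination ((m0 : ℚ) + (w 0 : ℚ) * (m1 : ℚ)) * e3 + (w 0 : ℚ) * e1
        - (1 + ((m0 : ℚ) - 1) + (k : ℚ) * (m1 : ℚ)) * e4 - (k : ℚ) * e2
    · -- r = 1
      simp only [hu, hv, Fin.isValue, Matrix.cons_val_zero, Matrix.cons_val_one,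
        Matrix.head_cons, Nat.cast_one, Nat.cast_zero, sub_zero]
      rcases Nat.eq_zero_or_pos m0 with rfl | hm0
      swap
      · rw [hGp _ _ (Int.natCast_ne_zero.mpr hm0.ne'), hGp _ _ (Int.natCast_ne_zero.mpr hm0.ne'),
          hhp _ _ (Int.natCast_ne_zero.mpr hm0.ne'), hhp _ _ (Int.natCast_ne_zero.mpr hm0.ne')]
        ring
      rcases Nat.eq_zero_or_pos m1 with rfl | hm1
      · norm_num
        rw [hGneg 0 (-1) (by norm_num), hhneg 0 (-1) (by norm_num),
          hhneg 0 0 (by norm_num), hdP1zero]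
        ring
      obtain ⟨s, rfl⟩ : ∃ s, m1 = s + 1 := ⟨m1 - 1, by omega⟩
      push_cast
      rw [show ((s:ℚ) + 1 - 1) = (s:ℚ) by ring, show ((s:ℤ) + 1 - 1) = (s:ℤ) by ring,
        hG01 s, hG00 s, hh01 s, hh0 s, hdP1 s, hdQ1 s]
      have hPprod : (∏ i, ∏ j ∈ Finset.range (w i), ((w i : ℚ) * ((s : ℚ) + 1) - (j : ℚ)))
          = ∏ i, ((Nat.factorial (w i * (s + 1)) : ℚ) / (Nat.factorial (w i * s) : ℚ)) := by
        rw [← evalP1]; exact hP1fact s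
      have hQprod : (∏ j ∈ Finset.Icc 1 k, ((k : ℚ) * (s : ℚ) + (j : ℚ)))
          = (Nat.factorial (k * (s + 1)) : ℚ) / (Nat.factorial (k * s) : ℚ) := by
        rw [← evalQ1]; exact hQ1fact s
      have keyfact : (∏ i, ((Nat.factorial (w i * (s + 1)) : ℚ) / (Nat.factorial (w i * s) : ℚ)))
            * c (s + 1)
          = ((Nat.factorial (k * (s + 1)) : ℚ) / (Nat.factorial (k * s) : ℚ)) * c s := by
        rw [← hP1fact, ← hQ1fact]; exact key s
      have hsum1 : (∑ i, ∑ j ∈ Finset.range (w i),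
            (w i : ℚ) / ((w i : ℚ) * ((s : ℚ) + 1) - (j : ℚ)))
          = (∑ i, (w i : ℚ) * H (w i * (s + 1))) - ∑ i, (w i : ℚ) * H (w i * s) := by
        rw [← hsplit s]
        exact Finset.sum_congr rfl fun i _ => hSP s i
      rw [hPprod, hQprod, hsum1, hSQ s, hP1fact s, hQ1fact s]
      linear_combination ((k : ℚ) * H (k * (s + 1)) - ∑ i, (w i : ℚ) * H (w i * s)) * keyfact
end

section
/- There is no function ã : ℕ × ℕ → ℚ such that for all integers m_0, m_1 ≥ 0 both of the following equations hold: P̃_0(m_0,m_1)·ã(m_0,m_1) + (∂P̃_0/∂s)(m_0,m_1)·G̃(m_0,m_1) = Q̃_0(m_0−1,m_1)·ã(m_0−1,m_1) + (∂Q̃_0/∂s)(m_0−1,m_1)·G̃(m_0−1,m_1), and P̃_1(m_0,m_1)·ã(m_0,m_1) + (∂P̃_1/∂s)(m_0,m_1)·G̃(m_0,m_1) = Q̃_1(m_0,m_1−1)·ã(m_0,m_1−1) + (∂Q̃_1/∂s)(m_0,m_1−1)·G̃(m_0,m_1−1). (That is, the system 𝓛̃_0 S = 𝓛̃_1' S =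 0 of the second phase admits no solution of the form log x̃_0 · g̃_0(x̃_1) + h̃(x̃_0, x̃_1) with h̃ a formal power series.) -/
open MvPolynomial

/-- In the second phase there is no coefficient family
`ã : ℕ × ℕ → ℚ` (extended by zero to negative indices) satisfying, for all
`m₀, m₁ ≥ 0`, the two corrected recursions (with `∂/∂s` and the holomorphic-solution
coefficients `G̃(0,m) = c_m`); that is, the system `𝓛̃₀ S = 𝓛̃₁' S = 0` admits no
solution of the form `log x̃₀ · g̃₀(x̃₁) + h̃(x̃₀, x̃₁)` with `h̃` a formal power
series. -/
theorem statement14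
    (n : ℕ) (κ : Fin (n + 2) → ℕ) (hκ : ∀ i, 0 < κ i)
    (hsum : ∑ i, (1 : ℚ) / (κ i : ℚ) = 1)
    (k : ℕ) (hk : k = Finset.univ.lcm κ)
    (w : Fin (n + 2) → ℕ) (hw : ∀ i, w i = k / κ i)
    (c : ℕ → ℚ)
    (hc : ∀ m, c m = (Nat.factorial (k * m) : ℚ) /
      ∏ i, (Nat.factorial (w i * m) : ℚ))
    (P Q : Fin 2 → MvPolynomial (Fin 2) ℚ)
    (hP0 : P 0 = (X 0 + C (w 0 : ℚ) * X 1) * X 0)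
    (hQ0 : Q 0 = (1 + X 0 + C (k : ℚ) * X 1) * X 0)
    (hP1 : P 1 = (∏ j ∈ Finset.range (w 0),
        (X 0 + C (w 0 : ℚ) * X 1 - C (j : ℚ))) *
      ∏ i ∈ Finset.univ.erase 0, ∏ j ∈ Finset.range (w i),
        (C (w i : ℚ) * X 1 - C (j : ℚ)))
    (hQ1 : Q 1 = ∏ j ∈ Finset.Icc 1 k, (X 0 + C (k : ℚ) * X 1 + C (j : ℚ)))
    (u v : Fin 2 → ℕ) (hu : u = ![1, 0]) (hv : v = ![0, 1])
    (G : ℤ → ℤ → ℚ)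
    (hG : ∀ p q : ℤ, G p q = if p = 0 ∧ 0 ≤ q then c q.toNat else 0) :
    ¬ ∃ a : ℤ → ℤ → ℚ,
      (∀ p q : ℤ, p < 0 ∨ q < 0 → a p q = 0) ∧
      ∀ r : Fin 2, ∀ m0 m1 : ℕ,
        MvPolynomial.eval ![(m0 : ℚ), (m1 : ℚ)] (P r) * a (m0 : ℤ) (m1 : ℤ) +
            MvPolynomial.eval ![(m0 : ℚ), (m1 : ℚ)] (pderiv 0 (P r)) *
              G (m0 : ℤ) (m1 : ℤ) =
          MvPolynomial.eval ![(m0 : ℚ) - (u r : ℚ), (m1 : ℚ) - (v r : ℚ)] (Q r) *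
              a ((m0 : ℤ) - (u r : ℤ)) ((m1 : ℤ) - (v r : ℤ)) +
            MvPolynomial.eval ![(m0 : ℚ) - (u r : ℚ), (m1 : ℚ) - (v r : ℚ)]
                (pderiv 0 (Q r)) *
              G ((m0 : ℤ) - (u r : ℤ)) ((m1 : ℤ) - (v r : ℤ)) := by

  rintro ⟨a, ha0, hrec⟩
  have hkpos : 0 < k := by
    rw [hk, Nat.pos_iff_ne_zero]
    intro h0
    rw [Finset.lcm_eq_zero_iff] at h0
    obtain ⟨i, -, hi⟩ := h0
    exact absurd hi.symm (Nat.pos_iff_ne_zero.mp (hκ i)).symm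
  have hw0 : 0 < w 0 := by
    rw [hw]
    exact Nat.div_pos (Nat.le_of_dvd hkpos (hk ▸ Finset.dvd_lcm (Finset.mem_univ 0))) (hκ 0)
  have hc1 : 0 < c 1 := by
    rw [hc]
    apply div_pos
    · exact_mod_cast Nat.factorial_pos _
    · exact Finset.prod_pos fun i _ => by exact_mod_cast Nat.factorial_pos _
  have h := hrec 0 0 1
  have ha : a (-1) 1 = 0 := ha0 (-1) 1 (Or.inl (by norm_num))
  have hG1 : G 0 1 = c 1 := by rw [hG]; norm_num
  have hG2 : G (-1) 1 = 0 := by rw [hG]; norm_num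
  simp only [hP0, hQ0, hu, hv, Nat.cast_one, Nat.cast_zero, Nat.cast_ofNat,
    Matrix.cons_val_zero, Matrix.cons_val_one, Matrix.head_cons] at h
  norm_num [ha, hG1, hG2, pderiv_mul, map_add, map_one, pderiv_X, pderiv_C] at h
  rcases h with h | h
  · exact absurd h (by exact_mod_cast hw0.ne')
  · exact absurd h hc1.ne'
end
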